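/- arXiv:2510.01942 — 6 statements merged into one kernel-verified Lean document; each statement's English description precedes it below -/
import Mathlib

section
/- Let s, t > 0 and N > n. Then there is a constant C, depending only on the doubling constants, n and N, such that ∫_X D_{s,N}(x,z) D_{t,N}(z,y) dμ(z) ≤ C · D_{max(s,t), N−n}(x,y) for all x, y ∈ X. -/
open MeasureTheory Metric
open scoped ENNReal

/-- The kernel `D_{λ,N}(x,y) = (max(V(x,λ),V(y,λ)))⁻¹ (1 + d(x,y)/λ)^{-N}`. -/
noncomputable def Dker {X : Type*} [MetricSpace X] [MeasurableSpace X]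
    (μ : Measure X) (lam N : ℝ) (x y : X) : ℝ≥0∞ :=
  (max (μ (ball x lam)) (μ (ball y lam)))⁻¹ *
    ENNReal.ofReal ((1 + dist x y / lam) ^ (-N))

set_option maxHeartbeats 1000000

private lemma ennreal_inv_le {a b c : ℝ≥0∞} (ha0 : a ≠ 0) (hat : a ≠ ⊤) (h : a ≤ c * b) :
    b⁻¹ ≤ c * a⁻¹ := by
  calc b⁻¹ = a⁻¹ * a * b⁻¹ := by rw [ENNReal.inv_mul_cancel ha0 hat, one_mul]
  _ ≤ a⁻¹ * (c * b) * b⁻¹ := by gcongr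
  _ = c * a⁻¹ * (b * b⁻¹) := by ring
  _ ≤ c * a⁻¹ * 1 := by gcongr; exact b.mul_inv_le_one
  _ = c * a⁻¹ := mul_one _

private lemma intbound {X : Type*} [MetricSpace X] [MeasurableSpace X] [BorelSpace X]
    (μ : Measure X) (n cstar : ℝ) (hn : 0 < n) (hcstar : 1 ≤ cstar)
    (hgrowth : ∀ (x : X) (r lam : ℝ), 0 < r → 1 ≤ lam →
      μ (ball x (lam * r)) ≤ ENNReal.ofReal (cstar * lam ^ n) * μ (ball x r))
    (N : ℝ) (hN : n < N) (c : X) (u : ℝ) (hu : 0 < u) :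
    ∫⁻ z, ENNReal.ofReal ((1 + dist z c / u) ^ (-N)) ∂μ ≤
      ENNReal.ofReal (1 + cstar * 2 ^ n / (1 - 2 ^ (n - N))) * μ (ball c u) := by
  classical
  set R : ℕ → Set X := fun k => match k with
    | 0 => ball c u
    | (k+1) => ball c (2 ^ (k+1) * u) \ ball c (2 ^ k * u) with hR
  set cc : ℕ → ℝ≥0∞ := fun k => match k with
    | 0 => 1
    | (k+1) => ENNReal.ofReal (((2:ℝ) ^ k) ^ (-N)) with hcc
  have hRmeas : ∀ k, MeasurableSet (R k) := by
    intro k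
    match k with
    | 0 => exact measurableSet_ball
    | (k+1) => exact measurableSet_ball.diff measurableSet_ball
  have hNpos : 0 < N := hn.trans hN
  -- pointwise bound
  have hpt : ∀ z, ENNReal.ofReal ((1 + dist z c / u) ^ (-N)) ≤
      ∑' k, (R k).indicator (fun _ => cc k) z := by
    intro z
    obtain ⟨m, hm⟩ : ∃ m : ℕ, dist z c / u < 2 ^ m := pow_unbounded_of_one_lt _ one_lt_two
    have hex : ∃ m : ℕ, dist z c < 2 ^ m * u := ⟨m, by rwa [← div_lt_iff₀ hu]⟩
    obtain ⟨k0, hk0lt, hmin⟩ : ∃ k : ℕ, dist z c < 2 ^ k * u ∧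
        ∀ j < k, ¬ dist z c < 2 ^ j * u :=
      ⟨Nat.find hex, Nat.find_spec hex, fun j hj => Nat.find_min hex hj⟩
    have hmem : z ∈ R k0 := by
      cases k0 with
      | zero => simpa [R, mem_ball, dist_comm] using hk0lt
      | succ j =>
        refine ⟨by simpa [mem_ball] using hk0lt, ?_⟩
        simpa [mem_ball] using hmin j (Nat.lt_succ_self j)
    have hle : ENNReal.ofReal ((1 + dist z c / u) ^ (-N)) ≤ cc k0 := by
      cases k0 with
      | zero =>
        simp only [cc]
        calc ENNReal.ofReal ((1 + dist z c / u) ^ (-N)) ≤ ENNReal.ofReal 1 := by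
              apply ENNReal.ofReal_le_ofReal
              exact Real.rpow_le_one_of_one_le_of_nonpos
                (le_add_of_nonneg_right (div_nonneg dist_nonneg hu.le)) (by linarith)
          _ = 1 := ENNReal.ofReal_one
      | succ j =>
        have hge : (2:ℝ) ^ j * u ≤ dist z c := not_lt.mp (hmin j (Nat.lt_succ_self j))
        have h1 : (2:ℝ) ^ j ≤ 1 + dist z c / u := by
          have : (2:ℝ) ^ j ≤ dist z c / u := (le_div_iff₀ hu).mpr hge
          linarith
        simp only [cc]
        exact ENNReal.ofReal_le_ofReal
          (Real.rpow_le_rpow_of_nonpos (by positivity) h1 (by linarith))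
    calc ENNReal.ofReal ((1 + dist z c / u) ^ (-N)) ≤ cc k0 := hle
      _ = (R k0).indicator (fun _ => cc k0) z := by rw [Set.indicator_of_mem hmem]
      _ ≤ ∑' k, (R k).indicator (fun _ => cc k) z := ENNReal.le_tsum k0
  calc ∫⁻ z, ENNReal.ofReal ((1 + dist z c / u) ^ (-N)) ∂μ
      ≤ ∫⁻ z, ∑' k, (R k).indicator (fun _ => cc k) z ∂μ := lintegral_mono hpt
    _ = ∑' k, ∫⁻ z, (R k).indicator (fun _ => cc k) z ∂μ :=
        lintegral_tsum (fun k => (measurable_const.indicator (hRmeas k)).aemeasurable)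
    _ = ∑' k, cc k * μ (R k) := by
        congr 1; ext k; exact lintegral_indicator_const (hRmeas k) _
    _ ≤ ENNReal.ofReal (1 + cstar * 2 ^ n / (1 - 2 ^ (n - N))) * μ (ball c u) := by
        have hrlt : (2:ℝ) ^ (n - N) < 1 :=
          Real.rpow_lt_one_of_one_lt_of_neg one_lt_two (by linarith)
        have hr0 : (0:ℝ) ≤ 2 ^ (n - N) := Real.rpow_nonneg (by norm_num) _
        have hterm : ∀ k : ℕ, cc (k+1) * μ (R (k+1)) ≤
            ENNReal.ofReal (cstar * 2 ^ n * ((2:ℝ) ^ (n - N)) ^ k) * μ (ball c u) := by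
          intro k
          have hμ : μ (R (k+1)) ≤ ENNReal.ofReal (cstar * ((2:ℝ) ^ (k+1)) ^ n) * μ (ball c u) :=
            (measure_mono Set.diff_subset).trans
              (hgrowth c u (2 ^ (k+1)) hu (one_le_pow₀ one_le_two))
          have hid : ((2:ℝ) ^ k) ^ (-N) * (cstar * ((2:ℝ) ^ (k+1)) ^ n) =
              cstar * 2 ^ n * ((2:ℝ) ^ (n - N)) ^ k := by
            have e1 : ((2:ℝ) ^ k) ^ (-N) = (2:ℝ) ^ ((k:ℝ) * (-N)) := by
              rw [← Real.rpow_natCast 2 k, ← Real.rpow_mul (by norm_num)]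
            have e2 : ((2:ℝ) ^ (k+1)) ^ n = (2:ℝ) ^ (((k:ℝ) + 1) * n) := by
              rw [← Real.rpow_natCast 2 (k+1), ← Real.rpow_mul (by norm_num)]
              norm_num
            have e3 : ((2:ℝ) ^ (n - N)) ^ k = (2:ℝ) ^ ((n - N) * (k:ℝ)) := by
              rw [← Real.rpow_natCast ((2:ℝ) ^ (n - N)) k, ← Real.rpow_mul (by norm_num)]
            rw [e1, e2, e3, mul_left_comm, ← Real.rpow_add (by norm_num : (0:ℝ) < 2),
              mul_assoc, ← Real.rpow_add (by norm_num : (0:ℝ) < 2),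
              show (k:ℝ) * (-N) + ((k:ℝ) + 1) * n = n + (n - N) * (k:ℝ) by ring]
          calc cc (k+1) * μ (R (k+1))
              ≤ ENNReal.ofReal (((2:ℝ) ^ k) ^ (-N)) *
                (ENNReal.ofReal (cstar * ((2:ℝ) ^ (k+1)) ^ n) * μ (ball c u)) :=
                mul_le_mul_right hμ _
            _ = ENNReal.ofReal (((2:ℝ) ^ k) ^ (-N) * (cstar * ((2:ℝ) ^ (k+1)) ^ n)) *
                μ (ball c u) := by
                rw [← mul_assoc, ← ENNReal.ofReal_mul (Real.rpow_nonneg (by positivity) _)]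
            _ = ENNReal.ofReal (cstar * 2 ^ n * ((2:ℝ) ^ (n - N)) ^ k) * μ (ball c u) := by
                rw [hid]
        have hsum : ∑' k : ℕ, ENNReal.ofReal (cstar * 2 ^ n * ((2:ℝ) ^ (n - N)) ^ k) =
            ENNReal.ofReal (cstar * 2 ^ n / (1 - 2 ^ (n - N))) := by
          rw [← ENNReal.ofReal_tsum_of_nonneg (fun k => by positivity)
            ((summable_geometric_of_lt_one hr0 hrlt).mul_left _)]
          congr 1
          rw [tsum_mul_left, tsum_geometric_of_lt_one hr0 hrlt, div_eq_mul_inv]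
        calc ∑' k, cc k * μ (R k)
            = cc 0 * μ (R 0) + ∑' k, cc (k+1) * μ (R (k+1)) :=
              tsum_eq_zero_add' ENNReal.summable
          _ ≤ 1 * μ (ball c u) +
              ∑' k : ℕ, ENNReal.ofReal (cstar * 2 ^ n * ((2:ℝ) ^ (n - N)) ^ k) * μ (ball c u) := by
              have h0 : cc 0 * μ (R 0) = 1 * μ (ball c u) := by
                simp only [cc, R, one_mul]
              rw [h0]
              exact add_le_add le_rfl (ENNReal.tsum_le_tsum hterm)
          _ = (1 + ENNReal.ofReal (cstar * 2 ^ n / (1 - 2 ^ (n - N)))) * μ (ball c u) := by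
              rw [ENNReal.tsum_mul_right, hsum, one_mul, add_mul, one_mul]
          _ = ENNReal.ofReal (1 + cstar * 2 ^ n / (1 - 2 ^ (n - N))) * μ (ball c u) := by
              rw [ENNReal.ofReal_add (by norm_num) (div_nonneg (by positivity) (by linarith)), ENNReal.ofReal_one]

private lemma Dker_symm {X : Type*} [MetricSpace X] [MeasurableSpace X]
    (μ : Measure X) (lam N : ℝ) (x y : X) : Dker μ lam N x y = Dker μ lam N y x := by
  unfold Dker
  rw [max_comm, dist_comm]

private lemma Dker_integral {X : Type*} [MetricSpace X] [MeasurableSpace X] [BorelSpace X]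
    (μ : Measure X) (n cstar : ℝ) (hn : 0 < n) (hcstar : 1 ≤ cstar)
    (hpos : ∀ (x : X) (r : ℝ), 0 < r → 0 < μ (ball x r))
    (hfin : ∀ (x : X) (r : ℝ), 0 < r → μ (ball x r) < ⊤)
    (hgrowth : ∀ (x : X) (r lam : ℝ), 0 < r → 1 ≤ lam →
      μ (ball x (lam * r)) ≤ ENNReal.ofReal (cstar * lam ^ n) * μ (ball x r))
    (N : ℝ) (hN : n < N) (a : X) (u : ℝ) (hu : 0 < u) :
    ∫⁻ z, Dker μ u N a z ∂μ ≤ ENNReal.ofReal (1 + cstar * 2 ^ n / (1 - 2 ^ (n - N))) := by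
  have h1 : ∀ z, Dker μ u N a z ≤
      (μ (ball a u))⁻¹ * ENNReal.ofReal ((1 + dist z a / u) ^ (-N)) := by
    intro z
    unfold Dker
    rw [dist_comm a z]
    exact mul_le_mul_left (ENNReal.inv_le_inv.mpr (le_max_left _ _)) _
  calc ∫⁻ z, Dker μ u N a z ∂μ
      ≤ ∫⁻ z, (μ (ball a u))⁻¹ * ENNReal.ofReal ((1 + dist z a / u) ^ (-N)) ∂μ :=
        lintegral_mono h1
    _ = (μ (ball a u))⁻¹ * ∫⁻ z, ENNReal.ofReal ((1 + dist z a / u) ^ (-N)) ∂μ :=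
        lintegral_const_mul' _ _ (ENNReal.inv_ne_top.mpr (hpos a u hu).ne')
    _ ≤ (μ (ball a u))⁻¹ * (ENNReal.ofReal (1 + cstar * 2 ^ n / (1 - 2 ^ (n - N))) *
          μ (ball a u)) :=
        mul_le_mul_right (intbound μ n cstar hn hcstar hgrowth N hN a u hu) _
    _ = ENNReal.ofReal (1 + cstar * 2 ^ n / (1 - 2 ^ (n - N))) *
          ((μ (ball a u))⁻¹ * μ (ball a u)) := by ring
    _ = ENNReal.ofReal (1 + cstar * 2 ^ n / (1 - 2 ^ (n - N))) := by
        rw [ENNReal.inv_mul_cancel (hpos a u hu).ne' (hfin a u hu).ne, mul_one]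

private lemma key {X : Type*} [MetricSpace X] [MeasurableSpace X] [BorelSpace X]
    (μ : Measure X) (n cstar CV : ℝ) (hn : 0 < n) (hcstar : 1 ≤ cstar) (hCV : 1 ≤ CV)
    (hpos : ∀ (x : X) (r : ℝ), 0 < r → 0 < μ (ball x r))
    (hfin : ∀ (x : X) (r : ℝ), 0 < r → μ (ball x r) < ⊤)
    (hgrowth : ∀ (x : X) (r lam : ℝ), 0 < r → 1 ≤ lam →
      μ (ball x (lam * r)) ≤ ENNReal.ofReal (cstar * lam ^ n) * μ (ball x r))
    (hcomp : ∀ (x y : X) (r : ℝ), 0 < r →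
      μ (ball x r) ≤ ENNReal.ofReal (CV * (1 + dist x y / r) ^ n) * μ (ball y r))
    (s t N : ℝ) (hs : 0 < s) (ht : 0 < t) (hN : n < N) (hst : s ≤ t) (x y : X) :
    ∫⁻ z, Dker μ s N x z * Dker μ t N z y ∂μ ≤
      ENNReal.ofReal (3 * (1 + cstar * 2 ^ n / (1 - 2 ^ (n - N))) * CV * cstar * (2 ^ N) ^ 2) *
        Dker μ t (N - n) x y := by
  have hNpos : 0 < N := hn.trans hN
  set CA : ℝ := 1 + cstar * 2 ^ n / (1 - 2 ^ (n - N)) with hCA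
  have hrlt : (2:ℝ) ^ (n - N) < 1 :=
    Real.rpow_lt_one_of_one_lt_of_neg one_lt_two (by linarith)
  have hCApos : 0 < CA := by
    have : (0:ℝ) ≤ cstar * 2 ^ n / (1 - 2 ^ (n - N)) :=
      div_nonneg (by positivity) (by linarith)
    simp only [hCA]; linarith
  have h2N : (1:ℝ) ≤ 2 ^ N := Real.one_le_rpow one_le_two hNpos.le
  set d : ℝ := dist x y with hd
  have hd0 : 0 ≤ d := dist_nonneg
  set b : ℝ := 1 + d / t with hb
  have hb1 : (1:ℝ) ≤ b := by simp only [hb]; nlinarith [div_nonneg hd0 ht.le]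
  have hb0 : (0:ℝ) < b := lt_of_lt_of_le one_pos hb1
  have hVx0 : μ (ball x t) ≠ 0 := (hpos x t ht).ne'
  have hVxt : μ (ball x t) ≠ ⊤ := (hfin x t ht).ne
  have hVy0 : μ (ball y t) ≠ 0 := (hpos y t ht).ne'
  have hVyt : μ (ball y t) ≠ ⊤ := (hfin y t ht).ne
  set Vx : ℝ≥0∞ := μ (ball x t) with hVxdef
  set Vy : ℝ≥0∞ := μ (ball y t) with hVydef
  set M : ℝ≥0∞ := max Vx Vy with hM
  have hM0 : M ≠ 0 := (lt_of_lt_of_le (hpos x t ht) (le_max_left _ _)).ne'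
  have hMt : M ≠ ⊤ := (max_lt (hfin x t ht) (hfin y t ht)).ne
  set K : ℝ≥0∞ := ENNReal.ofReal (b ^ (-(N - n))) with hK
  have hDxy : Dker μ t (N - n) x y = M⁻¹ * K := rfl
  have hbn : (1:ℝ) ≤ b ^ n := Real.one_le_rpow hb1 hn.le
  have hc1 : (1:ℝ≥0∞) ≤ ENNReal.ofReal (CV * b ^ n) :=
    ENNReal.one_le_ofReal.mpr (by nlinarith)
  have hMX : M ≤ ENNReal.ofReal (CV * b ^ n) * Vx := by
    apply max_le
    · calc Vx = 1 * Vx := (one_mul _).symm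
        _ ≤ ENNReal.ofReal (CV * b ^ n) * Vx := mul_le_mul_left hc1 _
    · have := hcomp y x t ht
      rwa [dist_comm y x, ← hd, ← hb] at this
  have hMY : M ≤ ENNReal.ofReal (CV * b ^ n) * Vy := by
    apply max_le
    · have := hcomp x y t ht
      rwa [← hd, ← hb] at this
    · calc Vy = 1 * Vy := (one_mul _).symm
        _ ≤ ENNReal.ofReal (CV * b ^ n) * Vy := mul_le_mul_left hc1 _
  have hVxinv : Vx⁻¹ ≤ ENNReal.ofReal (CV * b ^ n) * M⁻¹ := ennreal_inv_le hM0 hMt hMX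
  have hVyinv : Vy⁻¹ ≤ ENNReal.ofReal (CV * b ^ n) * M⁻¹ := ennreal_inv_le hM0 hMt hMY
  have hpow2 : ∀ a c : ℝ, 0 < a → a / 2 ≤ c → c ^ (-N) ≤ 2 ^ N * a ^ (-N) := by
    intro a c h0 hac
    calc c ^ (-N) ≤ (a / 2) ^ (-N) :=
          Real.rpow_le_rpow_of_nonpos (by positivity) hac (by linarith)
      _ = a ^ (-N) / 2 ^ (-N) := Real.div_rpow h0.le (by norm_num) (-N)
      _ = 2 ^ N * a ^ (-N) := by
          rw [Real.rpow_neg (by norm_num : (0:ℝ) ≤ 2), div_inv_eq_mul]; ring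
  have hbsplit : b ^ (-N) = b ^ (-(N - n)) * b ^ (-n) := by
    rw [← Real.rpow_add hb0]
    congr 1
    ring
  have hbn1 : b ^ n * b ^ (-n) = 1 := by
    rw [← Real.rpow_add hb0]
    simp
  have hIs : ∫⁻ z, Dker μ s N x z ∂μ ≤ ENNReal.ofReal CA :=
    Dker_integral μ n cstar hn hcstar hpos hfin hgrowth N hN x s hs
  have hIt : ∫⁻ z, Dker μ t N z y ∂μ ≤ ENNReal.ofReal CA := by
    calc ∫⁻ z, Dker μ t N z y ∂μ = ∫⁻ z, Dker μ t N y z ∂μ :=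
          lintegral_congr fun z => Dker_symm μ t N z y
      _ ≤ ENNReal.ofReal CA :=
          Dker_integral μ n cstar hn hcstar hpos hfin hgrowth N hN y t ht
  have hfinal : ∀ c0 : ℝ, 0 ≤ c0 → c0 ≤ 3 * CA * CV * cstar * (2 ^ N) ^ 2 →
      ENNReal.ofReal c0 * (M⁻¹ * K) ≤
        ENNReal.ofReal (3 * CA * CV * cstar * (2 ^ N) ^ 2) * Dker μ t (N - n) x y := by
    intro c0 _ hc0
    rw [hDxy]
    exact mul_le_mul_left (ENNReal.ofReal_le_ofReal hc0) _
  by_cases hcase : d ≤ t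
  · -- Case 1 : d ≤ t
    have hble : b ≤ 2 := by
      have : d / t ≤ 1 := (div_le_one ht).mpr hcase
      simp only [hb]; linarith
    have hpt1 : ∀ z, Dker μ s N x z * Dker μ t N z y ≤ Dker μ s N x z * Vy⁻¹ := by
      intro z
      apply mul_le_mul_right
      calc Dker μ t N z y ≤ Vy⁻¹ * 1 := by
            unfold Dker
            apply mul_le_mul' (ENNReal.inv_le_inv.mpr (le_max_right _ _))
            exact ENNReal.ofReal_le_one.mpr (Real.rpow_le_one_of_one_le_of_nonpos
              (le_add_of_nonneg_right (by positivity)) (by linarith))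
        _ = Vy⁻¹ := mul_one _
    have hone : (1:ℝ≥0∞) ≤ ENNReal.ofReal (2 ^ (N - n)) * K := by
      have hr1 : (2:ℝ) ^ (-(N - n)) ≤ b ^ (-(N - n)) :=
        Real.rpow_le_rpow_of_nonpos hb0 hble (by linarith)
      have hr2 : (2:ℝ) ^ (N - n) * 2 ^ (-(N - n)) = 1 := by
        rw [← Real.rpow_add two_pos]; simp
      calc (1:ℝ≥0∞) = ENNReal.ofReal ((2:ℝ) ^ (N - n) * 2 ^ (-(N - n))) := by
            rw [hr2, ENNReal.ofReal_one]
        _ ≤ ENNReal.ofReal ((2:ℝ) ^ (N - n) * b ^ (-(N - n))) :=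
            ENNReal.ofReal_le_ofReal (mul_le_mul_of_nonneg_left hr1 (by positivity))
        _ = ENNReal.ofReal (2 ^ (N - n)) * K := by
            rw [hK, ← ENNReal.ofReal_mul (by positivity)]
    have hbn2n : b ^ n ≤ 2 ^ n := Real.rpow_le_rpow hb0.le hble hn.le
    have hcoef : CA * (CV * b ^ n) * 2 ^ (N - n) ≤ 3 * CA * CV * cstar * (2 ^ N) ^ 2 := by
      have e1 : (2:ℝ) ^ n * 2 ^ (N - n) = 2 ^ N := by
        rw [← Real.rpow_add two_pos]; norm_num
      have h31 : (1:ℝ) ≤ 3 * cstar * 2 ^ N := by nlinarith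
      calc CA * (CV * b ^ n) * 2 ^ (N - n) ≤ CA * (CV * 2 ^ n) * 2 ^ (N - n) := by
            have : (0:ℝ) ≤ 2 ^ (N - n) := by positivity
            have hCV0 : (0:ℝ) ≤ CV := by linarith
            nlinarith [mul_le_mul_of_nonneg_left hbn2n (mul_nonneg hCApos.le hCV0)]
        _ = CA * CV * ((2:ℝ) ^ n * 2 ^ (N - n)) := by ring
        _ = CA * CV * 2 ^ N := by rw [e1]
        _ = 1 * (CA * CV * 2 ^ N) := (one_mul _).symm
        _ ≤ (3 * cstar * 2 ^ N) * (CA * CV * 2 ^ N) :=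
            mul_le_mul_of_nonneg_right h31
              (mul_nonneg (mul_nonneg hCApos.le (by linarith)) (by positivity))
        _ = 3 * CA * CV * cstar * (2 ^ N) ^ 2 := by ring
    calc ∫⁻ z, Dker μ s N x z * Dker μ t N z y ∂μ
        ≤ ∫⁻ z, Dker μ s N x z * Vy⁻¹ ∂μ := lintegral_mono hpt1
      _ = (∫⁻ z, Dker μ s N x z ∂μ) * Vy⁻¹ :=
          lintegral_mul_const' _ _ (ENNReal.inv_ne_top.mpr hVy0)
      _ ≤ ENNReal.ofReal CA * Vy⁻¹ := mul_le_mul_left hIs _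
      _ ≤ ENNReal.ofReal CA * (ENNReal.ofReal (CV * b ^ n) * M⁻¹) := mul_le_mul_right hVyinv _
      _ ≤ ENNReal.ofReal CA * (ENNReal.ofReal (CV * b ^ n) * M⁻¹) *
            (ENNReal.ofReal (2 ^ (N - n)) * K) :=
          le_mul_of_one_le_right zero_le hone
      _ = ENNReal.ofReal CA * ENNReal.ofReal (CV * b ^ n) * ENNReal.ofReal (2 ^ (N - n)) *
            (M⁻¹ * K) := by ring
      _ = ENNReal.ofReal (CA * (CV * b ^ n) * 2 ^ (N - n)) * (M⁻¹ * K) := by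
          rw [← ENNReal.ofReal_mul hCApos.le, ← ENNReal.ofReal_mul
            (mul_nonneg hCApos.le (mul_nonneg (by linarith) (by positivity)))]
      _ ≤ ENNReal.ofReal (3 * CA * CV * cstar * (2 ^ N) ^ 2) * Dker μ t (N - n) x y :=
          hfinal _ (mul_nonneg (mul_nonneg hCApos.le
            (mul_nonneg (by linarith) (by positivity))) (by positivity)) hcoef
  · -- Case 2 : t < d
    push_neg at hcase
    set A : Set X := Metric.closedBall x (d / 2) with hA
    have hAmeas : MeasurableSet A := measurableSet_closedBall
    have hts1 : (1:ℝ) ≤ t / s := (one_le_div hs).mpr hst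
    have hts0 : (0:ℝ) < t / s := by positivity
    have htsn1 : (t / s) ^ n * (t / s) ^ (-n) = 1 := by
      rw [← Real.rpow_add hts0]
      simp
    have hVxs : (μ (ball x s))⁻¹ ≤ ENNReal.ofReal (cstar * (t / s) ^ n) * Vx⁻¹ := by
      apply ennreal_inv_le hVx0 hVxt
      have hts : t / s * s = t := div_mul_cancel₀ t hs.ne'
      calc Vx = μ (ball x (t / s * s)) := by rw [hts]
        _ ≤ ENNReal.ofReal (cstar * (t / s) ^ n) * μ (ball x s) := hgrowth x s (t / s) hs hts1
    -- pointwise bound on A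
    have hptA : ∀ z ∈ A, Dker μ t N z y ≤ ENNReal.ofReal (CV * 2 ^ N) * (M⁻¹ * K) := by
      intro z hz
      have hzy : d / 2 ≤ dist z y := by
        have h1 : dist z x ≤ d / 2 := mem_closedBall.mp hz
        have h2 : d ≤ dist x z + dist z y := dist_triangle x z y
        rw [dist_comm z x] at h1
        linarith
      have hreal : (1 + dist z y / t) ^ (-N) ≤ 2 ^ N * b ^ (-N) := by
        apply hpow2 b _ hb0
        have e : d / t / 2 = d / 2 / t := by ring
        have h3 : d / 2 / t ≤ dist z y / t := by gcongr
        simp only [hb]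
        linarith
      have hidA : CV * b ^ n * (2 ^ N * b ^ (-N)) = CV * 2 ^ N * b ^ (-(N - n)) := by
        calc CV * b ^ n * (2 ^ N * b ^ (-N))
            = CV * 2 ^ N * b ^ (-(N - n)) * (b ^ n * b ^ (-n)) := by rw [hbsplit]; ring
          _ = CV * 2 ^ N * b ^ (-(N - n)) := by rw [hbn1, mul_one]
      calc Dker μ t N z y ≤ Vy⁻¹ * ENNReal.ofReal (2 ^ N * b ^ (-N)) := by
            unfold Dker
            exact mul_le_mul' (ENNReal.inv_le_inv.mpr (le_max_right _ _))
              (ENNReal.ofReal_le_ofReal hreal)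
        _ ≤ ENNReal.ofReal (CV * b ^ n) * M⁻¹ * ENNReal.ofReal (2 ^ N * b ^ (-N)) :=
            mul_le_mul_left hVyinv _
        _ = ENNReal.ofReal (CV * b ^ n * (2 ^ N * b ^ (-N))) * M⁻¹ := by
            rw [ENNReal.ofReal_mul (mul_nonneg (by linarith) (by positivity))]
            ring
        _ = ENNReal.ofReal (CV * 2 ^ N * b ^ (-(N - n))) * M⁻¹ := by rw [hidA]
        _ = ENNReal.ofReal (CV * 2 ^ N) * (M⁻¹ * K) := by
            rw [hK, ENNReal.ofReal_mul (mul_nonneg (by linarith) (by positivity))]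
            ring
    -- pointwise bound on Aᶜ
    have hptB : ∀ z ∈ Aᶜ, Dker μ s N x z ≤
        ENNReal.ofReal (cstar * CV * (2 ^ N) ^ 2) * (M⁻¹ * K) := by
      intro z hz
      have hxz : d / 2 ≤ dist x z := by
        have h1 : ¬ dist z x ≤ d / 2 := fun h => hz (mem_closedBall.mpr h)
        rw [dist_comm z x] at h1
        linarith [not_le.mp h1]
      have h1 : (1 + dist x z / s) ^ (-N) ≤ 2 ^ N * (1 + d / s) ^ (-N) := by
        apply hpow2 _ _ (by positivity)
        have e : d / s / 2 = d / 2 / s := by ring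
        have h3 : d / 2 / s ≤ dist x z / s := by gcongr
        linarith
      have h2 : (1 + d / s) ^ (-N) ≤ 2 ^ N * (t / s * b) ^ (-N) := by
        apply hpow2 _ _ (by positivity)
        have e : t / s * b = t / s + d / s := by
          simp only [hb]
          field_simp
        have h4 : t / s ≤ d / s := by gcongr
        linarith
      have h3 : (t / s * b) ^ (-N) = (t / s) ^ (-N) * b ^ (-N) :=
        Real.mul_rpow hts0.le hb0.le
      have h4 : (t / s) ^ (-N) ≤ (t / s) ^ (-n) :=
        Real.rpow_le_rpow_of_exponent_le hts1 (by linarith)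
      have hre : (1 + dist x z / s) ^ (-N) ≤
          2 ^ N * (2 ^ N * ((t / s) ^ (-n) * b ^ (-N))) := by
        calc (1 + dist x z / s) ^ (-N) ≤ 2 ^ N * (1 + d / s) ^ (-N) := h1
          _ ≤ 2 ^ N * (2 ^ N * (t / s * b) ^ (-N)) := by
              apply mul_le_mul_of_nonneg_left h2 (by positivity)
          _ = 2 ^ N * (2 ^ N * ((t / s) ^ (-N) * b ^ (-N))) := by rw [h3]
          _ ≤ 2 ^ N * (2 ^ N * ((t / s) ^ (-n) * b ^ (-N))) := by
              have hb' : (0:ℝ) ≤ b ^ (-N) := by positivity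
              have := mul_le_mul_of_nonneg_right h4 hb'
              apply mul_le_mul_of_nonneg_left _ (by positivity : (0:ℝ) ≤ 2 ^ N)
              exact mul_le_mul_of_nonneg_left this (by positivity)
      have hidB : cstar * (t / s) ^ n * (2 ^ N * (2 ^ N * ((t / s) ^ (-n) * b ^ (-N)))) =
          cstar * (2 ^ N) ^ 2 * b ^ (-n) * b ^ (-(N - n)) := by
        calc cstar * (t / s) ^ n * (2 ^ N * (2 ^ N * ((t / s) ^ (-n) * b ^ (-N))))
            = cstar * (2 ^ N) ^ 2 * (b ^ (-(N - n)) * b ^ (-n)) *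
                ((t / s) ^ n * (t / s) ^ (-n)) := by rw [hbsplit]; ring
          _ = cstar * (2 ^ N) ^ 2 * b ^ (-n) * b ^ (-(N - n)) := by
              rw [htsn1, mul_one]; ring
      have hidB2 : CV * b ^ n * (cstar * (2 ^ N) ^ 2 * b ^ (-n) * b ^ (-(N - n))) =
          cstar * CV * (2 ^ N) ^ 2 * b ^ (-(N - n)) := by
        calc CV * b ^ n * (cstar * (2 ^ N) ^ 2 * b ^ (-n) * b ^ (-(N - n)))
            = cstar * CV * (2 ^ N) ^ 2 * b ^ (-(N - n)) * (b ^ n * b ^ (-n)) := by ring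
          _ = cstar * CV * (2 ^ N) ^ 2 * b ^ (-(N - n)) := by rw [hbn1, mul_one]
      calc Dker μ s N x z
          ≤ (μ (ball x s))⁻¹ *
              ENNReal.ofReal (2 ^ N * (2 ^ N * ((t / s) ^ (-n) * b ^ (-N)))) := by
            unfold Dker
            exact mul_le_mul' (ENNReal.inv_le_inv.mpr (le_max_left _ _))
              (ENNReal.ofReal_le_ofReal hre)
        _ ≤ ENNReal.ofReal (cstar * (t / s) ^ n) * Vx⁻¹ *
              ENNReal.ofReal (2 ^ N * (2 ^ N * ((t / s) ^ (-n) * b ^ (-N)))) :=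
            mul_le_mul_left hVxs _
        _ = ENNReal.ofReal (cstar * (t / s) ^ n *
              (2 ^ N * (2 ^ N * ((t / s) ^ (-n) * b ^ (-N))))) * Vx⁻¹ := by
            rw [ENNReal.ofReal_mul (mul_nonneg (by linarith) (by positivity))]
            ring
        _ = ENNReal.ofReal (cstar * (2 ^ N) ^ 2 * b ^ (-n) * b ^ (-(N - n))) * Vx⁻¹ := by
            rw [hidB]
        _ ≤ ENNReal.ofReal (cstar * (2 ^ N) ^ 2 * b ^ (-n) * b ^ (-(N - n))) *
              (ENNReal.ofReal (CV * b ^ n) * M⁻¹) := mul_le_mul_right hVxinv _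
        _ = ENNReal.ofReal (CV * b ^ n *
              (cstar * (2 ^ N) ^ 2 * b ^ (-n) * b ^ (-(N - n)))) * M⁻¹ := by
            have m1 : ENNReal.ofReal (CV * b ^ n) *
                ENNReal.ofReal (cstar * (2 ^ N) ^ 2 * b ^ (-n) * b ^ (-(N - n))) =
                ENNReal.ofReal (CV * b ^ n *
                  (cstar * (2 ^ N) ^ 2 * b ^ (-n) * b ^ (-(N - n)))) :=
              (ENNReal.ofReal_mul (mul_nonneg (by linarith) (by positivity))).symm
            rw [← m1]
            ring
        _ = ENNReal.ofReal (cstar * CV * (2 ^ N) ^ 2 * b ^ (-(N - n))) * M⁻¹ := by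
            rw [hidB2]
        _ = ENNReal.ofReal (cstar * CV * (2 ^ N) ^ 2) * (M⁻¹ * K) := by
            have m2 : ENNReal.ofReal (cstar * CV * (2 ^ N) ^ 2 * b ^ (-(N - n))) =
                ENNReal.ofReal (cstar * CV * (2 ^ N) ^ 2) *
                  ENNReal.ofReal (b ^ (-(N - n))) :=
              ENNReal.ofReal_mul
                (mul_nonneg (mul_nonneg (by linarith) (by linarith)) (by positivity))
            rw [m2, hK]
            ring
    -- assemble
    have hMK_ne_top : M⁻¹ * K ≠ ⊤ :=
      ENNReal.mul_ne_top (ENNReal.inv_ne_top.mpr hM0) ENNReal.ofReal_ne_top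
    have intA : ∫⁻ z in A, Dker μ s N x z * Dker μ t N z y ∂μ ≤
        ENNReal.ofReal CA * (ENNReal.ofReal (CV * 2 ^ N) * (M⁻¹ * K)) := by
      calc ∫⁻ z in A, Dker μ s N x z * Dker μ t N z y ∂μ
          ≤ ∫⁻ z in A, Dker μ s N x z *
              (ENNReal.ofReal (CV * 2 ^ N) * (M⁻¹ * K)) ∂μ :=
            setLIntegral_mono' hAmeas fun z hz => mul_le_mul_right (hptA z hz) _
        _ = (∫⁻ z in A, Dker μ s N x z ∂μ) * (ENNReal.ofReal (CV * 2 ^ N) * (M⁻¹ * K)) :=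
            lintegral_mul_const' _ _ (ENNReal.mul_ne_top ENNReal.ofReal_ne_top hMK_ne_top)
        _ ≤ (∫⁻ z, Dker μ s N x z ∂μ) * (ENNReal.ofReal (CV * 2 ^ N) * (M⁻¹ * K)) :=
            mul_le_mul_left (setLIntegral_le_lintegral _ _) _
        _ ≤ ENNReal.ofReal CA * (ENNReal.ofReal (CV * 2 ^ N) * (M⁻¹ * K)) :=
            mul_le_mul_left hIs _
    have intB : ∫⁻ z in Aᶜ, Dker μ s N x z * Dker μ t N z y ∂μ ≤
        ENNReal.ofReal (cstar * CV * (2 ^ N) ^ 2) * (M⁻¹ * K) * ENNReal.ofReal CA := by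
      calc ∫⁻ z in Aᶜ, Dker μ s N x z * Dker μ t N z y ∂μ
          ≤ ∫⁻ z in Aᶜ, ENNReal.ofReal (cstar * CV * (2 ^ N) ^ 2) * (M⁻¹ * K) *
              Dker μ t N z y ∂μ :=
            setLIntegral_mono' hAmeas.compl fun z hz => mul_le_mul_left (hptB z hz) _
        _ = ENNReal.ofReal (cstar * CV * (2 ^ N) ^ 2) * (M⁻¹ * K) *
              ∫⁻ z in Aᶜ, Dker μ t N z y ∂μ :=
            lintegral_const_mul' _ _ (ENNReal.mul_ne_top ENNReal.ofReal_ne_top hMK_ne_top)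
        _ ≤ ENNReal.ofReal (cstar * CV * (2 ^ N) ^ 2) * (M⁻¹ * K) *
              ∫⁻ z, Dker μ t N z y ∂μ :=
            mul_le_mul_right (setLIntegral_le_lintegral _ _) _
        _ ≤ ENNReal.ofReal (cstar * CV * (2 ^ N) ^ 2) * (M⁻¹ * K) * ENNReal.ofReal CA :=
            mul_le_mul_right hIt _
    have hcoef2 : CA * (CV * 2 ^ N) + CA * (cstar * CV * (2 ^ N) ^ 2) ≤
        3 * CA * CV * cstar * (2 ^ N) ^ 2 := by
      have hq : (2:ℝ) ^ N ≤ cstar * (2 ^ N) ^ 2 := by nlinarith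
      have hCV0 : (0:ℝ) ≤ CV := by linarith
      have h5 : CA * CV * (2 ^ N) ≤ CA * CV * (cstar * (2 ^ N) ^ 2) :=
        mul_le_mul_of_nonneg_left hq (mul_nonneg hCApos.le hCV0)
      nlinarith [mul_nonneg (mul_nonneg (mul_nonneg hCApos.le hCV0) (by linarith : (0:ℝ) ≤ cstar)) (sq_nonneg ((2:ℝ) ^ N))]
    calc ∫⁻ z, Dker μ s N x z * Dker μ t N z y ∂μ
        = (∫⁻ z in A, Dker μ s N x z * Dker μ t N z y ∂μ) +
            ∫⁻ z in Aᶜ, Dker μ s N x z * Dker μ t N z y ∂μ :=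
          (lintegral_add_compl _ hAmeas).symm
      _ ≤ ENNReal.ofReal CA * (ENNReal.ofReal (CV * 2 ^ N) * (M⁻¹ * K)) +
            ENNReal.ofReal (cstar * CV * (2 ^ N) ^ 2) * (M⁻¹ * K) * ENNReal.ofReal CA :=
          add_le_add intA intB
      _ = (ENNReal.ofReal CA * ENNReal.ofReal (CV * 2 ^ N) +
            ENNReal.ofReal CA * ENNReal.ofReal (cstar * CV * (2 ^ N) ^ 2)) * (M⁻¹ * K) := by
          ring
      _ = ENNReal.ofReal (CA * (CV * 2 ^ N) + CA * (cstar * CV * (2 ^ N) ^ 2)) * (M⁻¹ * K) := by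
          rw [← ENNReal.ofReal_mul hCApos.le, ← ENNReal.ofReal_mul hCApos.le,
            ← ENNReal.ofReal_add (mul_nonneg hCApos.le (mul_nonneg (by linarith) (by positivity)))
              (mul_nonneg hCApos.le (mul_nonneg (mul_nonneg (by linarith) (by linarith))
                (by positivity)))]
      _ ≤ ENNReal.ofReal (3 * CA * CV * cstar * (2 ^ N) ^ 2) * Dker μ t (N - n) x y :=
          hfinal _ (add_nonneg (mul_nonneg hCApos.le (mul_nonneg (by linarith) (by positivity)))
            (mul_nonneg hCApos.le (mul_nonneg (mul_nonneg (by linarith) (by linarith))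
              (by positivity)))) hcoef2


/-- For `s, t > 0` and `N > n`, there is a constant `C` such that
`∫_X D_{s,N}(x,z) D_{t,N}(z,y) dμ(z) ≤ C · D_{max(s,t),N-n}(x,y)` for all `x,y`. -/
theorem stmt_2 {X : Type*} [MetricSpace X] [MeasurableSpace X] [BorelSpace X]
    (μ : Measure X) (n cstar CV : ℝ) (hn : 0 < n) (hcstar : 1 ≤ cstar) (hCV : 1 ≤ CV)
    (hpos : ∀ (x : X) (r : ℝ), 0 < r → 0 < μ (ball x r))
    (hfin : ∀ (x : X) (r : ℝ), 0 < r → μ (ball x r) < ⊤)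
    (hgrowth : ∀ (x : X) (r lam : ℝ), 0 < r → 1 ≤ lam →
      μ (ball x (lam * r)) ≤ ENNReal.ofReal (cstar * lam ^ n) * μ (ball x r))
    (hcomp : ∀ (x y : X) (r : ℝ), 0 < r →
      μ (ball x r) ≤ ENNReal.ofReal (CV * (1 + dist x y / r) ^ n) * μ (ball y r))
    (s t N : ℝ) (hs : 0 < s) (ht : 0 < t) (hN : n < N) :
    ∃ C : ℝ, 0 < C ∧ ∀ x y : X,
      ∫⁻ z, Dker μ s N x z * Dker μ t N z y ∂μ ≤
        ENNReal.ofReal C * Dker μ (max s t) (N - n) x y := by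
  refine ⟨3 * (1 + cstar * 2 ^ n / (1 - 2 ^ (n - N))) * CV * cstar * (2 ^ N) ^ 2, ?_, ?_⟩
  · have hrlt : (2:ℝ) ^ (n - N) < 1 :=
      Real.rpow_lt_one_of_one_lt_of_neg one_lt_two (by linarith)
    have hCA : (0:ℝ) < 1 + cstar * 2 ^ n / (1 - 2 ^ (n - N)) := by
      have : (0:ℝ) ≤ cstar * 2 ^ n / (1 - 2 ^ (n - N)) :=
        div_nonneg (by positivity) (by linarith)
      linarith
    have h3 : (0:ℝ) < 3 * (1 + cstar * 2 ^ n / (1 - 2 ^ (n - N))) := by linarith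
    apply mul_pos (mul_pos (mul_pos h3 (by linarith)) (by linarith))
    positivity
  · intro x y
    rcases le_total s t with h | h
    · rw [max_eq_right h]
      exact key μ n cstar CV hn hcstar hCV hpos hfin hgrowth hcomp s t N hs ht hN h x y
    · rw [max_eq_left h]
      have e : ∀ z, Dker μ s N x z * Dker μ t N z y = Dker μ t N y z * Dker μ s N z x := by
        intro z
        rw [Dker_symm μ s N x z, Dker_symm μ t N z y]
        ring
      calc ∫⁻ z, Dker μ s N x z * Dker μ t N z y ∂μ
          = ∫⁻ z, Dker μ t N y z * Dker μ s N z x ∂μ := lintegral_congr e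
        _ ≤ ENNReal.ofReal (3 * (1 + cstar * 2 ^ n / (1 - 2 ^ (n - N))) * CV * cstar *
              (2 ^ N) ^ 2) * Dker μ s (N - n) y x :=
            key μ n cstar CV hn hcstar hCV hpos hfin hgrowth hcomp t s N ht hs hN h y x
        _ = ENNReal.ofReal (3 * (1 + cstar * 2 ^ n / (1 - 2 ^ (n - N))) * CV * cstar *
              (2 ^ N) ^ 2) * Dker μ s (N - n) x y := by rw [Dker_symm μ s (N - n) y x]
end

section
/- Let N > 2n and let ℓ, k ∈ ℤ with ℓ ≥ k. Then there is a constant C, depending only on the doubling constants, n and N, such that ∫_X D_{2^{−ℓ},N}(x,y) D_{2^{−k},N}(y,z) D_{2^{−k},N}(y,u) dμ(y) ≤ C · D_{2^{−k},(N−2n)/2}(x,z) · D_{2^{−k},(N−2n)/2}(x,u) for all x, z, u ∈ X. -/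
open MeasureTheory Metric
open scoped ENNReal

-- ENNReal helper: a ≤ c * b, a nonzero finite ⇒ b⁻¹ ≤ c * a⁻¹
lemma enn_mul_inv_le_one (b : ℝ≥0∞) : b * b⁻¹ ≤ 1 := by
  rcases eq_or_ne b 0 with rb | rb
  · simp [rb]
  rcases eq_or_ne b ⊤ with rt | rt
  · simp [rt]
  rw [ENNReal.mul_inv_cancel rb rt]

lemma enn_inv_scale {a b c : ℝ≥0∞} (ha : a ≠ 0) (ha' : a ≠ ⊤) (h : a ≤ c * b) :
    b⁻¹ ≤ c * a⁻¹ := by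
  calc b⁻¹ = (a * a⁻¹) * b⁻¹ := by rw [ENNReal.mul_inv_cancel ha ha', one_mul]
    _ = a⁻¹ * (a * b⁻¹) := by ring
    _ ≤ a⁻¹ * ((c * b) * b⁻¹) := by gcongr
    _ = (c * a⁻¹) * (b * b⁻¹) := by ring
    _ ≤ (c * a⁻¹) * 1 := by gcongr; exact enn_mul_inv_le_one b
    _ = c * a⁻¹ := mul_one _

-- measurability of y ↦ μ (ball y r)
lemma meas_ball {X : Type*} [MetricSpace X] [MeasurableSpace X] [BorelSpace X]
    (μ : Measure X) (r : ℝ) : Measurable fun y : X => μ (ball y r) := by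
  apply LowerSemicontinuous.measurable
  intro y c hc
  have hunion : ball y r = ⋃ m : ℕ, ball y (r - 1 / (m + 1)) := by
    ext t
    simp only [Set.mem_iUnion, mem_ball]
    constructor
    · intro ht
      obtain ⟨m, hm⟩ := exists_nat_one_div_lt (sub_pos.2 ht)
      exact ⟨m, by rw [lt_sub_comm]; exact_mod_cast hm⟩
    · rintro ⟨m, hm⟩
      have : r - 1 / (m + 1) ≤ r := by
        have : (0:ℝ) < 1 / (m+1) := by positivity
        linarith
      exact lt_of_lt_of_le hm this
  have hdir : Directed (· ⊆ ·) (fun m : ℕ => ball y (r - 1 / (m + 1))) := by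
    apply Monotone.directed_le
    intro a b hab
    apply ball_subset_ball
    have : (1:ℝ) / (b + 1) ≤ 1 / (a + 1) := by
      apply one_div_le_one_div_of_le (by positivity)
      have : (a:ℝ) ≤ b := Nat.cast_le.2 hab
      linarith
    linarith
  simp only [] at hc ⊢
  rw [show μ (ball y r) = ⨆ m : ℕ, μ (ball y (r - 1/(m+1))) from by
    rw [hunion, Directed.measure_iUnion hdir]] at hc
  obtain ⟨m, hm⟩ := lt_iSup_iff.mp hc
  set ε : ℝ := 1 / (m + 1) with hε
  have hεpos : 0 < ε := by positivity
  filter_upwards [Metric.ball_mem_nhds y hεpos] with y' hy'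
  refine lt_of_lt_of_le hm (measure_mono ?_)
  intro t ht
  have h1 : dist y t < r - ε := mem_ball'.1 ht
  have h2 : dist y y' < ε := mem_ball'.1 hy'
  have : dist y' t ≤ dist y' y + dist y t := dist_triangle _ _ _
  rw [mem_ball']
  rw [dist_comm] at h2
  have h3 : dist y' y = dist y y' := dist_comm _ _
  linarith


section
variable {X : Type*} [MetricSpace X] [MeasurableSpace X] [BorelSpace X]

lemma lemA (μ : Measure X) (n cstar : ℝ) (hn : 0 < n) (hcstar : 1 ≤ cstar)
    (hpos : ∀ (x : X) (r : ℝ), 0 < r → 0 < μ (ball x r))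
    (hfin : ∀ (x : X) (r : ℝ), 0 < r → μ (ball x r) < ⊤)
    (hgrowth : ∀ (x : X) (r lam : ℝ), 0 < r → 1 ≤ lam →
      μ (ball x (lam * r)) ≤ ENNReal.ofReal (cstar * lam ^ n) * μ (ball x r))
    (B : ℝ) (hB : n < B) (Λ : ℝ) (hΛ : 0 < Λ) (w : X) :
    ∫⁻ y, (max (μ (ball w Λ)) (μ (ball y Λ)))⁻¹ *
        ENNReal.ofReal ((1 + dist w y / Λ) ^ (-B)) ∂μ
      ≤ ENNReal.ofReal (cstar * 2 ^ (n + B) * (1 - 2 ^ (n - B))⁻¹) := by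
  have hB0 : 0 < B := hn.trans hB
  set f : X → ℝ≥0∞ := fun y => (max (μ (ball w Λ)) (μ (ball y Λ)))⁻¹ *
    ENNReal.ofReal ((1 + dist w y / Λ) ^ (-B)) with hf
  set S : ℕ → Set X := fun j => Nat.casesOn j (ball w Λ)
    (fun m => ball w ((2:ℝ) ^ (m+1) * Λ) \ ball w ((2:ℝ) ^ m * Λ)) with hS
  -- coverage
  have hcover : Set.univ ⊆ ⋃ j, S j := by
    intro y _
    have hex : ∃ j : ℕ, dist w y < (2:ℝ) ^ j * Λ := by
      obtain ⟨j, hj⟩ := pow_unbounded_of_one_lt (dist w y / Λ) (one_lt_two (α := ℝ))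
      exact ⟨j, by rwa [div_lt_iff₀ hΛ] at hj⟩
    classical
    set j := Nat.find hex with hj
    have hjlt : dist w y < (2:ℝ) ^ j * Λ := Nat.find_spec hex
    refine Set.mem_iUnion.2 ⟨j, ?_⟩
    cases hjc : j with
    | zero =>
      simp only [hS]
      rw [hjc] at hjlt
      rw [pow_zero, one_mul] at hjlt
      exact mem_ball'.2 hjlt
    | succ m =>
      simp only [hS]
      rw [hjc] at hjlt
      refine ⟨mem_ball'.2 hjlt, ?_⟩
      have hmin := Nat.find_min hex (by omega : m < j)
      intro hmem
      exact hmin (mem_ball'.1 hmem)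
  -- per-piece bound
  have key : ∀ j : ℕ, ∫⁻ y in S j, f y ∂μ ≤
      ENNReal.ofReal ((cstar * 2 ^ (n + B)) * ((2:ℝ) ^ (n - B)) ^ j) := by
    intro j
    set R : ℝ := (2:ℝ) ^ j * Λ with hR
    have hRpos : 0 < R := by positivity
    have h2j1 : (1:ℝ) ≤ (2:ℝ) ^ (j+1) := one_le_pow₀ one_le_two
    -- real constant for this piece
    set creal : ℝ := cstar * ((2:ℝ) ^ (j+1)) ^ n * (((2:ℝ) ^ j) ^ (-B) * 2 ^ B) with hcr
    have hcreal_nonneg : 0 ≤ creal := by positivity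
    -- pointwise bound on S j
    have hpt : ∀ y ∈ S j, f y ≤ ENNReal.ofReal creal * (μ (ball w R))⁻¹ := by
      intro y hy
      have hySub : y ∈ ball w R := by
        cases j with
        | zero => simpa [hS, hR] using hy
        | succ m => exact hy.1
      -- volume comparison
      have hball : ball w R ⊆ ball y ((2:ℝ) ^ (j+1) * Λ) := by
        intro t ht
        have h1 : dist w t < R := mem_ball'.1 ht
        have h2 : dist w y < R := mem_ball'.1 hySub
        have htri : dist y t ≤ dist y w + dist w t := dist_triangle _ _ _
        have hdyw : dist y w = dist w y := dist_comm _ _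
        have hRR : (2:ℝ) ^ (j+1) * Λ = R + R := by rw [hR, pow_succ]; ring
        rw [mem_ball', hRR]
        linarith
      have hvol : μ (ball w R) ≤
          ENNReal.ofReal (cstar * ((2:ℝ) ^ (j+1)) ^ n) * μ (ball y Λ) := by
        refine le_trans (measure_mono hball) ?_
        exact hgrowth y Λ ((2:ℝ) ^ (j+1)) hΛ h2j1
      have hinv : (μ (ball y Λ))⁻¹ ≤
          ENNReal.ofReal (cstar * ((2:ℝ) ^ (j+1)) ^ n) * (μ (ball w R))⁻¹ :=
        enn_inv_scale (hpos w R hRpos).ne' (hfin w R hRpos).ne hvol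
      -- distance factor bound
      have hbase : (1:ℝ) ≤ 1 + dist w y / Λ := by
        have : 0 ≤ dist w y / Λ := by positivity
        linarith
      have hdist : (1 + dist w y / Λ) ^ (-B) ≤ ((2:ℝ) ^ j) ^ (-B) * 2 ^ B := by
        cases j with
        | zero =>
          simp only [pow_zero, Real.one_rpow, one_mul]
          refine le_trans (Real.rpow_le_one_of_one_le_of_nonpos hbase (by linarith)) ?_
          rw [show (1:ℝ) = (2:ℝ) ^ (0:ℝ) from (Real.rpow_zero 2).symm]
          exact Real.rpow_le_rpow_of_exponent_le one_le_two hB0.le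
        | succ m =>
          have hylow : (2:ℝ) ^ m * Λ ≤ dist w y := by
            have h2 := hy.2
            exact not_lt.1 fun h => h2 (mem_ball'.2 h)
          have h2m : (2:ℝ) ^ m ≤ 1 + dist w y / Λ := by
            have : (2:ℝ) ^ m ≤ dist w y / Λ := (le_div_iff₀ hΛ).2 hylow
            linarith
          have h1 : (1 + dist w y / Λ) ^ (-B) ≤ ((2:ℝ) ^ m) ^ (-B) :=
            Real.rpow_le_rpow_of_nonpos (by positivity) h2m (by linarith)
          have h2 : ((2:ℝ) ^ (m+1)) ^ (-B) * 2 ^ B = ((2:ℝ) ^ m) ^ (-B) := by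
            rw [pow_succ, Real.mul_rpow (by positivity) (by norm_num),
              mul_assoc, ← Real.rpow_add two_pos]
            simp
          rw [h2]; exact h1
      calc f y ≤ (μ (ball y Λ))⁻¹ * ENNReal.ofReal (((2:ℝ) ^ j) ^ (-B) * 2 ^ B) := by
            refine mul_le_mul' ?_ (ENNReal.ofReal_le_ofReal hdist)
            exact ENNReal.inv_le_inv.2 (le_max_right _ _)
        _ ≤ (ENNReal.ofReal (cstar * ((2:ℝ) ^ (j+1)) ^ n) * (μ (ball w R))⁻¹) *
              ENNReal.ofReal (((2:ℝ) ^ j) ^ (-B) * 2 ^ B) := by gcongr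
        _ = ENNReal.ofReal creal * (μ (ball w R))⁻¹ := by
            rw [hcr, ENNReal.ofReal_mul
              (show (0:ℝ) ≤ cstar * ((2:ℝ) ^ (j+1)) ^ n by positivity)]
            ring
    have hmeas : MeasurableSet (S j) := by
      cases j with
      | zero => exact measurableSet_ball
      | succ m => exact measurableSet_ball.diff measurableSet_ball
    have hSsub : S j ⊆ ball w R := by
      intro y hy
      cases j with
      | zero => simpa [hS, hR] using hy
      | succ m => exact hy.1
    calc ∫⁻ y in S j, f y ∂μ
        ≤ ∫⁻ _ in S j, ENNReal.ofReal creal * (μ (ball w R))⁻¹ ∂μ :=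
          setLIntegral_mono (by measurability) hpt
      _ = ENNReal.ofReal creal * (μ (ball w R))⁻¹ * μ (S j) := setLIntegral_const _ _
      _ ≤ ENNReal.ofReal creal * (μ (ball w R))⁻¹ * μ (ball w R) :=
          mul_le_mul' le_rfl (measure_mono hSsub)
      _ = ENNReal.ofReal creal * ((μ (ball w R))⁻¹ * μ (ball w R)) := by ring
      _ ≤ ENNReal.ofReal creal * 1 := by
          gcongr
          rw [mul_comm]; exact enn_mul_inv_le_one _
      _ = ENNReal.ofReal creal := mul_one _
      _ ≤ ENNReal.ofReal ((cstar * 2 ^ (n + B)) * ((2:ℝ) ^ (n - B)) ^ j) := by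
          apply ENNReal.ofReal_le_ofReal
          apply le_of_eq
          rw [hcr]
          rw [show ((2:ℝ) ^ (j+1)) ^ n = (2:ℝ) ^ (((j:ℝ)+1) * n) by
            rw [← Real.rpow_natCast (2:ℝ) (j+1), ← Real.rpow_mul (by norm_num)]
            push_cast; ring_nf]
          rw [show (((2:ℝ) ^ j) ^ (-B)) = (2:ℝ) ^ ((j:ℝ) * (-B)) by
            rw [← Real.rpow_natCast (2:ℝ) j, ← Real.rpow_mul (by norm_num)]]
          rw [show (((2:ℝ) ^ (n - B)) ^ j) = (2:ℝ) ^ ((n - B) * (j:ℝ)) by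
            rw [← Real.rpow_natCast ((2:ℝ) ^ (n-B)) j, ← Real.rpow_mul (by norm_num)]]
          have h2 : ∀ a b : ℝ, (2:ℝ) ^ a * (2:ℝ) ^ b = 2 ^ (a + b) :=
            fun a b => (Real.rpow_add two_pos a b).symm
          rw [h2, mul_assoc, h2, mul_assoc, h2]
          congr 1
          push_cast
          ring
  -- sum up
  have hr01 : (2:ℝ) ^ (n - B) < 1 :=
    Real.rpow_lt_one_of_one_lt_of_neg one_lt_two (by linarith)
  have hr0 : (0:ℝ) ≤ (2:ℝ) ^ (n - B) := by positivity
  calc ∫⁻ y, f y ∂μ = ∫⁻ y in Set.univ, f y ∂μ := (setLIntegral_univ f).symm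
    _ ≤ ∫⁻ y in ⋃ j, S j, f y ∂μ := lintegral_mono_set hcover
    _ ≤ ∑' j, ∫⁻ y in S j, f y ∂μ := lintegral_iUnion_le _ _
    _ ≤ ∑' j : ℕ, ENNReal.ofReal ((cstar * 2 ^ (n + B)) * ((2:ℝ) ^ (n - B)) ^ j) :=
        ENNReal.tsum_le_tsum key
    _ = ENNReal.ofReal (cstar * 2 ^ (n + B)) *
          ∑' j : ℕ, (ENNReal.ofReal ((2:ℝ) ^ (n - B))) ^ j := by
        rw [ENNReal.tsum_mul_left.symm]
        congr 1
        ext j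
        rw [ENNReal.ofReal_mul (by positivity), ENNReal.ofReal_pow hr0]
    _ = ENNReal.ofReal (cstar * 2 ^ (n + B)) *
          (1 - ENNReal.ofReal ((2:ℝ) ^ (n - B)))⁻¹ := by rw [ENNReal.tsum_geometric]
    _ = ENNReal.ofReal (cstar * 2 ^ (n + B) * (1 - 2 ^ (n - B))⁻¹) := by
        rw [show (1:ℝ≥0∞) - ENNReal.ofReal ((2:ℝ) ^ (n - B)) =
            ENNReal.ofReal (1 - (2:ℝ) ^ (n - B)) by
          rw [ENNReal.ofReal_sub _ hr0, ENNReal.ofReal_one]]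
        rw [← ENNReal.ofReal_inv_of_pos (by linarith), ← ENNReal.ofReal_mul (by positivity)]

end


section Helpers
variable {X : Type*} [MetricSpace X] [MeasurableSpace X] [BorelSpace X]

lemma one_le_base (Λ : ℝ) (hΛ : 0 < Λ) (x y : X) : (1:ℝ) ≤ 1 + dist x y / Λ :=
  le_add_of_nonneg_right (by positivity)

lemma real_inv_scale {a b c : ℝ} (ha : 0 < a) (hb : 0 < b) (h : a ≤ c * b) :
    b⁻¹ ≤ c * a⁻¹ := by
  rw [show c * a⁻¹ = c / a from (div_eq_mul_inv c a).symm, le_div_iff₀ ha]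
  calc b⁻¹ * a ≤ b⁻¹ * (c * b) := by
        apply mul_le_mul_of_nonneg_left h (by positivity)
    _ = c * (b⁻¹ * b) := by ring
    _ = c := by rw [inv_mul_cancel₀ hb.ne', mul_one]

-- distance-transfer: (1+d(y,z)/Λ)^(-N) ≤ (1+d(x,y)/Λ)^M * (1+d(x,z)/Λ)^(-M)
lemma rpow_transfer (Λ : ℝ) (hΛ : 0 < Λ) (M N : ℝ) (hM : 0 ≤ M) (hMN : M ≤ N)
    (x y z : X) :
    (1 + dist y z / Λ) ^ (-N) ≤ (1 + dist x y / Λ) ^ M * (1 + dist x z / Λ) ^ (-M) := by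
  set b1 := 1 + dist x y / Λ with hb1
  set b2 := 1 + dist y z / Λ with hb2
  set b3 := 1 + dist x z / Λ with hb3
  have h1 : (1:ℝ) ≤ b1 := one_le_base Λ hΛ x y
  have h2 : (1:ℝ) ≤ b2 := one_le_base Λ hΛ y z
  have h3 : (1:ℝ) ≤ b3 := one_le_base Λ hΛ x z
  have htri : b3 ≤ b1 * b2 := by
    have hd : dist x z ≤ dist x y + dist y z := dist_triangle _ _ _
    have hdd : 0 ≤ dist x y * dist y z / (Λ * Λ) := by positivity
    rw [hb1, hb2, hb3]
    have expand : (1 + dist x y / Λ) * (1 + dist y z / Λ)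
        = 1 + dist x y / Λ + dist y z / Λ + dist x y * dist y z / (Λ * Λ) := by
      field_simp; ring
    rw [expand]
    have : dist x z / Λ ≤ dist x y / Λ + dist y z / Λ := by
      rw [← add_div]
      gcongr ?_ / Λ

    linarith
  have step1 : b2 ^ (-N) ≤ b2 ^ (-M) :=
    Real.rpow_le_rpow_of_exponent_le h2 (by linarith)
  have step2 : b2 ^ (-M) ≤ b1 ^ M * b3 ^ (-M) := by
    have hup : b3 ^ M ≤ b1 ^ M * b2 ^ M := by
      calc b3 ^ M ≤ (b1 * b2) ^ M :=
            Real.rpow_le_rpow (by linarith) htri hM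
        _ = b1 ^ M * b2 ^ M := Real.mul_rpow (by linarith) (by linarith)
    rw [Real.rpow_neg (by linarith : (0:ℝ) ≤ b2), Real.rpow_neg (by linarith : (0:ℝ) ≤ b3)]
    exact real_inv_scale (Real.rpow_pos_of_pos (by linarith) M)
      (Real.rpow_pos_of_pos (by linarith) M) hup
  exact step1.trans step2
end Helpers

section Main
variable {X : Type*} [MetricSpace X] [MeasurableSpace X] [BorelSpace X]

lemma enn_mul_inv_le_one' (b : ℝ≥0∞) : b * b⁻¹ ≤ 1 := by
  rcases eq_or_ne b 0 with rb | rb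
  · simp [rb]
  rcases eq_or_ne b ⊤ with rt | rt
  · simp [rt]
  rw [ENNReal.mul_inv_cancel rb rt]

lemma enn_inv_scale' {a b c : ℝ≥0∞} (ha : a ≠ 0) (ha' : a ≠ ⊤) (h : a ≤ c * b) :
    b⁻¹ ≤ c * a⁻¹ := by
  calc b⁻¹ = (a * a⁻¹) * b⁻¹ := by rw [ENNReal.mul_inv_cancel ha ha', one_mul]
    _ = a⁻¹ * (a * b⁻¹) := by ring
    _ ≤ a⁻¹ * ((c * b) * b⁻¹) := by gcongr
    _ = (c * a⁻¹) * (b * b⁻¹) := by ring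
    _ ≤ (c * a⁻¹) * 1 := by gcongr; exact enn_mul_inv_le_one' b
    _ = c * a⁻¹ := mul_one _

-- doubling of base: if dist x z ≤ 2 * d then (1+d/Λ)^(-s) ≤ 2^s * (1+dist x z/Λ)^(-s)
lemma rpow_double (Λ : ℝ) (hΛ : 0 < Λ) (s : ℝ) (hs : 0 ≤ s) {d : ℝ} (hd : 0 ≤ d)
    (x z : X) (h2 : dist x z ≤ 2 * d) :
    (1 + d / Λ) ^ (-s) ≤ 2 ^ s * (1 + dist x z / Λ) ^ (-s) := by
  have hb1 : (1:ℝ) ≤ 1 + d / Λ := le_add_of_nonneg_right (by positivity)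
  have hb3 : (1:ℝ) ≤ 1 + dist x z / Λ := one_le_base Λ hΛ x z
  have hkey : 1 + dist x z / Λ ≤ 2 * (1 + d / Λ) := by
    have : dist x z / Λ ≤ 2 * d / Λ := by gcongr
    rw [mul_div_assoc] at this
    linarith
  have hup : (1 + dist x z / Λ) ^ s ≤ 2 ^ s * (1 + d / Λ) ^ s := by
    calc (1 + dist x z / Λ) ^ s ≤ (2 * (1 + d / Λ)) ^ s :=
          Real.rpow_le_rpow (by linarith) hkey hs
      _ = 2 ^ s * (1 + d / Λ) ^ s := Real.mul_rpow (by norm_num) (by linarith)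
  rw [Real.rpow_neg (by linarith : (0:ℝ) ≤ 1 + d / Λ),
    Real.rpow_neg (by linarith : (0:ℝ) ≤ 1 + dist x z / Λ)]
  exact real_inv_scale (Real.rpow_pos_of_pos (by linarith) s)
    (Real.rpow_pos_of_pos (by linarith) s) hup

variable (μ : Measure X) (n cstar CV : ℝ)

-- volume transfer for pairs of balls (max form)
lemma vol_transfer (hn : 0 < n) (hCV : 1 ≤ CV)
    (hpos : ∀ (x : X) (r : ℝ), 0 < r → 0 < μ (ball x r))
    (hfin : ∀ (x : X) (r : ℝ), 0 < r → μ (ball x r) < ⊤)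
    (hcomp : ∀ (x y : X) (r : ℝ), 0 < r →
      μ (ball x r) ≤ ENNReal.ofReal (CV * (1 + dist x y / r) ^ n) * μ (ball y r))
    (Λ : ℝ) (hΛ : 0 < Λ) (x y u : X) :
    (max (μ (ball y Λ)) (μ (ball u Λ)))⁻¹ ≤
      ENNReal.ofReal (CV * (1 + dist x y / Λ) ^ n) *
        (max (μ (ball x Λ)) (μ (ball u Λ)))⁻¹ := by
  have hone : (1:ℝ≥0∞) ≤ ENNReal.ofReal (CV * (1 + dist x y / Λ) ^ n) := by
    rw [ENNReal.one_le_ofReal]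
    have h1 : (1:ℝ) ≤ (1 + dist x y / Λ) ^ n := by
      calc (1:ℝ) = 1 ^ n := (Real.one_rpow n).symm
        _ ≤ (1 + dist x y / Λ) ^ n :=
            Real.rpow_le_rpow (by norm_num) (one_le_base Λ hΛ x y) hn.le
    nlinarith
  apply enn_inv_scale'
  · exact (lt_of_lt_of_le (hpos x Λ hΛ) (le_max_left _ _)).ne'
  · exact (max_lt (hfin x Λ hΛ) (hfin u Λ hΛ)).ne
  · apply max_le
    · exact (hcomp x y Λ hΛ).trans (by gcongr; exact le_max_left _ _)
    · calc μ (ball u Λ) = 1 * μ (ball u Λ) := (one_mul _).symm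
        _ ≤ ENNReal.ofReal (CV * (1 + dist x y / Λ) ^ n) *
              max (μ (ball y Λ)) (μ (ball u Λ)) := by
            gcongr; exact le_max_right _ _

-- single-ball transfer: (μ (ball z Λ))⁻¹ bundled with target max
lemma vol_single (hn : 0 < n) (hCV : 1 ≤ CV)
    (hpos : ∀ (x : X) (r : ℝ), 0 < r → 0 < μ (ball x r))
    (hfin : ∀ (x : X) (r : ℝ), 0 < r → μ (ball x r) < ⊤)
    (hcomp : ∀ (x y : X) (r : ℝ), 0 < r →
      μ (ball x r) ≤ ENNReal.ofReal (CV * (1 + dist x y / r) ^ n) * μ (ball y r))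
    (Λ : ℝ) (hΛ : 0 < Λ) (x z : X) :
    (μ (ball z Λ))⁻¹ ≤ ENNReal.ofReal (CV * (1 + dist x z / Λ) ^ n) *
      (max (μ (ball x Λ)) (μ (ball z Λ)))⁻¹ := by
  have hone : (1:ℝ≥0∞) ≤ ENNReal.ofReal (CV * (1 + dist x z / Λ) ^ n) := by
    rw [ENNReal.one_le_ofReal]
    have h1 : (1:ℝ) ≤ (1 + dist x z / Λ) ^ n := by
      calc (1:ℝ) = 1 ^ n := (Real.one_rpow n).symm
        _ ≤ (1 + dist x z / Λ) ^ n :=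
            Real.rpow_le_rpow (by norm_num) (one_le_base Λ hΛ x z) hn.le
    nlinarith
  apply enn_inv_scale'
  · exact (lt_of_lt_of_le (hpos x Λ hΛ) (le_max_left _ _)).ne'
  · exact (max_lt (hfin x Λ hΛ) (hfin z Λ hΛ)).ne
  · apply max_le
    · exact hcomp x z Λ hΛ
    · calc μ (ball z Λ) = 1 * μ (ball z Λ) := (one_mul _).symm
        _ ≤ ENNReal.ofReal (CV * (1 + dist x z / Λ) ^ n) * μ (ball z Λ) := by gcongr

end Main

section Split
variable {X : Type*} [MetricSpace X] [MeasurableSpace X] [BorelSpace X]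
variable (μ : Measure X) (n cstar CV : ℝ)

lemma split_bound (hn : 0 < n) (hCV : 1 ≤ CV)
    (hpos : ∀ (x : X) (r : ℝ), 0 < r → 0 < μ (ball x r))
    (hfin : ∀ (x : X) (r : ℝ), 0 < r → μ (ball x r) < ⊤)
    (hcomp : ∀ (x y : X) (r : ℝ), 0 < r →
      μ (ball x r) ≤ ENNReal.ofReal (CV * (1 + dist x y / r) ^ n) * μ (ball y r))
    (Λ : ℝ) (hΛ : 0 < Λ) (N M : ℝ) (hM : 0 < M) (hMN : M + n ≤ N) (x z y : X) :
    Dker μ Λ (M + n) x y * Dker μ Λ N y z ≤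
      ENNReal.ofReal (2 ^ (M + n) * (CV * CV)) * Dker μ Λ M x z *
        ((max (μ (ball z Λ)) (μ (ball y Λ)))⁻¹ *
            ENNReal.ofReal ((1 + dist z y / Λ) ^ (-(N - n)))
          + (max (μ (ball x Λ)) (μ (ball y Λ)))⁻¹ *
            ENNReal.ofReal ((1 + dist x y / Λ) ^ (-(M + n)))) := by
  have hbxy := one_le_base Λ hΛ x y
  have hbyz := one_le_base Λ hΛ y z
  have hbxz := one_le_base Λ hΛ x z
  have hbxzpos : (0:ℝ) < 1 + dist x z / Λ := by linarith
  set Vx := μ (ball x Λ)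
  set Vy := μ (ball y Λ)
  set Vz := μ (ball z Λ)
  set bxy := 1 + dist x y / Λ with hbxy'
  set byz := 1 + dist y z / Λ with hbyz'
  set bxz := 1 + dist x z / Λ with hbxz'
  set h1core : ℝ≥0∞ := (max Vz Vy)⁻¹ * ENNReal.ofReal ((1 + dist z y / Λ) ^ (-(N - n)))
    with hh1
  set h2core : ℝ≥0∞ := (max Vx Vy)⁻¹ * ENNReal.ofReal (bxy ^ (-(M + n))) with hh2
  -- common ingredient
  have hsplit_b : bxz ^ (-(M + n)) = bxz ^ (-M) * bxz ^ (-n) := by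
    rw [← Real.rpow_add hbxzpos]; congr 1; ring
  have hc : ENNReal.ofReal (bxz ^ (-n)) * (max Vy Vz)⁻¹ ≤
      ENNReal.ofReal CV * (max Vx Vz)⁻¹ := by
    have h1 : (max Vy Vz)⁻¹ ≤ Vz⁻¹ := ENNReal.inv_le_inv.2 (le_max_right _ _)
    have h2 : Vz⁻¹ ≤ ENNReal.ofReal (CV * bxz ^ n) * (max Vx Vz)⁻¹ :=
      vol_single μ n CV hn hCV hpos hfin hcomp Λ hΛ x z
    calc ENNReal.ofReal (bxz ^ (-n)) * (max Vy Vz)⁻¹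
        ≤ ENNReal.ofReal (bxz ^ (-n)) * (ENNReal.ofReal (CV * bxz ^ n) * (max Vx Vz)⁻¹) :=
          mul_le_mul' le_rfl (h1.trans h2)
      _ = ENNReal.ofReal (bxz ^ (-n) * (CV * bxz ^ n)) * (max Vx Vz)⁻¹ := by
          rw [← mul_assoc, ← ENNReal.ofReal_mul (show (0:ℝ) ≤ bxz ^ (-n) by positivity)]
      _ = ENNReal.ofReal CV * (max Vx Vz)⁻¹ := by
          congr 1
          have hcan : bxz ^ (-n) * bxz ^ n = 1 := by
            rw [← Real.rpow_add hbxzpos]; simp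
          congr 1
          linear_combination CV * hcan
  have hCVone : (1:ℝ≥0∞) ≤ ENNReal.ofReal CV := by
    rw [ENNReal.one_le_ofReal]; exact hCV
  rcases le_total (dist x y) (dist y z) with hcase | hcase
  · -- E₂ : dist x z ≤ 2 * dist y z
    have hdxz2 : dist x z ≤ 2 * dist y z := by
      have := dist_triangle x y z; linarith
    have hd1 : byz ^ (-N) ≤ byz ^ (-(M + n)) :=
      Real.rpow_le_rpow_of_exponent_le hbyz (by linarith)
    have hd2 : byz ^ (-(M + n)) ≤ 2 ^ (M + n) * bxz ^ (-(M + n)) :=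
      rpow_double Λ hΛ (M + n) (by linarith) dist_nonneg x z hdxz2
    calc Dker μ Λ (M + n) x y * Dker μ Λ N y z
        = ((max Vx Vy)⁻¹ * ENNReal.ofReal (bxy ^ (-(M + n)))) *
            ((max Vy Vz)⁻¹ * ENNReal.ofReal (byz ^ (-N))) := rfl
      _ ≤ ((max Vx Vy)⁻¹ * ENNReal.ofReal (bxy ^ (-(M + n)))) *
            ((max Vy Vz)⁻¹ *
              ENNReal.ofReal (2 ^ (M + n) * (bxz ^ (-M) * bxz ^ (-n)))) :=
          mul_le_mul' le_rfl (mul_le_mul' le_rfl (ENNReal.ofReal_le_ofReal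
            (by rw [← hsplit_b]; exact hd1.trans hd2)))
      _ = ENNReal.ofReal (2 ^ (M + n)) * ENNReal.ofReal (bxz ^ (-M)) *
            (ENNReal.ofReal (bxz ^ (-n)) * (max Vy Vz)⁻¹) * h2core := by
          rw [ENNReal.ofReal_mul (show (0:ℝ) ≤ 2 ^ (M+n) by positivity),
            ENNReal.ofReal_mul (show (0:ℝ) ≤ bxz ^ (-M) by positivity), hh2]
          ring
      _ ≤ ENNReal.ofReal (2 ^ (M + n)) * ENNReal.ofReal (bxz ^ (-M)) *
            (ENNReal.ofReal CV * (max Vx Vz)⁻¹) * h2core :=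
          mul_le_mul' (mul_le_mul' le_rfl hc) le_rfl
      _ ≤ ENNReal.ofReal (2 ^ (M + n)) * ENNReal.ofReal (bxz ^ (-M)) *
            (ENNReal.ofReal CV * (max Vx Vz)⁻¹) * h2core * ENNReal.ofReal CV := by
          nth_rewrite 1 [← mul_one (ENNReal.ofReal (2 ^ (M + n)) *
            ENNReal.ofReal (bxz ^ (-M)) * (ENNReal.ofReal CV * (max Vx Vz)⁻¹) * h2core)]
          exact mul_le_mul' le_rfl hCVone
      _ = ENNReal.ofReal (2 ^ (M + n) * (CV * CV)) * Dker μ Λ M x z * h2core := by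
          rw [ENNReal.ofReal_mul (show (0:ℝ) ≤ 2 ^ (M+n) by positivity),
            ENNReal.ofReal_mul (show (0:ℝ) ≤ CV by linarith)]
          show _ = _ * ((max Vx Vz)⁻¹ * ENNReal.ofReal (bxz ^ (-M))) * _
          ring
      _ ≤ ENNReal.ofReal (2 ^ (M + n) * (CV * CV)) * Dker μ Λ M x z *
            (h1core + h2core) := by
          gcongr
          exact le_add_self
  · -- E₁ : dist x z ≤ 2 * dist x y
    have hdxz2 : dist x z ≤ 2 * dist x y := by
      have := dist_triangle x y z; linarith
    have hd : bxy ^ (-(M + n)) ≤ 2 ^ (M + n) * bxz ^ (-(M + n)) :=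
      rpow_double Λ hΛ (M + n) (by linarith) dist_nonneg x z hdxz2
    have hbzy : (1 + dist z y / Λ) = byz := by rw [hbyz', dist_comm]
    have hbzypos : (0:ℝ) < byz := by linarith
    have hd4 : (max Vx Vy)⁻¹ * ENNReal.ofReal (byz ^ (-N)) ≤
        ENNReal.ofReal CV * h1core := by
      have h1 : (max Vx Vy)⁻¹ ≤ Vy⁻¹ := ENNReal.inv_le_inv.2 (le_max_right _ _)
      have h2 : Vy⁻¹ ≤ ENNReal.ofReal (CV * (1 + dist z y / Λ) ^ n) * (max Vz Vy)⁻¹ :=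
        vol_single μ n CV hn hCV hpos hfin hcomp Λ hΛ z y
      rw [hbzy] at h2
      calc (max Vx Vy)⁻¹ * ENNReal.ofReal (byz ^ (-N))
          ≤ (ENNReal.ofReal (CV * byz ^ n) * (max Vz Vy)⁻¹) *
              ENNReal.ofReal (byz ^ (-N)) := mul_le_mul' (h1.trans h2) le_rfl
        _ = ENNReal.ofReal (CV * byz ^ n * byz ^ (-N)) * (max Vz Vy)⁻¹ := by
            rw [ENNReal.ofReal_mul (show (0:ℝ) ≤ CV * byz ^ n by positivity)]
            ring
        _ = ENNReal.ofReal CV * h1core := by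
            rw [hh1, hbzy]
            rw [show CV * byz ^ n * byz ^ (-N) = CV * byz ^ (-(N - n)) by
              rw [mul_assoc, ← Real.rpow_add hbzypos]
              congr 2
              ring]
            rw [ENNReal.ofReal_mul (show (0:ℝ) ≤ CV by linarith)]
            ring
    calc Dker μ Λ (M + n) x y * Dker μ Λ N y z
        = ((max Vx Vy)⁻¹ * ENNReal.ofReal (bxy ^ (-(M + n)))) *
            ((max Vy Vz)⁻¹ * ENNReal.ofReal (byz ^ (-N))) := rfl
      _ ≤ ((max Vx Vy)⁻¹ *
              ENNReal.ofReal (2 ^ (M + n) * (bxz ^ (-M) * bxz ^ (-n)))) *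
            ((max Vy Vz)⁻¹ * ENNReal.ofReal (byz ^ (-N))) :=
          mul_le_mul' (mul_le_mul' le_rfl (ENNReal.ofReal_le_ofReal
            (by rw [← hsplit_b]; exact hd))) le_rfl
      _ = ENNReal.ofReal (2 ^ (M + n)) * ENNReal.ofReal (bxz ^ (-M)) *
            (ENNReal.ofReal (bxz ^ (-n)) * (max Vy Vz)⁻¹) *
            ((max Vx Vy)⁻¹ * ENNReal.ofReal (byz ^ (-N))) := by
          rw [ENNReal.ofReal_mul (show (0:ℝ) ≤ 2 ^ (M+n) by positivity),
            ENNReal.ofReal_mul (show (0:ℝ) ≤ bxz ^ (-M) by positivity)]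
          ring
      _ ≤ ENNReal.ofReal (2 ^ (M + n)) * ENNReal.ofReal (bxz ^ (-M)) *
            (ENNReal.ofReal CV * (max Vx Vz)⁻¹) *
            (ENNReal.ofReal CV * h1core) :=
          mul_le_mul' (mul_le_mul' le_rfl hc) hd4
      _ = ENNReal.ofReal (2 ^ (M + n) * (CV * CV)) * Dker μ Λ M x z * h1core := by
          rw [ENNReal.ofReal_mul (show (0:ℝ) ≤ 2 ^ (M+n) by positivity),
            ENNReal.ofReal_mul (show (0:ℝ) ≤ CV by linarith)]
          show _ = _ * ((max Vx Vz)⁻¹ * ENNReal.ofReal (bxz ^ (-M))) * _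
          ring
      _ ≤ ENNReal.ofReal (2 ^ (M + n) * (CV * CV)) * Dker μ Λ M x z *
            (h1core + h2core) := by
          gcongr
          exact self_le_add_right _ _
end Split

section Final
variable {X : Type*} [MetricSpace X] [MeasurableSpace X] [BorelSpace X]
variable (μ : Measure X) (n cstar CV : ℝ)

lemma scale_up (hn : 0 < n) (hcstar : 1 ≤ cstar)
    (hpos : ∀ (x : X) (r : ℝ), 0 < r → 0 < μ (ball x r))
    (hfin : ∀ (x : X) (r : ℝ), 0 < r → μ (ball x r) < ⊤)
    (hgrowth : ∀ (x : X) (r lam : ℝ), 0 < r → 1 ≤ lam →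
      μ (ball x (lam * r)) ≤ ENNReal.ofReal (cstar * lam ^ n) * μ (ball x r))
    (lp L lam : ℝ) (hlp : 0 < lp) (hlam : 1 ≤ lam) (hL : L = lam * lp)
    (N : ℝ) (hN : 0 ≤ N) (x y : X) :
    Dker μ lp N x y ≤ ENNReal.ofReal (cstar * lam ^ n) * Dker μ L N x y := by
  have hLpos : 0 < L := by rw [hL]; positivity
  have hlple : lp ≤ L := by rw [hL]; nlinarith
  have hvol : max (μ (ball x L)) (μ (ball y L)) ≤
      ENNReal.ofReal (cstar * lam ^ n) * max (μ (ball x lp)) (μ (ball y lp)) := by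
    apply max_le
    · calc μ (ball x L) = μ (ball x (lam * lp)) := by rw [hL]
        _ ≤ ENNReal.ofReal (cstar * lam ^ n) * μ (ball x lp) := hgrowth x lp lam hlp hlam
        _ ≤ ENNReal.ofReal (cstar * lam ^ n) * max (μ (ball x lp)) (μ (ball y lp)) := by
            gcongr; exact le_max_left _ _
    · calc μ (ball y L) = μ (ball y (lam * lp)) := by rw [hL]
        _ ≤ ENNReal.ofReal (cstar * lam ^ n) * μ (ball y lp) := hgrowth y lp lam hlp hlam
        _ ≤ ENNReal.ofReal (cstar * lam ^ n) * max (μ (ball x lp)) (μ (ball y lp)) := by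
            gcongr; exact le_max_right _ _
  have hinv : (max (μ (ball x lp)) (μ (ball y lp)))⁻¹ ≤
      ENNReal.ofReal (cstar * lam ^ n) * (max (μ (ball x L)) (μ (ball y L)))⁻¹ :=
    enn_inv_scale' (lt_of_lt_of_le (hpos x L hLpos) (le_max_left _ _)).ne'
      (max_lt (hfin x L hLpos) (hfin y L hLpos)).ne hvol
  have hdist : (1 + dist x y / lp) ^ (-N) ≤ (1 + dist x y / L) ^ (-N) := by
    apply Real.rpow_le_rpow_of_nonpos
    · have : 0 ≤ dist x y / L := by positivity
      linarith
    · have : dist x y / L ≤ dist x y / lp := by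
        apply div_le_div_of_nonneg_left dist_nonneg hlp hlple
      linarith
    · linarith
  calc Dker μ lp N x y
      = (max (μ (ball x lp)) (μ (ball y lp)))⁻¹ *
          ENNReal.ofReal ((1 + dist x y / lp) ^ (-N)) := rfl
    _ ≤ (ENNReal.ofReal (cstar * lam ^ n) * (max (μ (ball x L)) (μ (ball y L)))⁻¹) *
          ENNReal.ofReal ((1 + dist x y / L) ^ (-N)) :=
        mul_le_mul' hinv (ENNReal.ofReal_le_ofReal hdist)
    _ = ENNReal.ofReal (cstar * lam ^ n) * Dker μ L N x y := by
        show _ = _ * ((max (μ (ball x L)) (μ (ball y L)))⁻¹ *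
          ENNReal.ofReal ((1 + dist x y / L) ^ (-N)))
        ring

lemma transfer_u (hn : 0 < n) (hCV : 1 ≤ CV)
    (hpos : ∀ (x : X) (r : ℝ), 0 < r → 0 < μ (ball x r))
    (hfin : ∀ (x : X) (r : ℝ), 0 < r → μ (ball x r) < ⊤)
    (hcomp : ∀ (x y : X) (r : ℝ), 0 < r →
      μ (ball x r) ≤ ENNReal.ofReal (CV * (1 + dist x y / r) ^ n) * μ (ball y r))
    (Λ : ℝ) (hΛ : 0 < Λ) (N M : ℝ) (hM : 0 < M) (hMN : M ≤ N) (x y u : X) :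
    Dker μ Λ N y u ≤ ENNReal.ofReal (CV * (1 + dist x y / Λ) ^ (M + n)) *
      Dker μ Λ M x u := by
  have hbxy := one_le_base Λ hΛ x y
  have hbxypos : (0:ℝ) < 1 + dist x y / Λ := by linarith
  have hdist : (1 + dist y u / Λ) ^ (-N) ≤
      (1 + dist x y / Λ) ^ M * (1 + dist x u / Λ) ^ (-M) :=
    rpow_transfer Λ hΛ M N hM.le hMN x y u
  have hvol : (max (μ (ball y Λ)) (μ (ball u Λ)))⁻¹ ≤
      ENNReal.ofReal (CV * (1 + dist x y / Λ) ^ n) *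
        (max (μ (ball x Λ)) (μ (ball u Λ)))⁻¹ :=
    vol_transfer μ n CV hn hCV hpos hfin hcomp Λ hΛ x y u
  calc Dker μ Λ N y u
      = (max (μ (ball y Λ)) (μ (ball u Λ)))⁻¹ *
          ENNReal.ofReal ((1 + dist y u / Λ) ^ (-N)) := rfl
    _ ≤ (ENNReal.ofReal (CV * (1 + dist x y / Λ) ^ n) *
          (max (μ (ball x Λ)) (μ (ball u Λ)))⁻¹) *
          ENNReal.ofReal ((1 + dist x y / Λ) ^ M * (1 + dist x u / Λ) ^ (-M)) :=
        mul_le_mul' hvol (ENNReal.ofReal_le_ofReal hdist)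
    _ = ENNReal.ofReal ((CV * (1 + dist x y / Λ) ^ n) * (1 + dist x y / Λ) ^ M) *
          ((max (μ (ball x Λ)) (μ (ball u Λ)))⁻¹ *
            ENNReal.ofReal ((1 + dist x u / Λ) ^ (-M))) := by
        rw [ENNReal.ofReal_mul (show (0:ℝ) ≤ (1 + dist x y / Λ) ^ M by positivity),
          ENNReal.ofReal_mul (show (0:ℝ) ≤ CV * (1 + dist x y / Λ) ^ n by positivity)]
        ring
    _ = ENNReal.ofReal (CV * (1 + dist x y / Λ) ^ (M + n)) * Dker μ Λ M x u := by
        congr 1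
        rw [mul_assoc, ← Real.rpow_add hbxypos, add_comm n M]
end Final


/-- For `N > 2n` and `ℓ ≥ k` in `ℤ`, there is a constant `C` such that
`∫_X D_{2^{-ℓ},N}(x,y) D_{2^{-k},N}(y,z) D_{2^{-k},N}(y,u) dμ(y)
  ≤ C · D_{2^{-k},(N-2n)/2}(x,z) D_{2^{-k},(N-2n)/2}(x,u)` for all `x,z,u`. -/
theorem stmt_4 {X : Type*} [MetricSpace X] [MeasurableSpace X] [BorelSpace X]
    (μ : Measure X) (n cstar CV : ℝ) (hn : 0 < n) (hcstar : 1 ≤ cstar) (hCV : 1 ≤ CV)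
    (hpos : ∀ (x : X) (r : ℝ), 0 < r → 0 < μ (ball x r))
    (hfin : ∀ (x : X) (r : ℝ), 0 < r → μ (ball x r) < ⊤)
    (hgrowth : ∀ (x : X) (r lam : ℝ), 0 < r → 1 ≤ lam →
      μ (ball x (lam * r)) ≤ ENNReal.ofReal (cstar * lam ^ n) * μ (ball x r))
    (hcomp : ∀ (x y : X) (r : ℝ), 0 < r →
      μ (ball x r) ≤ ENNReal.ofReal (CV * (1 + dist x y / r) ^ n) * μ (ball y r))
    (N : ℝ) (hN : 2 * n < N) (l k : ℤ) (hlk : k ≤ l) :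
    ∃ C : ℝ, 0 < C ∧ ∀ x z u : X,
      ∫⁻ y, Dker μ ((2:ℝ) ^ (-l)) N x y * Dker μ ((2:ℝ) ^ (-k)) N y z *
          Dker μ ((2:ℝ) ^ (-k)) N y u ∂μ ≤
        ENNReal.ofReal C * (Dker μ ((2:ℝ) ^ (-k)) ((N - 2 * n) / 2) x z *
          Dker μ ((2:ℝ) ^ (-k)) ((N - 2 * n) / 2) x u) := by
  have hNpos : 0 < N := by linarith
  set Λ : ℝ := (2:ℝ) ^ (-k) with hΛdef
  set lp : ℝ := (2:ℝ) ^ (-l) with hlpdef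
  have hΛ : 0 < Λ := zpow_pos two_pos _
  have hlp : 0 < lp := zpow_pos two_pos _
  set lam : ℝ := (2:ℝ) ^ (l - k) with hlamdef
  have hlampos : 0 < lam := zpow_pos two_pos _
  have hlam1 : 1 ≤ lam := by
    calc (1:ℝ) = (2:ℝ) ^ (0:ℤ) := (zpow_zero 2).symm
      _ ≤ (2:ℝ) ^ (l - k) := zpow_le_zpow_right₀ one_le_two (by omega)
  have hL : Λ = lam * lp := by
    rw [hlamdef, hlpdef, hΛdef, ← zpow_add₀ (two_ne_zero (α := ℝ))]
    congr 1
    ring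
  set M : ℝ := (N - 2 * n) / 2 with hMdef
  have hMpos : 0 < M := by rw [hMdef]; linarith
  have hMnN : M + n ≤ N := by rw [hMdef]; linarith
  have hNn : n < N - n := by linarith
  have hnMn : n < M + n := by linarith
  set c0 : ℝ := cstar * lam ^ n with hc0
  have hc0pos : 0 < c0 := by
    have : (0:ℝ) < lam ^ n := Real.rpow_pos_of_pos hlampos n
    rw [hc0]; nlinarith
  set CA1 : ℝ := cstar * 2 ^ (n + (N - n)) * (1 - 2 ^ (n - (N - n)))⁻¹ with hCA1
  set CA2 : ℝ := cstar * 2 ^ (n + (M + n)) * (1 - 2 ^ (n - (M + n)))⁻¹ with hCA2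
  have hCA1pos : 0 < CA1 := by
    have h1 : (2:ℝ) ^ (n - (N - n)) < 1 :=
      Real.rpow_lt_one_of_one_lt_of_neg one_lt_two (by linarith)
    have h2 : (0:ℝ) < 2 ^ (n + (N - n)) := Real.rpow_pos_of_pos two_pos _
    rw [hCA1]
    have h3 : (0:ℝ) < (1 - 2 ^ (n - (N - n)))⁻¹ := by
      apply inv_pos.2; linarith
    exact mul_pos (mul_pos (by linarith : (0:ℝ) < cstar) h2) h3
  have hCA2pos : 0 < CA2 := by
    have h1 : (2:ℝ) ^ (n - (M + n)) < 1 :=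
      Real.rpow_lt_one_of_one_lt_of_neg one_lt_two (by linarith)
    have h2 : (0:ℝ) < 2 ^ (n + (M + n)) := Real.rpow_pos_of_pos two_pos _
    rw [hCA2]
    have h3 : (0:ℝ) < (1 - 2 ^ (n - (M + n)))⁻¹ := by
      apply inv_pos.2; linarith
    exact mul_pos (mul_pos (by linarith : (0:ℝ) < cstar) h2) h3
  have h2Mn : (0:ℝ) < 2 ^ (M + n) := Real.rpow_pos_of_pos two_pos _
  set Cbig : ℝ := c0 * (CV * (2 ^ (M + n) * (CV * CV))) with hCbig
  have hCbigpos : 0 < Cbig := by rw [hCbig]; positivity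
  refine ⟨Cbig * (CA1 + CA2), by positivity, fun x z u => ?_⟩
  set P : ℝ≥0∞ := Dker μ Λ M x z with hP
  set Q : ℝ≥0∞ := Dker μ Λ M x u with hQ
  have hPne : P ≠ ⊤ := by
    rw [hP]
    apply ENNReal.mul_ne_top
    · exact ENNReal.inv_ne_top.2 (lt_of_lt_of_le (hpos x Λ hΛ) (le_max_left _ _)).ne'
    · exact ENNReal.ofReal_ne_top
  have hQne : Q ≠ ⊤ := by
    rw [hQ]
    apply ENNReal.mul_ne_top
    · exact ENNReal.inv_ne_top.2 (lt_of_lt_of_le (hpos x Λ hΛ) (le_max_left _ _)).ne'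
    · exact ENNReal.ofReal_ne_top
  set h1 : X → ℝ≥0∞ := fun y => (max (μ (ball z Λ)) (μ (ball y Λ)))⁻¹ *
    ENNReal.ofReal ((1 + dist z y / Λ) ^ (-(N - n))) with hh1
  set h2 : X → ℝ≥0∞ := fun y => (max (μ (ball x Λ)) (μ (ball y Λ)))⁻¹ *
    ENNReal.ofReal ((1 + dist x y / Λ) ^ (-(M + n))) with hh2
  set K : ℝ≥0∞ := ENNReal.ofReal Cbig * (P * Q) with hK
  have hKne : K ≠ ⊤ := by
    rw [hK]
    exact ENNReal.mul_ne_top ENNReal.ofReal_ne_top (ENNReal.mul_ne_top hPne hQne)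
  -- pointwise bound
  have hpt : ∀ y : X, Dker μ lp N x y * Dker μ Λ N y z * Dker μ Λ N y u ≤
      K * (h1 y + h2 y) := by
    intro y
    have hbxy := one_le_base Λ hΛ x y
    have hbxypos : (0:ℝ) < 1 + dist x y / Λ := by linarith
    have a1 : Dker μ lp N x y ≤ ENNReal.ofReal c0 * Dker μ Λ N x y :=
      scale_up μ n cstar hn hcstar hpos hfin hgrowth lp Λ lam hlp hlam1 hL N hNpos.le x y
    have a2 : Dker μ Λ N y u ≤
        ENNReal.ofReal (CV * (1 + dist x y / Λ) ^ (M + n)) * Dker μ Λ M x u :=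
      transfer_u μ n CV hn hCV hpos hfin hcomp Λ hΛ N M hMpos (by linarith) x y u
    have a3 : Dker μ Λ N x y * ENNReal.ofReal ((1 + dist x y / Λ) ^ (M + n)) =
        Dker μ Λ (M + n) x y := by
      show (max (μ (ball x Λ)) (μ (ball y Λ)))⁻¹ *
          ENNReal.ofReal ((1 + dist x y / Λ) ^ (-N)) *
          ENNReal.ofReal ((1 + dist x y / Λ) ^ (M + n)) = _
      rw [mul_assoc, ← ENNReal.ofReal_mul
        (show (0:ℝ) ≤ (1 + dist x y / Λ) ^ (-N) by positivity),
        ← Real.rpow_add hbxypos]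
      show _ = (max (μ (ball x Λ)) (μ (ball y Λ)))⁻¹ *
        ENNReal.ofReal ((1 + dist x y / Λ) ^ (-(M + n)))
      congr 2
      rw [hMdef]; ring
    have a4 : Dker μ Λ (M + n) x y * Dker μ Λ N y z ≤
        ENNReal.ofReal (2 ^ (M + n) * (CV * CV)) * P * (h1 y + h2 y) :=
      split_bound μ n CV hn hCV hpos hfin hcomp Λ hΛ N M hMpos hMnN x z y
    calc Dker μ lp N x y * Dker μ Λ N y z * Dker μ Λ N y u
        ≤ (ENNReal.ofReal c0 * Dker μ Λ N x y) * Dker μ Λ N y z *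
            (ENNReal.ofReal (CV * (1 + dist x y / Λ) ^ (M + n)) * Q) :=
          mul_le_mul' (mul_le_mul' a1 le_rfl) a2
      _ = ENNReal.ofReal c0 * ENNReal.ofReal CV * Q *
            ((Dker μ Λ N x y * ENNReal.ofReal ((1 + dist x y / Λ) ^ (M + n))) *
              Dker μ Λ N y z) := by
          rw [ENNReal.ofReal_mul (show (0:ℝ) ≤ CV by linarith)]
          ring
      _ = ENNReal.ofReal c0 * ENNReal.ofReal CV * Q *
            (Dker μ Λ (M + n) x y * Dker μ Λ N y z) := by rw [a3]
      _ ≤ ENNReal.ofReal c0 * ENNReal.ofReal CV * Q *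
            (ENNReal.ofReal (2 ^ (M + n) * (CV * CV)) * P * (h1 y + h2 y)) :=
          mul_le_mul' le_rfl a4
      _ = K * (h1 y + h2 y) := by
          rw [hK, hCbig,
            ENNReal.ofReal_mul (show (0:ℝ) ≤ c0 by linarith),
            ENNReal.ofReal_mul (show (0:ℝ) ≤ CV by linarith)]
          ring
  -- measurability of h1
  have hmeas1 : Measurable h1 := by
    apply Measurable.mul
    · exact (measurable_const.max (meas_ball μ Λ)).inv
    · apply Continuous.measurable
      apply ENNReal.continuous_ofReal.comp
      apply Continuous.rpow_const
      · exact continuous_const.add ((continuous_const.dist continuous_id).div_const Λ)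
      · intro y
        exact Or.inl (ne_of_gt (lt_of_lt_of_le zero_lt_one (one_le_base Λ hΛ z y)))
  have int1 : ∫⁻ y, h1 y ∂μ ≤ ENNReal.ofReal CA1 :=
    lemA μ n cstar hn hcstar hpos hfin hgrowth (N - n) hNn Λ hΛ z
  have int2 : ∫⁻ y, h2 y ∂μ ≤ ENNReal.ofReal CA2 :=
    lemA μ n cstar hn hcstar hpos hfin hgrowth (M + n) hnMn Λ hΛ x
  calc ∫⁻ y, Dker μ lp N x y * Dker μ Λ N y z * Dker μ Λ N y u ∂μ
      ≤ ∫⁻ y, K * (h1 y + h2 y) ∂μ := lintegral_mono hpt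
    _ = K * ∫⁻ y, (h1 y + h2 y) ∂μ := lintegral_const_mul' K _ hKne
    _ = K * ((∫⁻ y, h1 y ∂μ) + ∫⁻ y, h2 y ∂μ) := by
        rw [lintegral_add_left hmeas1]
    _ ≤ K * (ENNReal.ofReal CA1 + ENNReal.ofReal CA2) :=
        mul_le_mul' le_rfl (add_le_add int1 int2)
    _ = ENNReal.ofReal (Cbig * (CA1 + CA2)) * (P * Q) := by
        rw [← ENNReal.ofReal_add (by linarith) (by linarith), hK,
          ENNReal.ofReal_mul (show (0:ℝ) ≤ Cbig by linarith)]
        ring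
end

section
/- Let N > 2n and let ℓ, k ∈ ℤ with k ≥ ℓ. Then there is a constant C, depending only on the doubling constants, n and N, such that ∫_X D_{2^{−ℓ},N}(x,y) D_{2^{−k},N}(y,z) D_{2^{−k},N}(y,u) dμ(y) ≤ C · D_{2^{−ℓ},(N−2n)/2}(x,z) · D_{2^{−k},(N−2n)/2}(z,u) for all x, z, u ∈ X. -/
open MeasureTheory Metric
open scoped ENNReal

/-- helper: from `a ≤ c * b` deduce `b⁻¹ ≤ c * a⁻¹` in `ℝ≥0∞`. -/
lemma inv_le_mul_inv_of_le {a b c : ℝ≥0∞} (hc0 : c ≠ 0) (hct : c ≠ ⊤)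
    (h : a ≤ c * b) : b⁻¹ ≤ c * a⁻¹ := by
  have h1 : (c * b)⁻¹ ≤ a⁻¹ := ENNReal.inv_le_inv.mpr h
  have h2 : (c * b)⁻¹ = c⁻¹ * b⁻¹ := ENNReal.mul_inv (Or.inl hc0) (Or.inl hct)
  calc b⁻¹ = c * (c⁻¹ * b⁻¹) := by
        rw [← mul_assoc, ENNReal.mul_inv_cancel hc0 hct, one_mul]
    _ ≤ c * a⁻¹ := by
        apply mul_le_mul_right
        rw [← h2]; exact h1

/-- The real scalar inequality for distance factors. -/
lemma dist_factor_bound {A B C p q n N : ℝ} (hA : 1 ≤ A) (hB : 1 ≤ B) (hC : 1 ≤ C)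
    (hp : 1 ≤ p) (hq : 1 ≤ q) (hpAB : p ≤ A * B) (hqBC : q ≤ B * C)
    (hn : 0 < n) (hN : 2 * n < N) :
    A ^ (-N) * B ^ (-N) * C ^ (-N) * (A ^ n * p ^ n * q ^ n) ≤
      p ^ (-((N - 2*n)/2)) * q ^ (-((N - 2*n)/2)) * C ^ (-(N/2)) := by
  have hA0 : (0:ℝ) < A := lt_of_lt_of_le one_pos hA
  have hB0 : (0:ℝ) < B := lt_of_lt_of_le one_pos hB
  have hC0 : (0:ℝ) < C := lt_of_lt_of_le one_pos hC
  have hp0 : (0:ℝ) < p := lt_of_lt_of_le one_pos hp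
  have hq0 : (0:ℝ) < q := lt_of_lt_of_le one_pos hq
  have hNeg : -(N/2) ≤ 0 := by linarith
  have h1 : A ^ (-(N/2)) * B ^ (-(N/2)) ≤ p ^ (-(N/2)) := by
    have := Real.rpow_le_rpow_of_nonpos hp0 hpAB hNeg
    rwa [Real.mul_rpow hA0.le hB0.le] at this
  have h2 : B ^ (-(N/2)) * C ^ (-(N/2)) ≤ q ^ (-(N/2)) := by
    have := Real.rpow_le_rpow_of_nonpos hq0 hqBC hNeg
    rwa [Real.mul_rpow hB0.le hC0.le] at this
  have h3 : A ^ (n - N) ≤ A ^ (-(N/2)) := Real.rpow_le_rpow_of_exponent_le hA (by linarith)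
  have key : A ^ (-N) * B ^ (-N) * C ^ (-N) * A ^ n ≤
      p ^ (-(N/2)) * q ^ (-(N/2)) * C ^ (-(N/2)) := by
    have eA : A ^ (-N) * A ^ n = A ^ (n - N) := by
      rw [← Real.rpow_add hA0]; ring_nf
    have eB : B ^ (-N) = B ^ (-(N/2)) * B ^ (-(N/2)) := by
      rw [← Real.rpow_add hB0]; ring_nf
    have eC : C ^ (-N) = C ^ (-(N/2)) * C ^ (-(N/2)) := by
      rw [← Real.rpow_add hC0]; ring_nf
    calc A ^ (-N) * B ^ (-N) * C ^ (-N) * A ^ n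
        = A ^ (n - N) * (B ^ (-N) * C ^ (-N)) := by rw [← eA]; ring
      _ ≤ A ^ (-(N/2)) * (B ^ (-N) * C ^ (-N)) := by
          apply mul_le_mul_of_nonneg_right h3
          positivity
      _ = (A ^ (-(N/2)) * B ^ (-(N/2))) * (B ^ (-(N/2)) * C ^ (-(N/2))) * C ^ (-(N/2)) := by
          rw [eB, eC]; ring
      _ ≤ p ^ (-(N/2)) * q ^ (-(N/2)) * C ^ (-(N/2)) := by
          apply mul_le_mul_of_nonneg_right _ (by positivity)
          exact mul_le_mul h1 h2 (by positivity) (by positivity)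
  have ep : p ^ (-(N/2)) * p ^ n = p ^ (-((N - 2*n)/2)) := by
    rw [← Real.rpow_add hp0]; ring_nf
  have eq' : q ^ (-(N/2)) * q ^ n = q ^ (-((N - 2*n)/2)) := by
    rw [← Real.rpow_add hq0]; ring_nf
  calc A ^ (-N) * B ^ (-N) * C ^ (-N) * (A ^ n * p ^ n * q ^ n)
      = (A ^ (-N) * B ^ (-N) * C ^ (-N) * A ^ n) * (p ^ n * q ^ n) := by ring
    _ ≤ (p ^ (-(N/2)) * q ^ (-(N/2)) * C ^ (-(N/2))) * (p ^ n * q ^ n) := by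
        apply mul_le_mul_of_nonneg_right key (by positivity)
    _ = (p ^ (-(N/2)) * p ^ n) * (q ^ (-(N/2)) * q ^ n) * C ^ (-(N/2)) := by ring
    _ = p ^ (-((N - 2*n)/2)) * q ^ (-((N - 2*n)/2)) * C ^ (-(N/2)) := by rw [ep, eq']


set_option maxHeartbeats 1000000 in
lemma key_integral {X : Type*} [MetricSpace X] [MeasurableSpace X] [BorelSpace X]
    (μ : Measure X) (n cstar : ℝ) (hn : 0 < n) (hcstar : 1 ≤ cstar)
    (hgrowth : ∀ (x : X) (r lam : ℝ), 0 < r → 1 ≤ lam →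
      μ (ball x (lam * r)) ≤ ENNReal.ofReal (cstar * lam ^ n) * μ (ball x r))
    (M : ℝ) (hM : n < M) (lam : ℝ) (hlam : 0 < lam) (u : X) :
    ∫⁻ y, ENNReal.ofReal ((1 + dist y u / lam) ^ (-M)) ∂μ ≤
      ENNReal.ofReal (1 + cstar * 2 ^ n * (1 - 2 ^ (n - M))⁻¹) * μ (ball u lam) := by
  set f : X → ℝ≥0∞ := fun y => ENNReal.ofReal ((1 + dist y u / lam) ^ (-M)) with hf
  set S : ℕ → Set X := fun j => Nat.rec (ball u lam)
    (fun j _ => ball u (2 ^ (j+1) * lam) \ ball u (2 ^ j * lam)) j with hS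
  have hS0 : S 0 = ball u lam := rfl
  have hSsucc : ∀ j : ℕ, S (j+1) = ball u (2 ^ (j+1) * lam) \ ball u (2 ^ j * lam) :=
    fun j => rfl
  have hcover : (Set.univ : Set X) ⊆ ⋃ j, S j := by
    intro y _
    have hex : ∃ j : ℕ, y ∈ ball u ((2:ℝ) ^ j * lam) := by
      obtain ⟨j, hj⟩ := pow_unbounded_of_one_lt (dist y u / lam) (one_lt_two (α := ℝ))
      exact ⟨j, by
        simp only [mem_ball, dist_comm y u]
        rw [div_lt_iff₀ hlam] at hj
        rw [dist_comm]
        linarith [hj]⟩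
    classical
    rcases Nat.eq_zero_or_pos (Nat.find hex) with h0 | hpos'
    · refine Set.mem_iUnion.mpr ⟨0, ?_⟩
      have hjmem := Nat.find_spec hex
      rw [h0] at hjmem
      rw [hS0]
      simpa using hjmem
    · obtain ⟨i, hi⟩ := Nat.exists_eq_succ_of_ne_zero hpos'.ne'
      refine Set.mem_iUnion.mpr ⟨i + 1, ?_⟩
      rw [hSsucc]
      have hspec := Nat.find_spec hex
      rw [hi] at hspec
      exact ⟨hspec, Nat.find_min hex (by omega)⟩
  have hterm0 : ∫⁻ y in S 0, f y ∂μ ≤ μ (ball u lam) := by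
    rw [hS0]
    calc ∫⁻ y in ball u lam, f y ∂μ ≤ ∫⁻ _ in ball u lam, 1 ∂μ := by
          apply setLIntegral_mono measurable_const
          intro y _
          simp only [hf]
          rw [← ENNReal.ofReal_one]
          apply ENNReal.ofReal_le_ofReal
          apply Real.rpow_le_one_of_one_le_of_nonpos
          · have : 0 ≤ dist y u / lam := by positivity
            linarith
          · linarith
      _ = μ (ball u lam) := by rw [setLIntegral_const, one_mul]
  have htermS : ∀ j : ℕ, ∫⁻ y in S (j+1), f y ∂μ ≤
      ENNReal.ofReal (cstar * 2 ^ n * ((2:ℝ) ^ (n - M)) ^ j) * μ (ball u lam) := by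
    intro j
    rw [hSsucc]
    have hb : ∀ y ∈ ball u ((2:ℝ) ^ (j+1) * lam) \ ball u ((2:ℝ) ^ j * lam),
        f y ≤ ENNReal.ofReal (((2:ℝ) ^ j) ^ (-M)) := by
      intro y hy
      have hd : (2:ℝ) ^ j * lam ≤ dist y u := by
        have := hy.2
        simp only [mem_ball, not_lt, dist_comm] at this
        rwa [dist_comm]
      have h2j : (0:ℝ) < (2:ℝ)^j := by positivity
      have hle : (2:ℝ) ^ j ≤ 1 + dist y u / lam := by
        rw [← mul_le_mul_iff_of_pos_right hlam]
        have : 0 ≤ dist y u := dist_nonneg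
        calc (2:ℝ)^j * lam ≤ dist y u := hd
          _ ≤ (1 + dist y u / lam) * lam := by
              rw [add_mul, one_mul, div_mul_cancel₀ _ hlam.ne']; linarith
      exact ENNReal.ofReal_le_ofReal
        (Real.rpow_le_rpow_of_nonpos h2j hle (by linarith))
    calc ∫⁻ y in ball u ((2:ℝ) ^ (j+1) * lam) \ ball u ((2:ℝ) ^ j * lam), f y ∂μ
        ≤ ∫⁻ _ in ball u ((2:ℝ) ^ (j+1) * lam) \ ball u ((2:ℝ) ^ j * lam),
            ENNReal.ofReal (((2:ℝ) ^ j) ^ (-M)) ∂μ :=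
          setLIntegral_mono measurable_const hb
      _ = ENNReal.ofReal (((2:ℝ) ^ j) ^ (-M)) *
            μ (ball u ((2:ℝ) ^ (j+1) * lam) \ ball u ((2:ℝ) ^ j * lam)) := by
          rw [setLIntegral_const]
      _ ≤ ENNReal.ofReal (((2:ℝ) ^ j) ^ (-M)) * μ (ball u ((2:ℝ) ^ (j+1) * lam)) := by
          apply mul_le_mul_right
          exact measure_mono Set.diff_subset
      _ ≤ ENNReal.ofReal (((2:ℝ) ^ j) ^ (-M)) *
            (ENNReal.ofReal (cstar * ((2:ℝ)^(j+1)) ^ n) * μ (ball u lam)) := by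
          apply mul_le_mul_right
          exact hgrowth u lam ((2:ℝ)^(j+1)) hlam (one_le_pow₀ one_le_two)
      _ = ENNReal.ofReal (((2:ℝ) ^ j) ^ (-M) * (cstar * ((2:ℝ)^(j+1)) ^ n)) *
            μ (ball u lam) := by
          rw [← mul_assoc, ← ENNReal.ofReal_mul (by positivity)]
      _ = ENNReal.ofReal (cstar * 2 ^ n * ((2:ℝ) ^ (n - M)) ^ j) * μ (ball u lam) := by
          congr 1
          apply congrArg
          rw [← Real.rpow_natCast (2:ℝ) j, ← Real.rpow_natCast (2:ℝ) (j+1),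
            ← Real.rpow_natCast ((2:ℝ) ^ (n - M)) j,
            ← Real.rpow_mul (by norm_num), ← Real.rpow_mul (by norm_num),
            ← Real.rpow_mul (by norm_num)]
          push_cast
          rw [mul_comm ((2:ℝ) ^ ((j:ℝ) * -M)) (cstar * _), mul_assoc,
            ← Real.rpow_add two_pos, mul_assoc, ← Real.rpow_add two_pos]
          congr 1
          ring
  -- assemble
  have hsum : ∫⁻ y, f y ∂μ ≤ ∑' j : ℕ, ∫⁻ y in S j, f y ∂μ := by
    calc ∫⁻ y, f y ∂μ = ∫⁻ y in Set.univ, f y ∂μ := (setLIntegral_univ f).symm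
      _ ≤ ∫⁻ y in ⋃ j, S j, f y ∂μ := lintegral_mono_set hcover
      _ ≤ ∑' j : ℕ, ∫⁻ y in S j, f y ∂μ := lintegral_iUnion_le S f
  have hr1 : (2:ℝ) ^ (n - M) < 1 := by
    apply Real.rpow_lt_one_of_one_lt_of_neg one_lt_two (by linarith)
  have hr0 : (0:ℝ) < (2:ℝ) ^ (n - M) := Real.rpow_pos_of_pos two_pos _
  have hgeo : ∑' j : ℕ, (ENNReal.ofReal ((2:ℝ) ^ (n - M))) ^ j =
      ENNReal.ofReal ((1 - (2:ℝ) ^ (n - M))⁻¹) := by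
    rw [ENNReal.tsum_geometric]
    rw [← ENNReal.ofReal_one, ← ENNReal.ofReal_sub _ hr0.le,
      ENNReal.ofReal_inv_of_pos (by linarith)]
  calc ∫⁻ y, f y ∂μ ≤ ∑' j : ℕ, ∫⁻ y in S j, f y ∂μ := hsum
    _ = ∫⁻ y in S 0, f y ∂μ + ∑' j : ℕ, ∫⁻ y in S (j+1), f y ∂μ :=
        tsum_eq_zero_add' ENNReal.summable
    _ ≤ μ (ball u lam) +
        ∑' j : ℕ, ENNReal.ofReal (cstar * 2 ^ n * ((2:ℝ) ^ (n - M)) ^ j) * μ (ball u lam) := by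
        exact add_le_add hterm0 (ENNReal.tsum_le_tsum htermS)
    _ = μ (ball u lam) +
        (∑' j : ℕ, ENNReal.ofReal (cstar * 2 ^ n * ((2:ℝ) ^ (n - M)) ^ j)) * μ (ball u lam) := by
        rw [ENNReal.tsum_mul_right]
    _ = ENNReal.ofReal (1 + cstar * 2 ^ n * (1 - 2 ^ (n - M))⁻¹) * μ (ball u lam) := by
        have : ∑' j : ℕ, ENNReal.ofReal (cstar * 2 ^ n * ((2:ℝ) ^ (n - M)) ^ j) =
            ENNReal.ofReal (cstar * 2 ^ n * (1 - 2 ^ (n - M))⁻¹) := by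
          have h2n : (0:ℝ) < (2:ℝ) ^ n := Real.rpow_pos_of_pos two_pos _
          calc ∑' j : ℕ, ENNReal.ofReal (cstar * 2 ^ n * ((2:ℝ) ^ (n - M)) ^ j)
              = ∑' j : ℕ, ENNReal.ofReal (cstar * 2 ^ n) *
                  (ENNReal.ofReal ((2:ℝ) ^ (n - M))) ^ j := by
                congr 1; funext j
                rw [← ENNReal.ofReal_pow hr0.le, ← ENNReal.ofReal_mul (by positivity)]
            _ = ENNReal.ofReal (cstar * 2 ^ n) * ENNReal.ofReal ((1 - (2:ℝ) ^ (n - M))⁻¹) := by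
                rw [ENNReal.tsum_mul_left, hgeo]
            _ = ENNReal.ofReal (cstar * 2 ^ n * (1 - 2 ^ (n - M))⁻¹) := by
                rw [← ENNReal.ofReal_mul (by positivity)]
        rw [this]
        have hnn : (0:ℝ) ≤ cstar * 2 ^ n * (1 - 2 ^ (n - M))⁻¹ := by
          apply mul_nonneg (by positivity)
          exact inv_nonneg.mpr (by linarith)
        have hco : (1:ℝ≥0∞) + ENNReal.ofReal (cstar * 2 ^ n * (1 - 2 ^ (n - M))⁻¹) =
            ENNReal.ofReal (1 + cstar * 2 ^ n * (1 - 2 ^ (n - M))⁻¹) := by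
          rw [← ENNReal.ofReal_one, ← ENNReal.ofReal_add zero_le_one hnn]
        rw [← hco, add_mul, one_mul]


lemma ofReal_prod6 {a b c d e f : ℝ} (ha : 0 ≤ a) (hb : 0 ≤ b) (hc : 0 ≤ c)
    (hd : 0 ≤ d) (he : 0 ≤ e) :
    ENNReal.ofReal a * ENNReal.ofReal b * ENNReal.ofReal c * ENNReal.ofReal d *
      ENNReal.ofReal e * ENNReal.ofReal f = ENNReal.ofReal (a*b*c*d*e*f) := by
  rw [← ENNReal.ofReal_mul ha, ← ENNReal.ofReal_mul (mul_nonneg ha hb),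
    ← ENNReal.ofReal_mul (mul_nonneg (mul_nonneg ha hb) hc),
    ← ENNReal.ofReal_mul (mul_nonneg (mul_nonneg (mul_nonneg ha hb) hc) hd),
    ← ENNReal.ofReal_mul (mul_nonneg (mul_nonneg (mul_nonneg (mul_nonneg ha hb) hc) hd) he)]

lemma ofReal_prod4 {a b c d : ℝ} (ha : 0 ≤ a) (hb : 0 ≤ b) (hc : 0 ≤ c) :
    ENNReal.ofReal a * ENNReal.ofReal b * ENNReal.ofReal c * ENNReal.ofReal d =
      ENNReal.ofReal (a*b*c*d) := by
  rw [← ENNReal.ofReal_mul ha, ← ENNReal.ofReal_mul (mul_nonneg ha hb),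
    ← ENNReal.ofReal_mul (mul_nonneg (mul_nonneg ha hb) hc)]


/-- For `N > 2n` and `k ≥ ℓ` in `ℤ`, there is a constant `C` such that
`∫_X D_{2^{-ℓ},N}(x,y) D_{2^{-k},N}(y,z) D_{2^{-k},N}(y,u) dμ(y)
  ≤ C · D_{2^{-ℓ},(N-2n)/2}(x,z) D_{2^{-k},(N-2n)/2}(z,u)` for all `x,z,u`. -/
theorem stmt_5 {X : Type*} [MetricSpace X] [MeasurableSpace X] [BorelSpace X]
    (μ : Measure X) (n cstar CV : ℝ) (hn : 0 < n) (hcstar : 1 ≤ cstar) (hCV : 1 ≤ CV)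
    (hpos : ∀ (x : X) (r : ℝ), 0 < r → 0 < μ (ball x r))
    (hfin : ∀ (x : X) (r : ℝ), 0 < r → μ (ball x r) < ⊤)
    (hgrowth : ∀ (x : X) (r lam : ℝ), 0 < r → 1 ≤ lam →
      μ (ball x (lam * r)) ≤ ENNReal.ofReal (cstar * lam ^ n) * μ (ball x r))
    (hcomp : ∀ (x y : X) (r : ℝ), 0 < r →
      μ (ball x r) ≤ ENNReal.ofReal (CV * (1 + dist x y / r) ^ n) * μ (ball y r))
    (N : ℝ) (hN : 2 * n < N) (l k : ℤ) (hlk : l ≤ k) :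
    ∃ C : ℝ, 0 < C ∧ ∀ x z u : X,
      ∫⁻ y, Dker μ ((2:ℝ) ^ (-l)) N x y * Dker μ ((2:ℝ) ^ (-k)) N y z *
          Dker μ ((2:ℝ) ^ (-k)) N y u ∂μ ≤
        ENNReal.ofReal C * (Dker μ ((2:ℝ) ^ (-l)) ((N - 2 * n) / 2) x z *
          Dker μ ((2:ℝ) ^ (-k)) ((N - 2 * n) / 2) z u) := by
  set ll : ℝ := (2:ℝ) ^ (-l) with hll
  set lk : ℝ := (2:ℝ) ^ (-k) with hlk'
  have hll0 : 0 < ll := zpow_pos two_pos _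
  have hlk0 : 0 < lk := zpow_pos two_pos _
  have hkl : lk ≤ ll := zpow_le_zpow_right₀ one_le_two (neg_le_neg hlk)
  set Cint : ℝ := 1 + cstar * 2 ^ n * (1 - 2 ^ (n - N/2))⁻¹ with hCint
  have hr1 : (2:ℝ) ^ (n - N/2) < 1 :=
    Real.rpow_lt_one_of_one_lt_of_neg one_lt_two (by linarith)
  have hCintnn : 0 ≤ cstar * 2 ^ n * (1 - 2 ^ (n - N/2))⁻¹ := by
    apply mul_nonneg (by positivity)
    exact inv_nonneg.mpr (by linarith)
  have hCint0 : 0 < Cint := by rw [hCint]; linarith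
  refine ⟨CV ^ 3 * Cint, by positivity, fun x z u => ?_⟩
  -- notation
  set N' : ℝ := (N - 2 * n) / 2 with hN'
  set Vuk : ℝ≥0∞ := μ (ball u lk) with hVuk
  set K : ℝ≥0∞ := ENNReal.ofReal (CV ^ 3) * Dker μ ll N' x z * Dker μ lk N' z u * Vuk⁻¹
    with hK
  have hVuk0 : Vuk ≠ 0 := (hpos u lk hlk0).ne'
  have hVukt : Vuk ≠ ⊤ := (hfin u lk hlk0).ne
  -- the pointwise bound
  have hpt : ∀ y : X, Dker μ ll N x y * Dker μ lk N y z * Dker μ lk N y u ≤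
      K * ENNReal.ofReal ((1 + dist y u / lk) ^ (-(N/2))) := by
    intro y
    set A : ℝ := 1 + dist x y / ll with hA'
    set B : ℝ := 1 + dist y z / lk with hB'
    set Cc : ℝ := 1 + dist y u / lk with hCc'
    set p : ℝ := 1 + dist x z / ll with hp'
    set q : ℝ := 1 + dist z u / lk with hq'
    have hA : 1 ≤ A := le_add_of_nonneg_right (by positivity)
    have hB : 1 ≤ B := le_add_of_nonneg_right (by positivity)
    have hC : 1 ≤ Cc := le_add_of_nonneg_right (by positivity)
    have hp : 1 ≤ p := le_add_of_nonneg_right (by positivity)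
    have hq : 1 ≤ q := le_add_of_nonneg_right (by positivity)
    have hpAB : p ≤ A * B := by
      have h1 : dist x z / ll ≤ dist x y / ll + dist y z / ll := by
        rw [← add_div]
        exact div_le_div_of_nonneg_right (dist_triangle x y z) hll0.le
      have h2 : dist y z / ll ≤ dist y z / lk :=
        div_le_div_of_nonneg_left dist_nonneg hlk0 hkl
      have ha : 0 ≤ dist x y / ll := by positivity
      have hb : 0 ≤ dist y z / lk := by positivity
      rw [hp', hA', hB']
      nlinarith [mul_nonneg ha hb]
    have hqBC : q ≤ B * Cc := by
      have h1 : dist z u / lk ≤ dist y z / lk + dist y u / lk := by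
        rw [← add_div]
        apply div_le_div_of_nonneg_right ?_ hlk0.le
        rw [dist_comm y z]
        exact dist_triangle z y u
      have ha : 0 ≤ dist y z / lk := by positivity
      have hb : 0 ≤ dist y u / lk := by positivity
      rw [hq', hB', hCc']
      nlinarith [mul_nonneg ha hb]
    -- volume bounds
    have c1pos : (0:ℝ) < CV * A ^ n := by positivity
    have c2pos : (0:ℝ) < CV * p ^ n := by positivity
    have c3pos : (0:ℝ) < CV * q ^ n := by positivity
    have hv1 : (max (μ (ball x ll)) (μ (ball y ll)))⁻¹ ≤
        ENNReal.ofReal (CV * A ^ n) * (ENNReal.ofReal (CV * p ^ n) *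
          (max (μ (ball x ll)) (μ (ball z ll)))⁻¹) := by
      have s1 : (max (μ (ball x ll)) (μ (ball y ll)))⁻¹ ≤ (μ (ball y ll))⁻¹ :=
        ENNReal.inv_le_inv.mpr (le_max_right _ _)
      have s2 : (μ (ball y ll))⁻¹ ≤ ENNReal.ofReal (CV * A ^ n) * (μ (ball x ll))⁻¹ :=
        inv_le_mul_inv_of_le (ENNReal.ofReal_pos.mpr c1pos).ne'
          ENNReal.ofReal_ne_top (hcomp x y ll hll0)
      have s3 : (μ (ball x ll))⁻¹ ≤ ENNReal.ofReal (CV * p ^ n) *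
          (max (μ (ball x ll)) (μ (ball z ll)))⁻¹ := by
        apply inv_le_mul_inv_of_le (ENNReal.ofReal_pos.mpr c2pos).ne'
          ENNReal.ofReal_ne_top
        apply max_le
        · exact le_mul_of_one_le_left' (ENNReal.one_le_ofReal.mpr
            (le_trans hCV (le_mul_of_one_le_right (by linarith) (Real.one_le_rpow hp hn.le))))
        · have := hcomp z x ll hll0
          rwa [dist_comm z x] at this
      calc (max (μ (ball x ll)) (μ (ball y ll)))⁻¹ ≤ (μ (ball y ll))⁻¹ := s1
        _ ≤ ENNReal.ofReal (CV * A ^ n) * (μ (ball x ll))⁻¹ := s2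
        _ ≤ ENNReal.ofReal (CV * A ^ n) * (ENNReal.ofReal (CV * p ^ n) *
            (max (μ (ball x ll)) (μ (ball z ll)))⁻¹) := mul_le_mul_right s3 _
    have hv2 : (max (μ (ball y lk)) (μ (ball z lk)))⁻¹ ≤
        ENNReal.ofReal (CV * q ^ n) * (max (μ (ball z lk)) (μ (ball u lk)))⁻¹ := by
      have s1 : (max (μ (ball y lk)) (μ (ball z lk)))⁻¹ ≤ (μ (ball z lk))⁻¹ :=
        ENNReal.inv_le_inv.mpr (le_max_right _ _)
      refine s1.trans ?_
      apply inv_le_mul_inv_of_le (ENNReal.ofReal_pos.mpr c3pos).ne'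
        ENNReal.ofReal_ne_top
      apply max_le
      · exact le_mul_of_one_le_left' (ENNReal.one_le_ofReal.mpr
          (le_trans hCV (le_mul_of_one_le_right (by linarith) (Real.one_le_rpow hq hn.le))))
      · have := hcomp u z lk hlk0
        rwa [dist_comm u z] at this
    have hv3 : (max (μ (ball y lk)) (μ (ball u lk)))⁻¹ ≤ Vuk⁻¹ :=
      ENNReal.inv_le_inv.mpr (le_max_right _ _)
    -- the distance factor bound in ℝ≥0∞
    have hdr : A ^ (-N) * B ^ (-N) * Cc ^ (-N) * (CV * A ^ n) * (CV * p ^ n) * (CV * q ^ n)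
        ≤ CV ^ 3 * (p ^ (-N')) * (q ^ (-N')) * (Cc ^ (-(N/2))) := by
      have base := dist_factor_bound hA hB hC hp hq hpAB hqBC hn hN
      calc A ^ (-N) * B ^ (-N) * Cc ^ (-N) * (CV * A ^ n) * (CV * p ^ n) * (CV * q ^ n)
          = CV ^ 3 * (A ^ (-N) * B ^ (-N) * Cc ^ (-N) * (A ^ n * p ^ n * q ^ n)) := by ring
        _ ≤ CV ^ 3 * (p ^ (-((N - 2*n)/2)) * q ^ (-((N - 2*n)/2)) * Cc ^ (-(N/2))) :=
            mul_le_mul_of_nonneg_left base (by positivity)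
        _ = CV ^ 3 * (p ^ (-N')) * (q ^ (-N')) * (Cc ^ (-(N/2))) := by rw [hN']; ring
    have hd : ENNReal.ofReal (A ^ (-N)) * ENNReal.ofReal (B ^ (-N)) *
        ENNReal.ofReal (Cc ^ (-N)) * ENNReal.ofReal (CV * A ^ n) *
        ENNReal.ofReal (CV * p ^ n) * ENNReal.ofReal (CV * q ^ n) ≤
        ENNReal.ofReal (CV ^ 3) * ENNReal.ofReal (p ^ (-N')) *
          ENNReal.ofReal (q ^ (-N')) * ENNReal.ofReal (Cc ^ (-(N/2))) := by
      rw [ofReal_prod6 (by positivity) (by positivity) (by positivity)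
          (by positivity) (by positivity),
        ofReal_prod4 (by positivity) (by positivity) (by positivity)]
      exact ENNReal.ofReal_le_ofReal hdr
    -- assemble
    calc Dker μ ll N x y * Dker μ lk N y z * Dker μ lk N y u
        = ((max (μ (ball x ll)) (μ (ball y ll)))⁻¹ * (max (μ (ball y lk)) (μ (ball z lk)))⁻¹ *
            (max (μ (ball y lk)) (μ (ball u lk)))⁻¹) *
          (ENNReal.ofReal (A ^ (-N)) * ENNReal.ofReal (B ^ (-N)) *
            ENNReal.ofReal (Cc ^ (-N))) := by
          simp only [Dker, hA', hB', hCc']; ring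
      _ ≤ ((ENNReal.ofReal (CV * A ^ n) * (ENNReal.ofReal (CV * p ^ n) *
            (max (μ (ball x ll)) (μ (ball z ll)))⁻¹)) *
            (ENNReal.ofReal (CV * q ^ n) * (max (μ (ball z lk)) (μ (ball u lk)))⁻¹) *
            Vuk⁻¹) *
          (ENNReal.ofReal (A ^ (-N)) * ENNReal.ofReal (B ^ (-N)) *
            ENNReal.ofReal (Cc ^ (-N))) := by
          exact mul_le_mul_left (mul_le_mul' (mul_le_mul' hv1 hv2) hv3) _
      _ = ((max (μ (ball x ll)) (μ (ball z ll)))⁻¹ * (max (μ (ball z lk)) (μ (ball u lk)))⁻¹ *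
            Vuk⁻¹) *
          (ENNReal.ofReal (A ^ (-N)) * ENNReal.ofReal (B ^ (-N)) *
            ENNReal.ofReal (Cc ^ (-N)) * ENNReal.ofReal (CV * A ^ n) *
            ENNReal.ofReal (CV * p ^ n) * ENNReal.ofReal (CV * q ^ n)) := by ring
      _ ≤ ((max (μ (ball x ll)) (μ (ball z ll)))⁻¹ * (max (μ (ball z lk)) (μ (ball u lk)))⁻¹ *
            Vuk⁻¹) *
          (ENNReal.ofReal (CV ^ 3) * ENNReal.ofReal (p ^ (-N')) *
            ENNReal.ofReal (q ^ (-N')) * ENNReal.ofReal (Cc ^ (-(N/2)))) :=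
          mul_le_mul_right hd _
      _ = K * ENNReal.ofReal (Cc ^ (-(N/2))) := by
          simp only [hK, Dker, hp', hq']; ring
  -- integrate
  have hKt : K ≠ ⊤ := by
    rw [hK]
    apply ENNReal.mul_ne_top
    apply ENNReal.mul_ne_top
    apply ENNReal.mul_ne_top ENNReal.ofReal_ne_top
    · apply ENNReal.mul_ne_top
      · exact ENNReal.inv_ne_top.mpr (lt_max_iff.mpr (Or.inl (hpos x ll hll0))).ne'
      · exact ENNReal.ofReal_ne_top
    · apply ENNReal.mul_ne_top
      · exact ENNReal.inv_ne_top.mpr (lt_max_iff.mpr (Or.inl (hpos z lk hlk0))).ne'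
      · exact ENNReal.ofReal_ne_top
    · exact ENNReal.inv_ne_top.mpr (hpos u lk hlk0).ne'
  have hint := key_integral μ n cstar hn hcstar hgrowth (N/2) (by linarith) lk hlk0 u
  calc ∫⁻ y, Dker μ ll N x y * Dker μ lk N y z * Dker μ lk N y u ∂μ
      ≤ ∫⁻ y, K * ENNReal.ofReal ((1 + dist y u / lk) ^ (-(N/2))) ∂μ := lintegral_mono hpt
    _ = K * ∫⁻ y, ENNReal.ofReal ((1 + dist y u / lk) ^ (-(N/2))) ∂μ :=
        lintegral_const_mul' K _ hKt
    _ ≤ K * (ENNReal.ofReal Cint * Vuk) := mul_le_mul_right hint _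
    _ = (ENNReal.ofReal (CV ^ 3) * ENNReal.ofReal Cint) *
          (Dker μ ll N' x z * Dker μ lk N' z u) * (Vuk⁻¹ * Vuk) := by rw [hK]; ring
    _ = ENNReal.ofReal (CV ^ 3 * Cint) * (Dker μ ll N' x z * Dker μ lk N' z u) := by
        rw [ENNReal.inv_mul_cancel hVuk0 hVukt, mul_one,
          ← ENNReal.ofReal_mul (by positivity)]
end

section
/- For every κ > 0 there exists a constant c_♯ > 0, depending only on κ and the doubling constants, such that for every j ∈ ℤ and all x, y ∈ X, ∫_X E_{2^{−j},κ}(x,z) E_{2^{−j},κ}(z,y) dμ(z) ≤ c_♯ · E_{2^{−j},κ}(x,y). -/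
open MeasureTheory Metric
open scoped ENNReal

/-- The sub-exponential kernel
`E_{λ,κ}(x,y) = (V(x,λ) V(y,λ))^{-1/2} exp(-κ (d(x,y)/λ)^{1/2})`. -/
noncomputable def Eker {X : Type*} [MetricSpace X] [MeasurableSpace X]
    (μ : Measure X) (lam κ : ℝ) (x y : X) : ℝ≥0∞ :=
  (μ (ball x lam) * μ (ball y lam)) ^ (-(1 / 2) : ℝ) *
    ENNReal.ofReal (Real.exp (-κ * Real.sqrt (dist x y / lam)))

/-- Elementary: `√(a+b) + √(min a b)/2 ≤ √a + √b`. -/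
lemma sqrt_min_aux (a b : ℝ) (ha : 0 ≤ a) (hb : 0 ≤ b) :
    Real.sqrt (a + b) + Real.sqrt (min a b) / 2 ≤ Real.sqrt a + Real.sqrt b := by
  wlog h : a ≤ b generalizing a b
  · rw [min_comm, add_comm a b]
    linarith [this b a hb ha (le_of_not_ge h)]
  rw [min_eq_left h]
  have h1 : Real.sqrt (a + b) ≤ Real.sqrt a / 2 + Real.sqrt b := by
    rw [show Real.sqrt a / 2 + Real.sqrt b = Real.sqrt ((Real.sqrt a / 2 + Real.sqrt b) ^ 2) from
      (Real.sqrt_sq (by positivity)).symm]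
    apply Real.sqrt_le_sqrt
    have hab : a ≤ Real.sqrt a * Real.sqrt b := by
      nth_rewrite 1 [← Real.mul_self_sqrt ha]
      exact mul_le_mul_of_nonneg_left (Real.sqrt_le_sqrt h) (Real.sqrt_nonneg a)
    have := Real.sq_sqrt ha
    have := Real.sq_sqrt hb
    nlinarith [Real.sqrt_nonneg a, Real.sqrt_nonneg b]
  linarith

section Doubling
variable {X : Type*} [MetricSpace X] [MeasurableSpace X] [BorelSpace X]
  (μ : Measure X) {C₀ : ℝ}

lemma doubling_iter (hC₀ : 1 ≤ C₀)
    (hdouble : ∀ (x : X) (r : ℝ), 0 < r →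
      μ (ball x (2 * r)) ≤ ENNReal.ofReal C₀ * μ (ball x r))
    (x : X) {r : ℝ} (hr : 0 < r) (k : ℕ) :
    μ (ball x ((2:ℝ) ^ k * r)) ≤ (ENNReal.ofReal C₀) ^ k * μ (ball x r) := by
  induction k with
  | zero => simp
  | succ n ih =>
      have h1 : ((2:ℝ) ^ (n + 1) * r) = 2 * ((2:ℝ) ^ n * r) := by ring
      rw [h1]
      calc μ (ball x (2 * ((2:ℝ) ^ n * r))) ≤ ENNReal.ofReal C₀ * μ (ball x ((2:ℝ) ^ n * r)) :=
            hdouble x _ (by positivity)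
        _ ≤ ENNReal.ofReal C₀ * ((ENNReal.ofReal C₀) ^ n * μ (ball x r)) :=
            mul_le_mul_right ih _
        _ = (ENNReal.ofReal C₀) ^ (n + 1) * μ (ball x r) := by ring

lemma ball_compare (hC₀ : 1 ≤ C₀)
    (hdouble : ∀ (x : X) (r : ℝ), 0 < r →
      μ (ball x (2 * r)) ≤ ENNReal.ofReal C₀ * μ (ball x r))
    {x z : X} {r : ℝ} (hr : 0 < r) {k : ℕ} (hd : dist x z < (2:ℝ) ^ k * r) :
    μ (ball x r) ≤ (ENNReal.ofReal C₀) ^ (k + 1) * μ (ball z r) := by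
  have hsub : ball x r ⊆ ball z ((2:ℝ) ^ (k + 1) * r) := by
    intro w hw
    rw [mem_ball] at hw ⊢
    have h2 : (1:ℝ) ≤ 2 ^ k := one_le_pow₀ (by norm_num)
    calc dist w z ≤ dist w x + dist x z := dist_triangle w x z
      _ < r + 2 ^ k * r := by linarith
      _ ≤ 2 ^ (k + 1) * r := by
          have hp : (2:ℝ) ^ (k + 1) = 2 * 2 ^ k := by ring
          nlinarith
  calc μ (ball x r) ≤ μ (ball z ((2:ℝ) ^ (k+1) * r)) := measure_mono hsub
    _ ≤ (ENNReal.ofReal C₀) ^ (k + 1) * μ (ball z r) := doubling_iter μ hC₀ hdouble z hr (k+1)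

end Doubling

section Core
variable {X : Type*} [MetricSpace X] [MeasurableSpace X] [BorelSpace X]
  {μ : Measure X} {C₀ : ℝ}

/-- dyadic annulus around `x` at scale `r` -/
def Ann (r : ℝ) (x : X) : ℕ → Set X
  | 0 => ball x r
  | (k+1) => ball x ((2:ℝ) ^ (k+1) * r) \ ball x ((2:ℝ) ^ k * r)

lemma Ann_measurable (r : ℝ) (x : X) (k : ℕ) : MeasurableSet (Ann r x k) := by
  cases k with
  | zero => exact measurableSet_ball
  | succ n => exact measurableSet_ball.diff measurableSet_ball

lemma Ann_subset (r : ℝ) (x : X) (k : ℕ) : Ann r x k ⊆ ball x ((2:ℝ) ^ k * r) := by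
  cases k with
  | zero => simp [Ann]
  | succ n => exact Set.diff_subset

/-- the constant dominating the integrand on `Ann r x k` -/
noncomputable def ckon (μ : Measure X) (C₀ κ' r : ℝ) (x : X) (k : ℕ) : ℝ≥0∞ :=
  (ENNReal.ofReal C₀) ^ (k + 1) * (μ (ball x r))⁻¹ *
    ENNReal.ofReal (Real.exp (κ' - κ' * Real.sqrt ((2:ℝ) ^ k / 2)))

lemma ptwise_bound (hC₀ : 1 ≤ C₀)
    (hpos : ∀ (x : X) (r : ℝ), 0 < r → 0 < μ (ball x r))
    (hfin : ∀ (x : X) (r : ℝ), 0 < r → μ (ball x r) < ⊤)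
    (hdouble : ∀ (x : X) (r : ℝ), 0 < r →
      μ (ball x (2 * r)) ≤ ENNReal.ofReal C₀ * μ (ball x r))
    {r κ' : ℝ} (hr : 0 < r) (hκ' : 0 < κ') (x z : X) :
    (μ (ball z r))⁻¹ * ENNReal.ofReal (Real.exp (-κ' * Real.sqrt (dist x z / r))) ≤
      ∑' k, (Ann r x k).indicator (fun _ => ckon μ C₀ κ' r x k) z := by
  have hex : ∃ k : ℕ, dist x z < (2:ℝ) ^ k * r := by
    obtain ⟨n, hn⟩ := pow_unbounded_of_one_lt (dist x z / r) (by norm_num : (1:ℝ) < 2)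
    exact ⟨n, by rwa [div_lt_iff₀ hr] at hn⟩
  classical
  set k := Nat.find hex with hkdef
  have hk : dist x z < (2:ℝ) ^ k * r := Nat.find_spec hex
  have hmem : z ∈ Ann r x k := by
    cases hk' : k with
    | zero =>
        rw [hk'] at hk; simpa [Ann, mem_ball, dist_comm] using hk
    | succ m =>
        have hm : ¬ dist x z < (2:ℝ) ^ m * r := Nat.find_min hex (by omega)
        rw [hk'] at hk
        constructor
        · simpa [mem_ball, dist_comm] using hk
        · simpa [mem_ball, dist_comm] using hm
  have hVz0 : μ (ball z r) ≠ 0 := (hpos z r hr).ne'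
  have hVzt : μ (ball z r) ≠ ⊤ := (hfin z r hr).ne
  have hVx0 : μ (ball x r) ≠ 0 := (hpos x r hr).ne'
  have hVxt : μ (ball x r) ≠ ⊤ := (hfin x r hr).ne
  have hle : (μ (ball z r))⁻¹ * ENNReal.ofReal (Real.exp (-κ' * Real.sqrt (dist x z / r))) ≤
      ckon μ C₀ κ' r x k := by
    have hinv : (μ (ball z r))⁻¹ ≤ (ENNReal.ofReal C₀) ^ (k + 1) * (μ (ball x r))⁻¹ := by
      have hAB := ball_compare μ hC₀ hdouble hr hk
      calc (μ (ball z r))⁻¹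
          = (μ (ball x r))⁻¹ * μ (ball x r) * (μ (ball z r))⁻¹ := by
            rw [ENNReal.inv_mul_cancel hVx0 hVxt, one_mul]
        _ ≤ (μ (ball x r))⁻¹ * ((ENNReal.ofReal C₀) ^ (k + 1) * μ (ball z r)) *
              (μ (ball z r))⁻¹ := by gcongr
        _ = (ENNReal.ofReal C₀) ^ (k + 1) * (μ (ball x r))⁻¹ *
              (μ (ball z r) * (μ (ball z r))⁻¹) := by ring
        _ = (ENNReal.ofReal C₀) ^ (k + 1) * (μ (ball x r))⁻¹ := by
            rw [ENNReal.mul_inv_cancel hVz0 hVzt, mul_one]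
    have hexp : ENNReal.ofReal (Real.exp (-κ' * Real.sqrt (dist x z / r))) ≤
        ENNReal.ofReal (Real.exp (κ' - κ' * Real.sqrt ((2:ℝ) ^ k / 2))) := by
      apply ENNReal.ofReal_le_ofReal
      apply Real.exp_le_exp.2
      cases hk' : k with
      | zero =>
          have h1 : Real.sqrt ((2:ℝ) ^ 0 / 2) ≤ 1 := by
            rw [show ((2:ℝ) ^ 0 / 2) = 1/2 by norm_num]
            calc Real.sqrt (1/2) ≤ Real.sqrt 1 := Real.sqrt_le_sqrt (by norm_num)
              _ = 1 := Real.sqrt_one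
          have h2 : 0 ≤ Real.sqrt (dist x z / r) := Real.sqrt_nonneg _
          nlinarith
      | succ m =>
          have hm : ¬ dist x z < (2:ℝ) ^ m * r := Nat.find_min hex (by omega)
          push_neg at hm
          have hd : (2:ℝ) ^ (m+1) / 2 ≤ dist x z / r := by
            rw [div_le_div_iff₀ (by norm_num) hr]
            calc (2:ℝ) ^ (m+1) * r = (2 ^ m * r) * 2 := by ring
              _ ≤ dist x z * 2 := by nlinarith
          have h3 := Real.sqrt_le_sqrt hd
          nlinarith [Real.sqrt_nonneg ((2:ℝ) ^ (m+1) / 2)]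
    calc (μ (ball z r))⁻¹ * ENNReal.ofReal (Real.exp (-κ' * Real.sqrt (dist x z / r)))
        ≤ ((ENNReal.ofReal C₀) ^ (k + 1) * (μ (ball x r))⁻¹) *
            ENNReal.ofReal (Real.exp (κ' - κ' * Real.sqrt ((2:ℝ) ^ k / 2))) :=
          mul_le_mul' hinv hexp
      _ = ckon μ C₀ κ' r x k := rfl
  calc (μ (ball z r))⁻¹ * ENNReal.ofReal (Real.exp (-κ' * Real.sqrt (dist x z / r)))
      ≤ (Ann r x k).indicator (fun _ => ckon μ C₀ κ' r x k) z := by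
        rwa [Set.indicator_of_mem hmem]
    _ ≤ ∑' k, (Ann r x k).indicator (fun _ => ckon μ C₀ κ' r x k) z := ENNReal.le_tsum k

end Core

section Series

/-- the series constant -/
noncomputable def Scon (C₀ κ' : ℝ) : ℝ≥0∞ :=
  ∑' k : ℕ, (ENNReal.ofReal C₀) ^ (2 * k + 1) *
    ENNReal.ofReal (Real.exp (κ' - κ' * Real.sqrt ((2:ℝ) ^ k / 2)))

lemma sqrt_two_pow (k : ℕ) : Real.sqrt ((2:ℝ) ^ k) = Real.sqrt 2 ^ k := by
  induction k with
  | zero => simp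
  | succ n ih => rw [pow_succ, pow_succ, Real.sqrt_mul (by positivity), ih]

lemma Scon_ne_top {C₀ κ' : ℝ} (hC₀ : 1 ≤ C₀) (hκ' : 0 < κ') : Scon C₀ κ' ≠ ⊤ := by
  have hC0 : (0:ℝ) ≤ C₀ := by linarith
  set g : ℕ → ℝ := fun k => C₀ ^ (2 * k + 1) * Real.exp (κ' - κ' * Real.sqrt ((2:ℝ) ^ k / 2))
    with hg
  have hgpos : ∀ k, 0 < g k := fun k => by
    apply mul_pos (by positivity) (Real.exp_pos _)
  have hsq : ∀ k : ℕ, Real.sqrt ((2:ℝ) ^ k / 2) = Real.sqrt 2 ^ k / Real.sqrt 2 := by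
    intro k
    rw [Real.sqrt_div (by positivity), sqrt_two_pow]
  -- ratio test
  have hratio : ∀ k : ℕ, g (k + 1) / g k =
      C₀ ^ 2 * Real.exp (-(κ' * (Real.sqrt 2 - 1) / Real.sqrt 2 * Real.sqrt 2 ^ k)) := by
    intro k
    have h2 : Real.sqrt 2 ≠ 0 := by positivity
    rw [div_eq_iff (hgpos k).ne', hg]
    simp only []
    have e1 : κ' - κ' * Real.sqrt ((2:ℝ) ^ (k+1) / 2) =
        (-(κ' * (Real.sqrt 2 - 1) / Real.sqrt 2 * Real.sqrt 2 ^ k)) +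
          (κ' - κ' * Real.sqrt ((2:ℝ) ^ k / 2)) := by
      rw [hsq, hsq, pow_succ]
      field_simp
      have hs2 : Real.sqrt 2 * Real.sqrt 2 = 2 := Real.mul_self_sqrt (by norm_num)
      linear_combination
    rw [e1, Real.exp_add]
    ring
  have hsum : Summable g := by
    apply summable_of_ratio_test_tendsto_lt_one one_pos
      (Filter.Eventually.of_forall fun k => (hgpos k).ne')
    have h1 : Filter.Tendsto (fun k : ℕ => Real.sqrt 2 ^ k) Filter.atTop Filter.atTop :=
      tendsto_pow_atTop_atTop_of_one_lt (by
        rw [show (1:ℝ) = Real.sqrt 1 by simp]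
        exact Real.sqrt_lt_sqrt (by norm_num) (by norm_num))
    have hc : -(κ' * (Real.sqrt 2 - 1) / Real.sqrt 2) < 0 := by
      have : (1:ℝ) < Real.sqrt 2 := by
        rw [show (1:ℝ) = Real.sqrt 1 by simp]
        exact Real.sqrt_lt_sqrt (by norm_num) (by norm_num)
      have h2 : (0:ℝ) < Real.sqrt 2 := by positivity
      have h3 : 0 < κ' * (Real.sqrt 2 - 1) / Real.sqrt 2 :=
        div_pos (mul_pos hκ' (by linarith)) h2
      linarith
    have h2 : Filter.Tendsto
        (fun k : ℕ => -(κ' * (Real.sqrt 2 - 1) / Real.sqrt 2 * Real.sqrt 2 ^ k))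
        Filter.atTop Filter.atBot := by
      have := (Filter.tendsto_const_mul_atBot_of_neg hc).2 h1
      refine this.congr fun k => by ring
    have h3 : Filter.Tendsto
        (fun k : ℕ => C₀ ^ 2 * Real.exp (-(κ' * (Real.sqrt 2 - 1) / Real.sqrt 2 * Real.sqrt 2 ^ k)))
        Filter.atTop (nhds 0) := by
      have := (Real.tendsto_exp_atBot.comp h2).const_mul (C₀ ^ 2)
      simpa using this
    apply h3.congr
    intro k
    rw [← hratio k]
    have := hgpos k
    have := hgpos (k+1)
    rw [Real.norm_eq_abs, Real.norm_eq_abs, abs_of_pos (hgpos (k+1)), abs_of_pos (hgpos k)]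
  have : Scon C₀ κ' = ENNReal.ofReal (∑' k, g k) := by
    rw [ENNReal.ofReal_tsum_of_nonneg (fun k => (hgpos k).le) hsum]
    unfold Scon
    congr 1
    funext k
    rw [hg]
    simp only []
    rw [ENNReal.ofReal_mul (by positivity), ENNReal.ofReal_pow hC0]
  rw [this]
  exact ENNReal.ofReal_ne_top

end Series

section Main
variable {X : Type*} [MetricSpace X] [MeasurableSpace X] [BorelSpace X]
  {μ : Measure X} {C₀ : ℝ}

lemma integral_annuli_le (hC₀ : 1 ≤ C₀)
    (hpos : ∀ (x : X) (r : ℝ), 0 < r → 0 < μ (ball x r))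
    (hfin : ∀ (x : X) (r : ℝ), 0 < r → μ (ball x r) < ⊤)
    (hdouble : ∀ (x : X) (r : ℝ), 0 < r →
      μ (ball x (2 * r)) ≤ ENNReal.ofReal C₀ * μ (ball x r))
    {r κ' : ℝ} (hr : 0 < r) (x : X) :
    ∫⁻ z, ∑' k, (Ann r x k).indicator (fun _ => ckon μ C₀ κ' r x k) z ∂μ ≤ Scon C₀ κ' := by
  have hVx0 : μ (ball x r) ≠ 0 := (hpos x r hr).ne'
  have hVxt : μ (ball x r) ≠ ⊤ := (hfin x r hr).ne
  rw [lintegral_tsum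
    (fun k => (measurable_const.indicator (Ann_measurable r x k)).aemeasurable)]
  apply ENNReal.tsum_le_tsum
  intro k
  rw [lintegral_indicator_const (Ann_measurable r x k)]
  calc ckon μ C₀ κ' r x k * μ (Ann r x k)
      ≤ ckon μ C₀ κ' r x k * ((ENNReal.ofReal C₀) ^ k * μ (ball x r)) :=
        mul_le_mul_right ((measure_mono (Ann_subset r x k)).trans
          (doubling_iter μ hC₀ hdouble x hr k)) _
    _ = ((ENNReal.ofReal C₀) ^ (k+1) * (ENNReal.ofReal C₀) ^ k) *
          ENNReal.ofReal (Real.exp (κ' - κ' * Real.sqrt ((2:ℝ) ^ k / 2))) *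
          ((μ (ball x r))⁻¹ * μ (ball x r)) := by
        unfold ckon; ring
    _ = (ENNReal.ofReal C₀) ^ (2 * k + 1) *
          ENNReal.ofReal (Real.exp (κ' - κ' * Real.sqrt ((2:ℝ) ^ k / 2))) := by
        rw [← pow_add, ENNReal.inv_mul_cancel hVx0 hVxt, mul_one,
          show k + 1 + k = 2 * k + 1 by ring]

lemma Eker_ne_top
    (hpos : ∀ (x : X) (r : ℝ), 0 < r → 0 < μ (ball x r))
    {r κ : ℝ} (hr : 0 < r) (x y : X) : Eker μ r κ x y ≠ ⊤ := by
  unfold Eker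
  apply ENNReal.mul_ne_top _ ENNReal.ofReal_ne_top
  rw [show (-(1/2) : ℝ) = -(1/2) from rfl, ENNReal.rpow_neg]
  refine ENNReal.inv_ne_top.2 ?_
  have h0 : μ (ball x r) * μ (ball y r) ≠ 0 :=
    mul_ne_zero (hpos x r hr).ne' (hpos y r hr).ne'
  simp only [Ne, ENNReal.rpow_eq_zero_iff, not_or, not_and, not_lt]
  exact ⟨fun h => absurd h h0, fun _ => by norm_num⟩

lemma Eker_prod_le
    (hpos : ∀ (x : X) (r : ℝ), 0 < r → 0 < μ (ball x r))
    (hfin : ∀ (x : X) (r : ℝ), 0 < r → μ (ball x r) < ⊤)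
    {r κ : ℝ} (hr : 0 < r) (hκ : 0 < κ) (x y z : X) :
    Eker μ r κ x z * Eker μ r κ z y ≤ Eker μ r κ x y *
      ((μ (ball z r))⁻¹ *
        ENNReal.ofReal (Real.exp (-(κ/2) * Real.sqrt (min (dist x z) (dist z y) / r)))) := by
  set a := μ (ball x r) with ha
  set b := μ (ball z r) with hb
  set c := μ (ball y r) with hc
  have hat : a ≠ ⊤ := (hfin x r hr).ne
  have hbt : b ≠ ⊤ := (hfin z r hr).ne
  have hct : c ≠ ⊤ := (hfin y r hr).ne
  have hb0 : b ≠ 0 := (hpos z r hr).ne'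
  have hP : (a*b) ^ (-(1/2) : ℝ) * (b*c) ^ (-(1/2) : ℝ) = (a*c) ^ (-(1/2) : ℝ) * b⁻¹ := by
    rw [ENNReal.mul_rpow_of_ne_top hat hbt, ENNReal.mul_rpow_of_ne_top hbt hct,
      ENNReal.mul_rpow_of_ne_top hat hct]
    have hbb : b ^ (-(1/2) : ℝ) * b ^ (-(1/2) : ℝ) = b⁻¹ := by
      rw [← ENNReal.rpow_add _ _ hb0 hbt]
      norm_num [ENNReal.rpow_neg_one]
    calc a ^ (-(1/2):ℝ) * b ^ (-(1/2):ℝ) * (b ^ (-(1/2):ℝ) * c ^ (-(1/2):ℝ))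
        = a ^ (-(1/2):ℝ) * c ^ (-(1/2):ℝ) * (b ^ (-(1/2):ℝ) * b ^ (-(1/2):ℝ)) := by ring
      _ = a ^ (-(1/2):ℝ) * c ^ (-(1/2):ℝ) * b⁻¹ := by rw [hbb]
  have hE : ENNReal.ofReal (Real.exp (-κ * Real.sqrt (dist x z / r))) *
      ENNReal.ofReal (Real.exp (-κ * Real.sqrt (dist z y / r))) ≤
      ENNReal.ofReal (Real.exp (-κ * Real.sqrt (dist x y / r))) *
      ENNReal.ofReal (Real.exp (-(κ/2) * Real.sqrt (min (dist x z) (dist z y) / r))) := by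
    rw [← ENNReal.ofReal_mul (Real.exp_nonneg _), ← ENNReal.ofReal_mul (Real.exp_nonneg _),
      ← Real.exp_add, ← Real.exp_add]
    apply ENNReal.ofReal_le_ofReal
    apply Real.exp_le_exp.2
    set A := dist x z / r with hA
    set B := dist z y / r with hB
    set D := dist x y / r with hD
    have hA0 : 0 ≤ A := by positivity
    have hB0 : 0 ≤ B := by positivity
    have hmin : min (dist x z) (dist z y) / r = min A B := by
      rw [hA, hB, min_div_div_right hr.le]
    rw [hmin]
    have hDle : D ≤ A + B := by
      rw [hD, hA, hB, ← add_div]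
      gcongr
      exact dist_triangle x z y
    have h1 := sqrt_min_aux A B hA0 hB0
    have h2 : Real.sqrt D ≤ Real.sqrt (A + B) := Real.sqrt_le_sqrt hDle
    nlinarith [Real.sqrt_nonneg (min A B), Real.sqrt_nonneg D]
  calc Eker μ r κ x z * Eker μ r κ z y
      = ((a*b) ^ (-(1/2):ℝ) * (b*c) ^ (-(1/2):ℝ)) *
          (ENNReal.ofReal (Real.exp (-κ * Real.sqrt (dist x z / r))) *
            ENNReal.ofReal (Real.exp (-κ * Real.sqrt (dist z y / r)))) := by
        unfold Eker; ring
    _ = ((a*c) ^ (-(1/2):ℝ) * b⁻¹) *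
          (ENNReal.ofReal (Real.exp (-κ * Real.sqrt (dist x z / r))) *
            ENNReal.ofReal (Real.exp (-κ * Real.sqrt (dist z y / r)))) := by rw [hP]
    _ ≤ ((a*c) ^ (-(1/2):ℝ) * b⁻¹) *
          (ENNReal.ofReal (Real.exp (-κ * Real.sqrt (dist x y / r))) *
            ENNReal.ofReal (Real.exp (-(κ/2) * Real.sqrt (min (dist x z) (dist z y) / r)))) :=
        mul_le_mul_right hE _
    _ = Eker μ r κ x y *
          ((μ (ball z r))⁻¹ *
            ENNReal.ofReal (Real.exp (-(κ/2) * Real.sqrt (min (dist x z) (dist z y) / r)))) := by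
        unfold Eker; ring

end Main

/-- For every `κ > 0` there is `c_♯ > 0` (depending only on `κ` and the
doubling constants) such that for every `j ∈ ℤ` and all `x,y ∈ X`,
`∫_X E_{2^{-j},κ}(x,z) E_{2^{-j},κ}(z,y) dμ(z) ≤ c_♯ · E_{2^{-j},κ}(x,y)`. -/
theorem stmt_6 {X : Type*} [MetricSpace X] [MeasurableSpace X] [BorelSpace X]
    (μ : Measure X) (C₀ : ℝ) (hC₀ : 1 ≤ C₀)
    (hpos : ∀ (x : X) (r : ℝ), 0 < r → 0 < μ (ball x r))
    (hfin : ∀ (x : X) (r : ℝ), 0 < r → μ (ball x r) < ⊤)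
    (hdouble : ∀ (x : X) (r : ℝ), 0 < r →
      μ (ball x (2 * r)) ≤ ENNReal.ofReal C₀ * μ (ball x r)) :
    ∀ κ : ℝ, 0 < κ → ∃ csharp : ℝ, 0 < csharp ∧ ∀ (j : ℤ) (x y : X),
      ∫⁻ z, Eker μ ((2:ℝ) ^ (-j)) κ x z * Eker μ ((2:ℝ) ^ (-j)) κ z y ∂μ ≤
        ENNReal.ofReal csharp * Eker μ ((2:ℝ) ^ (-j)) κ x y := by
  intro κ hκ
  have hκ2 : 0 < κ / 2 := by linarith
  set S : ℝ≥0∞ := Scon C₀ (κ / 2) with hS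
  have hSt : S ≠ ⊤ := Scon_ne_top hC₀ hκ2
  refine ⟨(S + S).toReal + 1, by positivity, ?_⟩
  intro j x y
  set r : ℝ := (2:ℝ) ^ (-j) with hrdef
  have hr : 0 < r := zpow_pos (by norm_num) _
  -- the dominating series functions
  set T : X → X → ℝ≥0∞ :=
    fun w z => ∑' k, (Ann r w k).indicator (fun _ => ckon μ C₀ (κ/2) r w k) z with hT
  have hTmeas : ∀ w : X, Measurable (T w) := fun w =>
    Measurable.ennreal_tsum fun k => measurable_const.indicator (Ann_measurable r w k)
  have hpt : ∀ z : X, Eker μ r κ x z * Eker μ r κ z y ≤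
      Eker μ r κ x y * (T x z + T y z) := by
    intro z
    refine (Eker_prod_le hpos hfin hr hκ x y z).trans (mul_le_mul_right ?_ _)
    rcases min_cases (dist x z) (dist z y) with ⟨hm, -⟩ | ⟨hm, -⟩
    · rw [hm]
      exact le_add_right (ptwise_bound hC₀ hpos hfin hdouble hr hκ2 x z)
    · rw [hm, dist_comm z y]
      exact le_add_left (ptwise_bound hC₀ hpos hfin hdouble hr hκ2 y z)
  calc ∫⁻ z, Eker μ r κ x z * Eker μ r κ z y ∂μ
      ≤ ∫⁻ z, Eker μ r κ x y * (T x z + T y z) ∂μ := lintegral_mono hpt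
    _ = Eker μ r κ x y * ∫⁻ z, (T x z + T y z) ∂μ :=
        lintegral_const_mul' _ _ (Eker_ne_top hpos hr x y)
    _ = Eker μ r κ x y * ((∫⁻ z, T x z ∂μ) + ∫⁻ z, T y z ∂μ) := by
        rw [lintegral_add_left (hTmeas x)]
    _ ≤ Eker μ r κ x y * (S + S) := by
        gcongr
        · exact integral_annuli_le hC₀ hpos hfin hdouble hr x
        · exact integral_annuli_le hC₀ hpos hfin hdouble hr y
    _ ≤ ENNReal.ofReal ((S + S).toReal + 1) * Eker μ r κ x y := by
        rw [mul_comm]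
        apply mul_le_mul_left
        rw [ENNReal.ofReal_add ENNReal.toReal_nonneg (by norm_num),
          ENNReal.ofReal_toReal (by simp [ENNReal.add_ne_top, hSt])]
        exact le_add_right le_rfl
end

section
/- Let κ > 0, j ∈ ℤ and 0 < a ≤ 1, and let {Q_i}_{i∈I} be a countable family of pairwise disjoint Borel subsets of X together with points x_i ∈ X such that B(x_i, a·2^{−j}) ⊆ Q_i ⊆ B(x_i, 2^{−j}) for every i ∈ I. Then there is a constant c_♯, depending only on κ, a and the doubling constants, such that Σ_{i∈I} μ(Q_i) E_{2^{−j},κ}(x, x_i) E_{2^{−j},κ}(x_i, y) ≤ c_♯ · E_{2^{−j},κ}(x,y) for all x, y ∈ X. -/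
open MeasureTheory Metric
open scoped ENNReal

namespace Stmt7Aux

open Real Filter

lemma sqrt_le_sqrt_add_one {A B : ℝ} (hB : 0 ≤ B) (h : A ≤ B + 1) :
    Real.sqrt A ≤ Real.sqrt B + 1 := by
  have h1 : Real.sqrt A ≤ Real.sqrt (B + 1) := Real.sqrt_le_sqrt h
  have h2 : Real.sqrt (B + 1) ≤ Real.sqrt B + 1 := by
    rw [show Real.sqrt (B + 1) ≤ Real.sqrt B + 1 ↔ B + 1 ≤ (Real.sqrt B + 1) ^ 2 from
      Real.sqrt_le_left (by positivity)]
    nlinarith [Real.sq_sqrt hB, Real.sqrt_nonneg B]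
  linarith

lemma sqrt_half_le {u v : ℝ} (hu : 0 ≤ u) (huv : u ≤ v) :
    Real.sqrt (u + v) + Real.sqrt u / 2 ≤ Real.sqrt u + Real.sqrt v := by
  have hv : 0 ≤ v := hu.trans huv
  have h3 : Real.sqrt u ≤ Real.sqrt v := Real.sqrt_le_sqrt huv
  have h4 : Real.sqrt (u + v) ≤ Real.sqrt u / 2 + Real.sqrt v := by
    rw [show Real.sqrt (u + v) ≤ Real.sqrt u / 2 + Real.sqrt v ↔
      u + v ≤ (Real.sqrt u / 2 + Real.sqrt v) ^ 2 from Real.sqrt_le_left (by positivity)]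
    nlinarith [Real.sq_sqrt hu, Real.sq_sqrt hv, Real.sqrt_nonneg u,
      mul_le_mul_of_nonneg_left h3 (Real.sqrt_nonneg u)]
  linarith

lemma exp_split_aux {κ lam u v d : ℝ} (hκ : 0 < κ) (hlam : 0 < lam)
    (hu : 0 ≤ u) (huv : u ≤ v) (hduv : d ≤ u + v) :
    Real.exp (-κ * Real.sqrt (u / lam)) * Real.exp (-κ * Real.sqrt (v / lam)) ≤
      Real.exp (-κ * Real.sqrt (d / lam)) * Real.exp (-(κ / 2 * Real.sqrt (u / lam))) := by
  rw [← Real.exp_add, ← Real.exp_add]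
  apply Real.exp_le_exp.mpr
  have h1 : Real.sqrt (d / lam) ≤ Real.sqrt (u / lam + v / lam) := by
    apply Real.sqrt_le_sqrt
    rw [← add_div]
    gcongr
  have h2 : Real.sqrt (u / lam + v / lam) + Real.sqrt (u / lam) / 2 ≤
      Real.sqrt (u / lam) + Real.sqrt (v / lam) :=
    sqrt_half_le (by positivity) (by gcongr)
  nlinarith [mul_le_mul_of_nonneg_left h1 hκ.le, mul_le_mul_of_nonneg_left h2 hκ.le]

lemma exp_split {κ lam u v d : ℝ} (hκ : 0 < κ) (hlam : 0 < lam)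
    (hu : 0 ≤ u) (hv : 0 ≤ v) (hduv : d ≤ u + v) :
    Real.exp (-κ * Real.sqrt (u / lam)) * Real.exp (-κ * Real.sqrt (v / lam)) ≤
      Real.exp (-κ * Real.sqrt (d / lam)) *
        (Real.exp (-(κ / 2 * Real.sqrt (u / lam))) +
          Real.exp (-(κ / 2 * Real.sqrt (v / lam)))) := by
  rcases le_total u v with h | h
  · refine (exp_split_aux hκ hlam hu h hduv).trans ?_
    exact mul_le_mul_of_nonneg_left (le_add_of_nonneg_right (Real.exp_pos _).le)
      (Real.exp_pos _).le
  · rw [mul_comm]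
    refine (exp_split_aux hκ hlam hv h (by linarith)).trans ?_
    exact mul_le_mul_of_nonneg_left (le_add_of_nonneg_left (Real.exp_pos _).le)
      (Real.exp_pos _).le

lemma enn_inv_le {a b c : ℝ≥0∞} (hc0 : c ≠ 0) (hct : c ≠ ⊤)
    (h : a ≤ c * b) : b⁻¹ ≤ c * a⁻¹ := by
  have h1 : (c * b)⁻¹ ≤ a⁻¹ := ENNReal.inv_le_inv' h
  have h2 : (c * b)⁻¹ = c⁻¹ * b⁻¹ := ENNReal.mul_inv (Or.inl hc0) (Or.inl hct)
  calc b⁻¹ = c * (c⁻¹ * b⁻¹) := by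
        rw [← mul_assoc, ENNReal.mul_inv_cancel hc0 hct, one_mul]
    _ ≤ c * a⁻¹ := mul_le_mul_right (h2 ▸ h1) _

variable {X : Type*} [MetricSpace X] [MeasurableSpace X]

lemma doub (μ : Measure X) {C₀ : ℝ}
    (hdouble : ∀ (x : X) (r : ℝ), 0 < r →
      μ (ball x (2 * r)) ≤ ENNReal.ofReal C₀ * μ (ball x r))
    (z : X) {r : ℝ} (hr : 0 < r) (n : ℕ) :
    μ (ball z ((2:ℝ) ^ n * r)) ≤ ENNReal.ofReal C₀ ^ n * μ (ball z r) := by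
  induction n with
  | zero => simp
  | succ n ih =>
      have h2 : (2:ℝ) ^ (n + 1) * r = 2 * ((2:ℝ) ^ n * r) := by ring
      rw [h2]
      calc μ (ball z (2 * ((2:ℝ) ^ n * r)))
          ≤ ENNReal.ofReal C₀ * μ (ball z ((2:ℝ) ^ n * r)) := hdouble z _ (by positivity)
        _ ≤ ENNReal.ofReal C₀ * (ENNReal.ofReal C₀ ^ n * μ (ball z r)) :=
            mul_le_mul_right ih _
        _ = ENNReal.ofReal C₀ ^ (n + 1) * μ (ball z r) := by ring

/-- The summable majorant series. -/
noncomputable def rfun (C₀ δ : ℝ) (k : ℕ) : ℝ :=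
  C₀ ^ (k + 1) * Real.exp δ * Real.exp (-(δ * Real.sqrt ((2:ℝ) ^ k / 2)))

lemma rfun_pos {C₀ : ℝ} (hC₀ : 0 < C₀) (δ : ℝ) (k : ℕ) : 0 < rfun C₀ δ k := by
  unfold rfun; positivity

lemma rfun_succ (C₀ δ : ℝ) (k : ℕ) :
    rfun C₀ δ (k + 1) =
      C₀ * Real.exp (-(δ * ((Real.sqrt 2 - 1) * Real.sqrt ((2:ℝ) ^ k / 2)))) *
        rfun C₀ δ k := by
  have hs : Real.sqrt ((2:ℝ) ^ (k + 1) / 2) = Real.sqrt 2 * Real.sqrt ((2:ℝ) ^ k / 2) := by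
    rw [← Real.sqrt_mul (by norm_num : (0:ℝ) ≤ 2)]
    congr 1; ring
  unfold rfun
  rw [hs]
  rw [show -(δ * (Real.sqrt 2 * Real.sqrt ((2:ℝ) ^ k / 2))) =
      -(δ * ((Real.sqrt 2 - 1) * Real.sqrt ((2:ℝ) ^ k / 2))) +
        -(δ * Real.sqrt ((2:ℝ) ^ k / 2)) by ring,
    Real.exp_add, pow_succ]
  ring

lemma rfun_summable {C₀ δ : ℝ} (hC₀ : 1 ≤ C₀) (hδ : 0 < δ) : Summable (rfun C₀ δ) := by
  have hC₀pos : (0:ℝ) < C₀ := lt_of_lt_of_le one_pos hC₀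
  have hs2 : (1:ℝ) < Real.sqrt 2 := by
    rw [show (1:ℝ) = Real.sqrt 1 from Real.sqrt_one.symm]
    exact Real.sqrt_lt_sqrt (by norm_num) (by norm_num)
  have hsqrt_eq : ∀ k : ℕ, Real.sqrt ((2:ℝ) ^ k / 2) = Real.sqrt 2 ^ k / Real.sqrt 2 := by
    intro k
    rw [Real.sqrt_div (by positivity) 2]
    congr 1
    induction k with
    | zero => simp
    | succ k ih => rw [pow_succ, pow_succ, Real.sqrt_mul (by positivity), ih]
  have htd : Tendsto (fun k : ℕ => Real.sqrt ((2:ℝ) ^ k / 2)) atTop atTop := by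
    simp only [hsqrt_eq]
    exact (tendsto_pow_atTop_atTop_of_one_lt hs2).atTop_div_const (by positivity)
  have h1 : Tendsto (fun k : ℕ =>
      δ * ((Real.sqrt 2 - 1) * Real.sqrt ((2:ℝ) ^ k / 2))) atTop atTop :=
    (htd.const_mul_atTop (by linarith)).const_mul_atTop hδ
  have h2 : Tendsto (fun k : ℕ =>
      Real.exp (-(δ * ((Real.sqrt 2 - 1) * Real.sqrt ((2:ℝ) ^ k / 2))))) atTop (nhds 0) :=
    Real.tendsto_exp_atBot.comp (tendsto_neg_atTop_atBot.comp h1)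
  have hfac : Tendsto (fun k : ℕ =>
      C₀ * Real.exp (-(δ * ((Real.sqrt 2 - 1) * Real.sqrt ((2:ℝ) ^ k / 2))))) atTop
      (nhds (C₀ * 0)) := h2.const_mul C₀
  rw [mul_zero] at hfac
  have hev : ∀ᶠ k in atTop, C₀ *
      Real.exp (-(δ * ((Real.sqrt 2 - 1) * Real.sqrt ((2:ℝ) ^ k / 2)))) ≤ 1 / 2 :=
    hfac.eventually_le_const (by norm_num)
  apply summable_of_ratio_norm_eventually_le (r := 1 / 2) (by norm_num)
  filter_upwards [hev] with k hk
  have hpos1 : 0 < rfun C₀ δ k := rfun_pos hC₀pos δ k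
  have hpos2 : 0 < rfun C₀ δ (k + 1) := rfun_pos hC₀pos δ (k + 1)
  rw [Real.norm_eq_abs, Real.norm_eq_abs, abs_of_pos hpos2, abs_of_pos hpos1, rfun_succ]
  exact mul_le_mul_of_nonneg_right hk hpos1.le

/-- Dyadic annuli around `x`. -/
def ann (x : X) (lam : ℝ) : ℕ → Set X
  | 0 => ball x lam
  | (m + 1) => ball x ((2:ℝ) ^ (m + 1) * lam) \ ball x ((2:ℝ) ^ m * lam)

lemma lintegral_bound [BorelSpace X] (μ : Measure X) {C₀ : ℝ} (hC₀ : 1 ≤ C₀)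
    (hpos : ∀ (x : X) (r : ℝ), 0 < r → 0 < μ (ball x r))
    (hfin : ∀ (x : X) (r : ℝ), 0 < r → μ (ball x r) < ⊤)
    (hdouble : ∀ (x : X) (r : ℝ), 0 < r →
      μ (ball x (2 * r)) ≤ ENNReal.ofReal C₀ * μ (ball x r))
    {lam : ℝ} (hlam : 0 < lam) {δ : ℝ} (hδ : 0 < δ) (x : X) :
    ∫⁻ z, (μ (ball z lam))⁻¹ *
        ENNReal.ofReal (Real.exp (-(δ * Real.sqrt (dist x z / lam)))) ∂μ ≤
      ENNReal.ofReal (∑' k, rfun C₀ δ k) := by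
  classical
  have hC₀pos : (0:ℝ) < C₀ := lt_of_lt_of_le one_pos hC₀
  have hcover : (⋃ k, ann x lam k) = Set.univ := by
    apply Set.eq_univ_of_forall
    intro z
    have hex : ∃ k : ℕ, dist z x < (2:ℝ) ^ k * lam := by
      obtain ⟨k, hk⟩ := pow_unbounded_of_one_lt (dist z x / lam) (by norm_num : (1:ℝ) < 2)
      exact ⟨k, by rwa [div_lt_iff₀ hlam] at hk⟩
    apply Set.mem_iUnion.mpr
    have hspec := Nat.find_spec hex
    rcases hnd : Nat.find hex with _ | m
    · rw [hnd] at hspec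
      exact ⟨0, mem_ball.mpr (by simpa using hspec)⟩
    · rw [hnd] at hspec
      refine ⟨m + 1, ⟨mem_ball.mpr hspec, fun hmem => ?_⟩⟩
      exact Nat.find_min hex (by omega) (mem_ball.mp hmem)
  have hannb : ∀ k : ℕ, (∫⁻ z in ann x lam k, (μ (ball z lam))⁻¹ *
      ENNReal.ofReal (Real.exp (-(δ * Real.sqrt (dist x z / lam)))) ∂μ) ≤
      ENNReal.ofReal (rfun C₀ δ k) := by
    intro k
    have hsub : ann x lam k ⊆ ball x ((2:ℝ) ^ k * lam) := by
      cases k with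
      | zero => simp only [ann, pow_zero, one_mul]; exact subset_rfl
      | succ m => exact Set.diff_subset
    have hmeas : MeasurableSet (ann x lam k) := by
      cases k with
      | zero => exact measurableSet_ball
      | succ m => exact measurableSet_ball.diff measurableSet_ball
    have hballpos : 0 < (2:ℝ) ^ k * lam := by positivity
    have hb0 : μ (ball x ((2:ℝ) ^ k * lam)) ≠ 0 := (hpos x _ hballpos).ne'
    have hbt : μ (ball x ((2:ℝ) ^ k * lam)) ≠ ⊤ := (hfin x _ hballpos).ne
    set c : ℝ≥0∞ := (ENNReal.ofReal C₀ ^ (k + 1) * (μ (ball x ((2:ℝ) ^ k * lam)))⁻¹) *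
      ENNReal.ofReal (Real.exp δ * Real.exp (-(δ * Real.sqrt ((2:ℝ) ^ k / 2)))) with hc
    have hpt : ∀ z ∈ ann x lam k, (μ (ball z lam))⁻¹ *
        ENNReal.ofReal (Real.exp (-(δ * Real.sqrt (dist x z / lam)))) ≤ c := by
      intro z hz
      have hzb : dist z x < (2:ℝ) ^ k * lam := mem_ball.mp (hsub hz)
      have hinc : ball x ((2:ℝ) ^ k * lam) ⊆ ball z ((2:ℝ) ^ (k + 1) * lam) := by
        intro w hw
        apply mem_ball.mpr
        have hxz : dist x z < (2:ℝ) ^ k * lam := by rwa [dist_comm]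
        calc dist w z ≤ dist w x + dist x z := dist_triangle w x z
          _ < (2:ℝ) ^ k * lam + (2:ℝ) ^ k * lam := add_lt_add (mem_ball.mp hw) hxz
          _ = (2:ℝ) ^ (k + 1) * lam := by ring
      have hmono : μ (ball x ((2:ℝ) ^ k * lam)) ≤
          ENNReal.ofReal C₀ ^ (k + 1) * μ (ball z lam) :=
        le_trans (measure_mono hinc) (doub μ hdouble z hlam (k + 1))
      have hcne0 : (ENNReal.ofReal C₀ ^ (k + 1) : ℝ≥0∞) ≠ 0 :=
        pow_ne_zero _ (ENNReal.ofReal_pos.mpr hC₀pos).ne'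
      have hcnet : (ENNReal.ofReal C₀ ^ (k + 1) : ℝ≥0∞) ≠ ⊤ :=
        ENNReal.pow_ne_top ENNReal.ofReal_ne_top
      have hinv : (μ (ball z lam))⁻¹ ≤
          ENNReal.ofReal C₀ ^ (k + 1) * (μ (ball x ((2:ℝ) ^ k * lam)))⁻¹ :=
        enn_inv_le hcne0 hcnet hmono
      have hexp : Real.exp (-(δ * Real.sqrt (dist x z / lam))) ≤
          Real.exp δ * Real.exp (-(δ * Real.sqrt ((2:ℝ) ^ k / 2))) := by
        rw [← Real.exp_add]
        apply Real.exp_le_exp.mpr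
        cases k with
        | zero =>
          have h1 : 0 ≤ δ * Real.sqrt (dist x z / lam) := by positivity
          have h2 : Real.sqrt ((2:ℝ) ^ 0 / 2) ≤ 1 := by
            rw [pow_zero]; exact Real.sqrt_le_one.mpr (by norm_num)
          nlinarith
        | succ m =>
          have hlow : (2:ℝ) ^ m * lam ≤ dist x z := by
            have hnot := hz.2
            rw [mem_ball, not_lt] at hnot
            rwa [dist_comm]
          have hq : (2:ℝ) ^ (m + 1) / 2 ≤ dist x z / lam := by
            rw [le_div_iff₀ hlam]
            calc (2:ℝ) ^ (m + 1) / 2 * lam = (2:ℝ) ^ m * lam := by ring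
              _ ≤ dist x z := hlow
          have hs := Real.sqrt_le_sqrt hq
          nlinarith [mul_le_mul_of_nonneg_left hs hδ.le]
      calc (μ (ball z lam))⁻¹ * ENNReal.ofReal (Real.exp (-(δ * Real.sqrt (dist x z / lam))))
          ≤ (ENNReal.ofReal C₀ ^ (k + 1) * (μ (ball x ((2:ℝ) ^ k * lam)))⁻¹) *
            ENNReal.ofReal (Real.exp δ * Real.exp (-(δ * Real.sqrt ((2:ℝ) ^ k / 2)))) :=
            mul_le_mul' hinv (ENNReal.ofReal_le_ofReal hexp)
        _ = c := hc.symm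
    calc (∫⁻ z in ann x lam k, (μ (ball z lam))⁻¹ *
          ENNReal.ofReal (Real.exp (-(δ * Real.sqrt (dist x z / lam)))) ∂μ)
        ≤ ∫⁻ _ in ann x lam k, c ∂μ := setLIntegral_mono' hmeas hpt
      _ = c * μ (ann x lam k) := setLIntegral_const _ _
      _ ≤ c * μ (ball x ((2:ℝ) ^ k * lam)) := mul_le_mul_right (measure_mono hsub) _
      _ = ENNReal.ofReal C₀ ^ (k + 1) *
            ENNReal.ofReal (Real.exp δ * Real.exp (-(δ * Real.sqrt ((2:ℝ) ^ k / 2)))) *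
            ((μ (ball x ((2:ℝ) ^ k * lam)))⁻¹ * μ (ball x ((2:ℝ) ^ k * lam))) := by
          rw [hc]; ring
      _ = ENNReal.ofReal C₀ ^ (k + 1) *
            ENNReal.ofReal (Real.exp δ * Real.exp (-(δ * Real.sqrt ((2:ℝ) ^ k / 2)))) := by
          rw [ENNReal.inv_mul_cancel hb0 hbt, mul_one]
      _ = ENNReal.ofReal (rfun C₀ δ k) := by
          rw [← ENNReal.ofReal_pow hC₀pos.le, ← ENNReal.ofReal_mul (by positivity)]
          unfold rfun
          congr 1
          ring
  calc (∫⁻ z, (μ (ball z lam))⁻¹ *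
        ENNReal.ofReal (Real.exp (-(δ * Real.sqrt (dist x z / lam)))) ∂μ)
      = ∫⁻ z in ⋃ k, ann x lam k, (μ (ball z lam))⁻¹ *
          ENNReal.ofReal (Real.exp (-(δ * Real.sqrt (dist x z / lam)))) ∂μ := by
        rw [hcover, Measure.restrict_univ]
    _ ≤ ∑' k, ∫⁻ z in ann x lam k, (μ (ball z lam))⁻¹ *
          ENNReal.ofReal (Real.exp (-(δ * Real.sqrt (dist x z / lam)))) ∂μ :=
        lintegral_iUnion_le _ _
    _ ≤ ∑' k, ENNReal.ofReal (rfun C₀ δ k) := ENNReal.tsum_le_tsum hannb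
    _ = ENNReal.ofReal (∑' k, rfun C₀ δ k) :=
        (ENNReal.ofReal_tsum_of_nonneg (fun k => (rfun_pos hC₀pos δ k).le)
          (rfun_summable hC₀ hδ)).symm

lemma family_bound [BorelSpace X] (μ : Measure X) {C₀ : ℝ} (hC₀ : 1 ≤ C₀)
    (hpos : ∀ (x : X) (r : ℝ), 0 < r → 0 < μ (ball x r))
    (hfin : ∀ (x : X) (r : ℝ), 0 < r → μ (ball x r) < ⊤)
    (hdouble : ∀ (x : X) (r : ℝ), 0 < r →
      μ (ball x (2 * r)) ≤ ENNReal.ofReal C₀ * μ (ball x r))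
    {lam : ℝ} (hlam : 0 < lam) {δ : ℝ} (hδ : 0 < δ)
    (I : Type) [Countable I] (Q : I → Set X) (xc : I → X)
    (hQm : ∀ i, MeasurableSet (Q i)) (hdisj : Pairwise (Function.onFun Disjoint Q))
    (hQb : ∀ i, Q i ⊆ ball (xc i) lam) (x : X) :
    ∑' i, μ (Q i) * (μ (ball (xc i) lam))⁻¹ *
        ENNReal.ofReal (Real.exp (-(δ * Real.sqrt (dist x (xc i) / lam)))) ≤
      ENNReal.ofReal (C₀ * Real.exp δ * ∑' k, rfun C₀ δ k) := by
  have hC₀pos : (0:ℝ) < C₀ := lt_of_lt_of_le one_pos hC₀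
  set g : X → ℝ≥0∞ := fun z => (μ (ball z lam))⁻¹ *
    ENNReal.ofReal (Real.exp (-(δ * Real.sqrt (dist x z / lam)))) with hg
  set c : ℝ≥0∞ := ENNReal.ofReal C₀ * ENNReal.ofReal (Real.exp δ) with hc
  have hct : c ≠ ⊤ := ENNReal.mul_ne_top ENNReal.ofReal_ne_top ENNReal.ofReal_ne_top
  have hterm : ∀ i, μ (Q i) * (μ (ball (xc i) lam))⁻¹ *
      ENNReal.ofReal (Real.exp (-(δ * Real.sqrt (dist x (xc i) / lam)))) ≤
      ∫⁻ z in Q i, c * g z ∂μ := by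
    intro i
    have heq : μ (Q i) * (μ (ball (xc i) lam))⁻¹ *
        ENNReal.ofReal (Real.exp (-(δ * Real.sqrt (dist x (xc i) / lam)))) =
        ∫⁻ _ in Q i, (μ (ball (xc i) lam))⁻¹ *
          ENNReal.ofReal (Real.exp (-(δ * Real.sqrt (dist x (xc i) / lam)))) ∂μ := by
      rw [setLIntegral_const]; ring
    rw [heq]
    apply setLIntegral_mono' (hQm i)
    intro z hz
    have hzb : dist z (xc i) < lam := mem_ball.mp (hQb i hz)
    have hinc : ball z lam ⊆ ball (xc i) (2 * lam) := by
      intro w hw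
      apply mem_ball.mpr
      calc dist w (xc i) ≤ dist w z + dist z (xc i) := dist_triangle _ _ _
        _ < lam + lam := add_lt_add (mem_ball.mp hw) hzb
        _ = 2 * lam := by ring
    have hmono : μ (ball z lam) ≤ ENNReal.ofReal C₀ * μ (ball (xc i) lam) :=
      le_trans (measure_mono hinc) (hdouble (xc i) lam hlam)
    have hinv : (μ (ball (xc i) lam))⁻¹ ≤ ENNReal.ofReal C₀ * (μ (ball z lam))⁻¹ :=
      enn_inv_le (ENNReal.ofReal_pos.mpr hC₀pos).ne' ENNReal.ofReal_ne_top hmono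
    have hexp : Real.exp (-(δ * Real.sqrt (dist x (xc i) / lam))) ≤
        Real.exp δ * Real.exp (-(δ * Real.sqrt (dist x z / lam))) := by
      rw [← Real.exp_add]
      apply Real.exp_le_exp.mpr
      have hd : dist x z ≤ dist x (xc i) + lam := by
        have htri := dist_triangle x (xc i) z
        have : dist (xc i) z = dist z (xc i) := dist_comm _ _
        linarith
      have h1 : dist x z / lam ≤ dist x (xc i) / lam + 1 := by
        have : dist x z / lam ≤ (dist x (xc i) + lam) / lam := by gcongr
        rw [add_div, div_self hlam.ne'] at this
        exact this
      have h2 : Real.sqrt (dist x z / lam) ≤ Real.sqrt (dist x (xc i) / lam) + 1 :=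
        sqrt_le_sqrt_add_one (by positivity) h1
      nlinarith [mul_le_mul_of_nonneg_left h2 hδ.le]
    calc (μ (ball (xc i) lam))⁻¹ *
          ENNReal.ofReal (Real.exp (-(δ * Real.sqrt (dist x (xc i) / lam))))
        ≤ (ENNReal.ofReal C₀ * (μ (ball z lam))⁻¹) *
            (ENNReal.ofReal (Real.exp δ) *
              ENNReal.ofReal (Real.exp (-(δ * Real.sqrt (dist x z / lam))))) := by
          refine mul_le_mul' hinv ?_
          rw [← ENNReal.ofReal_mul (Real.exp_pos _).le]
          exact ENNReal.ofReal_le_ofReal hexp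
      _ = c * g z := by rw [hc, hg]; ring
  calc ∑' i, μ (Q i) * (μ (ball (xc i) lam))⁻¹ *
        ENNReal.ofReal (Real.exp (-(δ * Real.sqrt (dist x (xc i) / lam))))
      ≤ ∑' i, ∫⁻ z in Q i, c * g z ∂μ := ENNReal.tsum_le_tsum hterm
    _ = ∫⁻ z in ⋃ i, Q i, c * g z ∂μ := (lintegral_iUnion hQm hdisj _).symm
    _ ≤ ∫⁻ z, c * g z ∂μ := setLIntegral_le_lintegral _ _
    _ = c * ∫⁻ z, g z ∂μ := lintegral_const_mul' c g hct
    _ ≤ c * ENNReal.ofReal (∑' k, rfun C₀ δ k) :=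
        mul_le_mul_right (lintegral_bound μ hC₀ hpos hfin hdouble hlam hδ x) _
    _ = ENNReal.ofReal (C₀ * Real.exp δ * ∑' k, rfun C₀ δ k) := by
        rw [hc, ← ENNReal.ofReal_mul hC₀pos.le, ← ENNReal.ofReal_mul (by positivity)]

end Stmt7Aux

/-- Let `κ > 0`, `j ∈ ℤ`, `0 < a ≤ 1`. There is a constant `c_♯`
(depending only on `κ`, `a` and the doubling data) such that for every countable family
of pairwise disjoint Borel sets `Q_i` with points `x_i` satisfying
`B(x_i, a·2^{-j}) ⊆ Q_i ⊆ B(x_i, 2^{-j})`, one has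
`Σ_i μ(Q_i) E_{2^{-j},κ}(x,x_i) E_{2^{-j},κ}(x_i,y) ≤ c_♯ E_{2^{-j},κ}(x,y)` for all `x,y`. -/
theorem stmt_7 {X : Type*} [MetricSpace X] [MeasurableSpace X] [BorelSpace X]
    (μ : Measure X) (C₀ : ℝ) (hC₀ : 1 ≤ C₀)
    (hpos : ∀ (x : X) (r : ℝ), 0 < r → 0 < μ (ball x r))
    (hfin : ∀ (x : X) (r : ℝ), 0 < r → μ (ball x r) < ⊤)
    (hdouble : ∀ (x : X) (r : ℝ), 0 < r →
      μ (ball x (2 * r)) ≤ ENNReal.ofReal C₀ * μ (ball x r))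
    (κ : ℝ) (hκ : 0 < κ) (j : ℤ) (a : ℝ) (ha0 : 0 < a) (ha1 : a ≤ 1) :
    ∃ csharp : ℝ, 0 < csharp ∧
      ∀ (I : Type) [Countable I] (Q : I → Set X) (xc : I → X),
        (∀ i, MeasurableSet (Q i)) →
        Pairwise (Function.onFun Disjoint Q) →
        (∀ i, ball (xc i) (a * (2:ℝ) ^ (-j)) ⊆ Q i ∧ Q i ⊆ ball (xc i) ((2:ℝ) ^ (-j))) →
        ∀ x y : X,
          ∑' i, μ (Q i) * Eker μ ((2:ℝ) ^ (-j)) κ x (xc i) *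
              Eker μ ((2:ℝ) ^ (-j)) κ (xc i) y ≤
            ENNReal.ofReal csharp * Eker μ ((2:ℝ) ^ (-j)) κ x y := by
  classical
  open Stmt7Aux in
  have hC₀pos : (0:ℝ) < C₀ := lt_of_lt_of_le one_pos hC₀
  set lam : ℝ := (2:ℝ) ^ (-j) with hlamdef
  have hlam : (0:ℝ) < lam := by positivity
  have hδ : 0 < κ / 2 := by linarith
  have hsum := Stmt7Aux.rfun_summable hC₀ hδ
  set K : ℝ := C₀ * Real.exp (κ / 2) * ∑' k, Stmt7Aux.rfun C₀ (κ / 2) k with hK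
  have hKpos : 0 < K := by
    have h0 : 0 < ∑' k, Stmt7Aux.rfun C₀ (κ / 2) k :=
      Summable.tsum_pos hsum (fun k => (Stmt7Aux.rfun_pos hC₀pos (κ / 2) k).le) 0
        (Stmt7Aux.rfun_pos hC₀pos (κ / 2) 0)
    positivity
  refine ⟨2 * K, by linarith, ?_⟩
  intro I _ Q xc hQm hdisj hQsub x y
  have hA0 : μ (ball x lam) ≠ 0 := (hpos x lam hlam).ne'
  have hAt : μ (ball x lam) ≠ ⊤ := (hfin x lam hlam).ne
  have hC0 : μ (ball y lam) ≠ 0 := (hpos y lam hlam).ne'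
  have hCt : μ (ball y lam) ≠ ⊤ := (hfin y lam hlam).ne
  set g1 : I → ℝ≥0∞ := fun i => μ (Q i) * (μ (ball (xc i) lam))⁻¹ *
    ENNReal.ofReal (Real.exp (-(κ / 2 * Real.sqrt (dist x (xc i) / lam)))) with hg1
  set g2 : I → ℝ≥0∞ := fun i => μ (Q i) * (μ (ball (xc i) lam))⁻¹ *
    ENNReal.ofReal (Real.exp (-(κ / 2 * Real.sqrt (dist (xc i) y / lam)))) with hg2
  have key : ∀ i, μ (Q i) * Eker μ lam κ x (xc i) * Eker μ lam κ (xc i) y ≤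
      Eker μ lam κ x y * (g1 i + g2 i) := by
    intro i
    have hB0 : μ (ball (xc i) lam) ≠ 0 := (hpos (xc i) lam hlam).ne'
    have hBt : μ (ball (xc i) lam) ≠ ⊤ := (hfin (xc i) lam hlam).ne
    simp only [Eker]
    rw [ENNReal.mul_rpow_of_ne_top hAt hBt, ENNReal.mul_rpow_of_ne_top hBt hCt,
      ENNReal.mul_rpow_of_ne_top hAt hCt]
    have hBB : μ (ball (xc i) lam) ^ (-(1 / 2) : ℝ) * μ (ball (xc i) lam) ^ (-(1 / 2) : ℝ) =
        (μ (ball (xc i) lam))⁻¹ := by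
      rw [← ENNReal.rpow_add _ _ hB0 hBt, show (-(1 / 2) : ℝ) + -(1 / 2) = (-1 : ℝ) by norm_num,
        ENNReal.rpow_neg_one]
    have hE : ENNReal.ofReal (Real.exp (-κ * Real.sqrt (dist x (xc i) / lam))) *
        ENNReal.ofReal (Real.exp (-κ * Real.sqrt (dist (xc i) y / lam))) ≤
        ENNReal.ofReal (Real.exp (-κ * Real.sqrt (dist x y / lam))) *
          (ENNReal.ofReal (Real.exp (-(κ / 2 * Real.sqrt (dist x (xc i) / lam)))) +
            ENNReal.ofReal (Real.exp (-(κ / 2 * Real.sqrt (dist (xc i) y / lam))))) := by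
      rw [← ENNReal.ofReal_mul (Real.exp_pos _).le,
        ← ENNReal.ofReal_add (Real.exp_pos _).le (Real.exp_pos _).le,
        ← ENNReal.ofReal_mul (Real.exp_pos _).le]
      exact ENNReal.ofReal_le_ofReal
        (Stmt7Aux.exp_split hκ hlam dist_nonneg dist_nonneg (dist_triangle x (xc i) y))
    calc μ (Q i) * (μ (ball x lam) ^ (-(1 / 2) : ℝ) * μ (ball (xc i) lam) ^ (-(1 / 2) : ℝ) *
            ENNReal.ofReal (Real.exp (-κ * Real.sqrt (dist x (xc i) / lam)))) *
          (μ (ball (xc i) lam) ^ (-(1 / 2) : ℝ) * μ (ball y lam) ^ (-(1 / 2) : ℝ) *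
            ENNReal.ofReal (Real.exp (-κ * Real.sqrt (dist (xc i) y / lam))))
        = μ (ball x lam) ^ (-(1 / 2) : ℝ) * μ (ball y lam) ^ (-(1 / 2) : ℝ) *
            (μ (ball (xc i) lam) ^ (-(1 / 2) : ℝ) * μ (ball (xc i) lam) ^ (-(1 / 2) : ℝ)) *
            μ (Q i) *
            (ENNReal.ofReal (Real.exp (-κ * Real.sqrt (dist x (xc i) / lam))) *
              ENNReal.ofReal (Real.exp (-κ * Real.sqrt (dist (xc i) y / lam)))) := by ring
      _ = μ (ball x lam) ^ (-(1 / 2) : ℝ) * μ (ball y lam) ^ (-(1 / 2) : ℝ) *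
            (μ (ball (xc i) lam))⁻¹ * μ (Q i) *
            (ENNReal.ofReal (Real.exp (-κ * Real.sqrt (dist x (xc i) / lam))) *
              ENNReal.ofReal (Real.exp (-κ * Real.sqrt (dist (xc i) y / lam)))) := by
          rw [hBB]
      _ ≤ μ (ball x lam) ^ (-(1 / 2) : ℝ) * μ (ball y lam) ^ (-(1 / 2) : ℝ) *
            (μ (ball (xc i) lam))⁻¹ * μ (Q i) *
            (ENNReal.ofReal (Real.exp (-κ * Real.sqrt (dist x y / lam))) *
              (ENNReal.ofReal (Real.exp (-(κ / 2 * Real.sqrt (dist x (xc i) / lam)))) +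
                ENNReal.ofReal (Real.exp (-(κ / 2 * Real.sqrt (dist (xc i) y / lam)))))) :=
          mul_le_mul_right hE _
      _ = μ (ball x lam) ^ (-(1 / 2) : ℝ) * μ (ball y lam) ^ (-(1 / 2) : ℝ) *
            ENNReal.ofReal (Real.exp (-κ * Real.sqrt (dist x y / lam))) *
            (g1 i + g2 i) := by
          rw [hg1, hg2]; ring
  calc ∑' i, μ (Q i) * Eker μ lam κ x (xc i) * Eker μ lam κ (xc i) y
      ≤ ∑' i, Eker μ lam κ x y * (g1 i + g2 i) := ENNReal.tsum_le_tsum key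
    _ = Eker μ lam κ x y * ∑' i, (g1 i + g2 i) := ENNReal.tsum_mul_left
    _ = Eker μ lam κ x y * (∑' i, g1 i + ∑' i, g2 i) := by rw [ENNReal.tsum_add]
    _ ≤ Eker μ lam κ x y * (ENNReal.ofReal K + ENNReal.ofReal K) := by
        gcongr
        · exact Stmt7Aux.family_bound μ hC₀ hpos hfin hdouble hlam hδ I Q xc hQm hdisj
            (fun i => (hQsub i).2) x
        · have heq : ∑' i, g2 i = ∑' i, μ (Q i) * (μ (ball (xc i) lam))⁻¹ *
              ENNReal.ofReal (Real.exp (-(κ / 2 * Real.sqrt (dist y (xc i) / lam)))) :=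
            tsum_congr fun i => by simp only [hg2, dist_comm (xc i) y]
          rw [heq]
          exact Stmt7Aux.family_bound μ hC₀ hpos hfin hdouble hlam hδ I Q xc hQm hdisj
            (fun i => (hQsub i).2) y
    _ = ENNReal.ofReal (2 * K) * Eker μ lam κ x y := by
        rw [show (2:ℝ) * K = K + K by ring, ENNReal.ofReal_add hKpos.le hKpos.le, mul_comm]
end

section
/- Let γ ≥ 1 be an integer and define m(ξ,η) = 1/(ξ^γ + η^γ) for ξ, η > 0. Then for all nonnegative integers α, β there exists a constant C_{α,β} such that |∂_ξ^α ∂_η^β m(ξ,η)| ≤ C_{α,β} (ξ + η)^{−γ − α − β} for all ξ, η > 0. -/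
noncomputable def termF (γ k : ℕ) (p : ℝ × ℕ × ℕ) (ξ η : ℝ) : ℝ :=
  p.1 * ξ ^ p.2.1 * η ^ p.2.2 / (ξ ^ γ + η ^ γ) ^ k

noncomputable def SB (γ k : ℕ) (L : List (ℝ × ℕ × ℕ)) (ξ η : ℝ) : ℝ :=
  (L.map (fun p => termF γ k p ξ η)).sum

def stepP (γ k : ℕ) (p : ℝ × ℕ × ℕ) : List (ℝ × ℕ × ℕ) :=
  (if p.2.2 = 0 then [] else
    [((p.2.2 : ℝ) * p.1, p.2.1 + γ, p.2.2 - 1), ((p.2.2 : ℝ) * p.1, p.2.1, p.2.2 + γ - 1)])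
  ++ [(-((γ : ℝ) * k) * p.1, p.2.1, p.2.2 + γ - 1)]

def stepL (γ k : ℕ) (L : List (ℝ × ℕ × ℕ)) : List (ℝ × ℕ × ℕ) := L.flatMap (stepP γ k)

lemma SB_nil (γ k : ℕ) (ξ η : ℝ) : SB γ k [] ξ η = 0 := rfl

lemma SB_cons (γ k : ℕ) (p : ℝ × ℕ × ℕ) (L : List (ℝ × ℕ × ℕ)) (ξ η : ℝ) :
    SB γ k (p :: L) ξ η = termF γ k p ξ η + SB γ k L ξ η := rfl

lemma SB_append (γ k : ℕ) (L L' : List (ℝ × ℕ × ℕ)) (ξ η : ℝ) :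
    SB γ k (L ++ L') ξ η = SB γ k L ξ η + SB γ k L' ξ η := by
  simp [SB]

lemma hasDerivAt_term (γ k : ℕ) (hγ : 1 ≤ γ) (hk : 1 ≤ k) (p : ℝ × ℕ × ℕ) (ξ η : ℝ)
    (hξ : 0 < ξ) (hη : 0 < η) :
    HasDerivAt (fun η' => termF γ k p ξ η') (SB γ (k + 1) (stepP γ k p) ξ η) η := by
  obtain ⟨c, a, b⟩ := p
  obtain ⟨γ', rfl⟩ : ∃ γ', γ = γ' + 1 := ⟨γ - 1, (Nat.succ_pred_eq_of_pos hγ).symm⟩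
  obtain ⟨k', rfl⟩ : ∃ k', k = k' + 1 := ⟨k - 1, (Nat.succ_pred_eq_of_pos hk).symm⟩
  have hs : 0 < ξ ^ (γ' + 1) + η ^ (γ' + 1) := by positivity
  have hs' : (ξ ^ (γ' + 1) + η ^ (γ' + 1)) ≠ 0 := ne_of_gt hs
  have hnum : HasDerivAt (fun η' : ℝ => c * ξ ^ a * η' ^ b)
      (c * ξ ^ a * ((b : ℝ) * η ^ (b - 1))) η := (hasDerivAt_pow b η).const_mul _
  have hden : HasDerivAt (fun η' : ℝ => (ξ ^ (γ' + 1) + η' ^ (γ' + 1)) ^ (k' + 1))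
      ((↑(k' + 1) * (ξ ^ (γ' + 1) + η ^ (γ' + 1)) ^ k') * (↑(γ' + 1) * η ^ γ')) η := by
    have h1 : HasDerivAt (fun η' : ℝ => ξ ^ (γ' + 1) + η' ^ (γ' + 1))
        (↑(γ' + 1) * η ^ γ') η := by
      simpa using ((hasDerivAt_pow (γ' + 1) η).const_add (ξ ^ (γ' + 1)))
    have h2 : HasDerivAt (fun η' : ℝ => (ξ ^ (γ' + 1) + η' ^ (γ' + 1)) ^ (k' + 1)) _ η :=
      HasDerivAt.pow h1 (k' + 1)
    simpa using h2
  have h : HasDerivAt (fun η' => c * ξ ^ a * η' ^ b / (ξ ^ (γ' + 1) + η' ^ (γ' + 1)) ^ (k' + 1)) _ η :=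
    hnum.div hden (pow_ne_zero _ hs')
  convert h using 1
  · rfl
  rcases Nat.eq_zero_or_pos b with hb | hb
  · subst hb
    simp only [stepP, SB, termF, if_pos rfl, List.nil_append, List.map_cons, List.map_nil,
      List.sum_cons, List.sum_nil, ↓reduceIte, zero_add, Nat.add_one_sub_one]
    field_simp
    ring
  · obtain ⟨b', rfl⟩ : ∃ b', b = b' + 1 := ⟨b - 1, (Nat.succ_pred_eq_of_pos hb).symm⟩
    simp only [stepP, SB, termF, if_neg (Nat.succ_ne_zero b'), List.cons_append,
      List.nil_append, List.map_cons, List.map_nil, List.sum_cons, List.sum_nil,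
      Nat.add_sub_cancel, ← Nat.add_assoc]
    field_simp
    ring

lemma hasDerivAt_SB (γ k : ℕ) (hγ : 1 ≤ γ) (hk : 1 ≤ k) (L : List (ℝ × ℕ × ℕ)) (ξ η : ℝ)
    (hξ : 0 < ξ) (hη : 0 < η) :
    HasDerivAt (fun η' => SB γ k L ξ η') (SB γ (k + 1) (stepL γ k L) ξ η) η := by
  induction L with
  | nil => simpa [SB, stepL] using hasDerivAt_const η (0 : ℝ)
  | cons p L ih =>
      have : stepL γ k (p :: L) = stepP γ k p ++ stepL γ k L := by
        simp [stepL]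
      rw [this]
      have : HasDerivAt (fun η' => termF γ k p ξ η' + SB γ k L ξ η') _ η :=
        (hasDerivAt_term γ k hγ hk p ξ η hξ hη).add ih
      simp only [SB_append]
      convert this using 2
      rfl

noncomputable def iterL (γ k : ℕ) (L : List (ℝ × ℕ × ℕ)) : ℕ → List (ℝ × ℕ × ℕ)
  | 0 => L
  | n + 1 => stepL γ (k + n) (iterL γ k L n)

lemma iteratedDeriv_SB (γ k : ℕ) (hγ : 1 ≤ γ) (hk : 1 ≤ k) (L : List (ℝ × ℕ × ℕ)) (n : ℕ)
    (ξ : ℝ) (hξ : 0 < ξ) :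
    ∀ η : ℝ, 0 < η →
      iteratedDeriv n (fun η' => SB γ k L ξ η') η = SB γ (k + n) (iterL γ k L n) ξ η := by
  induction n with
  | zero => intro η hη; simp [iterL]
  | succ n ih =>
      intro η hη
      rw [iteratedDeriv_succ]
      have hev : iteratedDeriv n (fun η' => SB γ k L ξ η')
          =ᶠ[nhds η] fun η' => SB γ (k + n) (iterL γ k L n) ξ η' := by
        filter_upwards [isOpen_Ioi.mem_nhds (Set.mem_Ioi.mpr hη)] with y hy
        exact ih y hy
      rw [hev.deriv_eq]
      have := (hasDerivAt_SB γ (k + n) hγ (le_trans hk (Nat.le_add_right _ _))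
        (iterL γ k L n) ξ η hξ hη).deriv
      rw [this]
      rfl

def GoodL (γ k : ℕ) (L : List (ℝ × ℕ × ℕ)) : Prop :=
  ∀ p ∈ L, p.2.1 + p.2.2 = (k - 1) * (γ - 1)

lemma goodL_step (γ k : ℕ) (hγ : 1 ≤ γ) (hk : 1 ≤ k) (L : List (ℝ × ℕ × ℕ))
    (h : GoodL γ k L) : GoodL γ (k + 1) (stepL γ k L) := by
  intro q hq
  simp only [stepL, List.mem_flatMap] at hq
  obtain ⟨p, hp, hq⟩ := hq
  have hab := h p hp
  obtain ⟨γ', rfl⟩ : ∃ γ', γ = γ' + 1 := ⟨γ - 1, (Nat.succ_pred_eq_of_pos hγ).symm⟩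
  obtain ⟨k', rfl⟩ : ∃ k', k = k' + 1 := ⟨k - 1, (Nat.succ_pred_eq_of_pos hk).symm⟩
  simp only [Nat.add_sub_cancel] at hab ⊢
  rcases Nat.eq_zero_or_pos p.2.2 with hb | hb
  · simp only [stepP, hb, eq_self_iff_true, if_true, List.nil_append, List.mem_append,
      List.mem_cons, List.not_mem_nil, or_false, false_or] at hq
    subst hq
    simp only [hb, Nat.add_zero] at hab
    simp only [Nat.succ_mul, Nat.add_zero]
    generalize hM : k' * γ' = M at hab ⊢
    omega
  · obtain ⟨b', hb'⟩ : ∃ b', p.2.2 = b' + 1 := ⟨p.2.2 - 1, (Nat.succ_pred_eq_of_pos hb).symm⟩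
    rw [hb'] at hab
    simp only [stepP, hb', Nat.succ_ne_zero, if_false, List.cons_append, List.nil_append,
      List.mem_cons, List.not_mem_nil, or_false] at hq
    rcases hq with rfl | rfl | rfl <;>
      · simp only [Nat.succ_mul]
        generalize hM : k' * γ' = M at hab ⊢
        omega

lemma goodL_iterL (γ k : ℕ) (hγ : 1 ≤ γ) (hk : 1 ≤ k) (L : List (ℝ × ℕ × ℕ))
    (h : GoodL γ k L) (n : ℕ) : GoodL γ (k + n) (iterL γ k L n) := by
  induction n with
  | zero => exact h
  | succ n ih =>
      have := goodL_step γ (k + n) hγ (le_trans hk (Nat.le_add_right _ _)) _ ih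
      simpa [iterL, Nat.add_assoc] using this

lemma term_bound (γ k a b : ℕ) (hγ : 1 ≤ γ) (hk : 1 ≤ k) (hab : a + b = (k - 1) * (γ - 1))
    (c ξ η : ℝ) (hξ : 0 < ξ) (hη : 0 < η) :
    |termF γ k (c, a, b) ξ η| ≤ |c| * 2 ^ (γ * k) * (ξ + η) ^ (-((γ : ℝ) + k - 1)) := by
  have hx : (0 : ℝ) < ξ + η := by linarith
  have hs : ((ξ + η) / 2) ^ γ ≤ ξ ^ γ + η ^ γ := by
    rcases le_total ξ η with h | h
    · calc ((ξ + η) / 2) ^ γ ≤ η ^ γ := by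
            apply pow_le_pow_left₀ (by positivity) (by linarith)
          _ ≤ ξ ^ γ + η ^ γ := le_add_of_nonneg_left (by positivity)
    · calc ((ξ + η) / 2) ^ γ ≤ ξ ^ γ := by
            apply pow_le_pow_left₀ (by positivity) (by linarith)
          _ ≤ ξ ^ γ + η ^ γ := le_add_of_nonneg_right (by positivity)
  have hs0 : (0 : ℝ) < ξ ^ γ + η ^ γ := by positivity
  have h3 : ((ξ + η) / 2) ^ (γ * k) ≤ (ξ ^ γ + η ^ γ) ^ k := by
    rw [pow_mul]
    exact pow_le_pow_left₀ (by positivity) hs k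
  have h2 : ξ ^ a * η ^ b ≤ (ξ + η) ^ (a + b) := by
    rw [pow_add]
    exact mul_le_mul (pow_le_pow_left₀ hξ.le (by linarith) a)
      (pow_le_pow_left₀ hη.le (by linarith) b) (by positivity) (by positivity)
  have key : (ξ + η) ^ (a + b) / (ξ + η) ^ (γ * k) = (ξ + η) ^ (-((γ : ℝ) + k - 1)) := by
    rw [← Real.rpow_natCast (ξ + η) (a + b), ← Real.rpow_natCast (ξ + η) (γ * k),
      ← Real.rpow_sub hx]
    congr 1
    obtain ⟨γ', rfl⟩ : ∃ γ', γ = γ' + 1 := ⟨γ - 1, (Nat.succ_pred_eq_of_pos hγ).symm⟩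
    obtain ⟨k', rfl⟩ : ∃ k', k = k' + 1 := ⟨k - 1, (Nat.succ_pred_eq_of_pos hk).symm⟩
    simp only [Nat.add_sub_cancel] at hab
    rw [hab]
    push_cast
    ring
  have habs : |termF γ k (c, a, b) ξ η| = |c| * (ξ ^ a * η ^ b) / (ξ ^ γ + η ^ γ) ^ k := by
    unfold termF
    rw [abs_div, abs_mul, abs_mul, abs_of_pos (pow_pos hξ a), abs_of_pos (pow_pos hη b),
      abs_of_pos (pow_pos hs0 k)]
    ring
  rw [habs]
  calc |c| * (ξ ^ a * η ^ b) / (ξ ^ γ + η ^ γ) ^ k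
      ≤ |c| * (ξ + η) ^ (a + b) / (((ξ + η) / 2) ^ (γ * k)) := by
        apply div_le_div₀ (by positivity)
          (mul_le_mul_of_nonneg_left h2 (abs_nonneg c)) (by positivity) h3
    _ = |c| * 2 ^ (γ * k) * ((ξ + η) ^ (a + b) / (ξ + η) ^ (γ * k)) := by
        rw [div_pow]
        field_simp
    _ = |c| * 2 ^ (γ * k) * (ξ + η) ^ (-((γ : ℝ) + k - 1)) := by rw [key]

lemma SB_bound (γ k : ℕ) (hγ : 1 ≤ γ) (hk : 1 ≤ k) (L : List (ℝ × ℕ × ℕ))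
    (hG : GoodL γ k L) (ξ η : ℝ) (hξ : 0 < ξ) (hη : 0 < η) :
    |SB γ k L ξ η| ≤ (L.map fun p => |p.1|).sum * 2 ^ (γ * k) * (ξ + η) ^ (-((γ : ℝ) + k - 1)) := by
  induction L with
  | nil => simp [SB]
  | cons p L ih =>
      have hp := term_bound γ k p.2.1 p.2.2 hγ hk (hG p (List.mem_cons_self)) p.1 ξ η hξ hη
      have ih' := ih (fun q hq => hG q (List.mem_cons_of_mem p hq))
      rw [SB_cons]
      calc |termF γ k p ξ η + SB γ k L ξ η| ≤ |termF γ k p ξ η| + |SB γ k L ξ η| := abs_add_le _ _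
        _ ≤ |p.1| * 2 ^ (γ * k) * (ξ + η) ^ (-((γ : ℝ) + k - 1)) +
            (L.map fun p => |p.1|).sum * 2 ^ (γ * k) * (ξ + η) ^ (-((γ : ℝ) + k - 1)) := by
            apply add_le_add _ ih'
            convert hp
        _ = ((p :: L).map fun p => |p.1|).sum * 2 ^ (γ * k) * (ξ + η) ^ (-((γ : ℝ) + k - 1)) := by
            rw [List.map_cons, List.sum_cons]
            ring

lemma iteratedDeriv_congr_nhds {f g : ℝ → ℝ} {x : ℝ} (h : f =ᶠ[nhds x] g) (n : ℕ) :
    iteratedDeriv n f x = iteratedDeriv n g x := by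
  have H : ∀ n, iteratedDeriv n f =ᶠ[nhds x] iteratedDeriv n g := by
    intro n
    induction n with
    | zero => simpa [iteratedDeriv_zero] using h
    | succ n ih => simpa [iteratedDeriv_succ] using ih.deriv
  exact (H n).self_of_nhds

lemma SB_swap (γ k : ℕ) (L : List (ℝ × ℕ × ℕ)) (ξ η : ℝ) :
    SB γ k (L.map fun p => (p.1, p.2.2, p.2.1)) η ξ = SB γ k L ξ η := by
  unfold SB
  rw [List.map_map]
  congr 1
  apply List.map_congr_left
  intro p _
  unfold termF
  simp only [Function.comp_apply]
  rw [add_comm (η ^ γ)]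
  ring

/-- For `γ ≥ 1` an integer and `m(ξ,η) = 1/(ξ^γ + η^γ)` on `(0,∞)²`,
for all nonnegative integers `α, β` there is a constant `C_{α,β}` with
`|∂_ξ^α ∂_η^β m(ξ,η)| ≤ C_{α,β} (ξ+η)^{-γ-α-β}` for all `ξ, η > 0`. -/
theorem stmt_13 (γ : ℕ) (hγ : 1 ≤ γ) (α β : ℕ) :
    ∃ C : ℝ, 0 < C ∧ ∀ ξ η : ℝ, 0 < ξ → 0 < η →
      |iteratedDeriv α
          (fun ξ' : ℝ => iteratedDeriv β (fun η' : ℝ => 1 / (ξ' ^ γ + η' ^ γ)) η) ξ| ≤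
        C * (ξ + η) ^ (-((γ : ℝ) + α + β)) := by
  classical
  set L0 : List (ℝ × ℕ × ℕ) := [(1, 0, 0)] with hL0
  set Lβ : List (ℝ × ℕ × ℕ) := iterL γ 1 L0 β with hLβ
  set Ls : List (ℝ × ℕ × ℕ) := Lβ.map (fun p => (p.1, p.2.2, p.2.1)) with hLs
  set Lfin : List (ℝ × ℕ × ℕ) := iterL γ (1 + β) Ls α with hLfin
  have hG0 : GoodL γ 1 L0 := by
    intro p hp
    simp only [hL0, List.mem_singleton] at hp
    subst hp
    simp
  have hGβ : GoodL γ (1 + β) Lβ := goodL_iterL γ 1 hγ le_rfl L0 hG0 β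
  have hGs : GoodL γ (1 + β) Ls := by
    intro q hq
    simp only [hLs, List.mem_map] at hq
    obtain ⟨p, hp, rfl⟩ := hq
    have := hGβ p hp
    simpa [Nat.add_comm] using this
  have hGfin : GoodL γ (1 + β + α) Lfin :=
    goodL_iterL γ (1 + β) hγ (Nat.le_add_right 1 β) Ls hGs α
  have hsum0 : (0:ℝ) ≤ (Lfin.map fun p => |p.1|).sum := by
    apply List.sum_nonneg
    intro x hx
    simp only [List.mem_map] at hx
    obtain ⟨p, -, rfl⟩ := hx
    exact abs_nonneg _
  refine ⟨(Lfin.map fun p => |p.1|).sum * 2 ^ (γ * (1 + β + α)) + 1, by positivity, ?_⟩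
  intro ξ η hξ hη
  -- inner representation
  have hinner : ∀ ξ' : ℝ, 0 < ξ' →
      iteratedDeriv β (fun η' : ℝ => 1 / (ξ' ^ γ + η' ^ γ)) η = SB γ (1 + β) Lβ ξ' η := by
    intro ξ' hξ'
    have hbase : (fun η' : ℝ => 1 / (ξ' ^ γ + η' ^ γ)) = fun η' => SB γ 1 L0 ξ' η' := by
      funext η'
      simp [SB, termF, hL0]
    rw [hbase]
    exact iteratedDeriv_SB γ 1 hγ le_rfl L0 β ξ' hξ' η hη
  -- outer function equals swapped SB near ξ
  have hev : (fun ξ' : ℝ => iteratedDeriv β (fun η' : ℝ => 1 / (ξ' ^ γ + η' ^ γ)) η)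
      =ᶠ[nhds ξ] fun ξ' => SB γ (1 + β) Ls η ξ' := by
    filter_upwards [isOpen_Ioi.mem_nhds (Set.mem_Ioi.mpr hξ)] with y hy
    rw [hinner y hy, ← SB_swap γ (1 + β) Lβ y η]
  rw [iteratedDeriv_congr_nhds hev α]
  have houter := iteratedDeriv_SB γ (1 + β) hγ (Nat.le_add_right 1 β) Ls α η hη ξ hξ
  rw [houter]
  have hbd := SB_bound γ (1 + β + α) hγ (by omega) Lfin hGfin η ξ hη hξ
  have hexp : (-((γ : ℝ) + ((1 + β + α : ℕ) : ℝ) - 1)) = -((γ : ℝ) + α + β) := by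
    push_cast
    ring
  rw [hexp, add_comm η ξ] at hbd
  calc |SB γ (1 + β + α) Lfin η ξ|
      ≤ (Lfin.map fun p => |p.1|).sum * 2 ^ (γ * (1 + β + α)) * (ξ + η) ^ (-((γ : ℝ) + α + β)) :=
        hbd
    _ ≤ ((Lfin.map fun p => |p.1|).sum * 2 ^ (γ * (1 + β + α)) + 1) *
        (ξ + η) ^ (-((γ : ℝ) + α + β)) := by
        apply mul_le_mul_of_nonneg_right _ (Real.rpow_nonneg (by linarith) _)
        nlinarith [pow_pos (by norm_num : (0:ℝ) < 2) (γ * (1 + β + α)), hsum0]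
end
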